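/- arXiv:2004.05924 — 4 statements merged into one kernel-verified Lean document; each statement's English description precedes it below -/
import Mathlib

section
/- Let k > 1 be a real number and let C₃^k = {x^k : x ∈ C₃} be the image of the middle-third Cantor set under the map x ↦ x^k (real power). Then the normalized thickness of C₃^k equals S(C₃^k) = 1/2^k, equivalently its thickness equals C(C₃^k) = 1/(2^k − 1). -/
/-- The set of points of `[0,1]` admitting a base-`b` expansion
`x = Σ_{i=1}^∞ d_i b^{-i}` with every digit `d_i` in `B`. -/
noncomputable def digitSet (b : ℕ) (B : Set ℕ) : Set ℝ :=
  {x : ℝ | ∃ d : ℕ → ℕ, (∀ i, d i ∈ B) ∧ x = ∑' i : ℕ, (d i : ℝ) / (b : ℝ) ^ (i + 1)}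

/-- `(a, b)` is a bounded gap of `A`: a bounded connected component of `ℝ \ A`
(for compact `A`, these are exactly the intervals `(a,b)` with endpoints in `A`
and interior disjoint from `A`). -/
def IsGap (A : Set ℝ) (a b : ℝ) : Prop :=
  a < b ∧ a ∈ A ∧ b ∈ A ∧ Set.Ioo a b ∩ A = ∅

/-- The right endpoint of the closest component of `ℝ \ A` of length `≥ b - a`
lying to the left of the gap `(a, b)`; the unbounded component `(-∞, sInf A)` qualifies. -/
noncomputable def leftPt (A : Set ℝ) (a b : ℝ) : ℝ :=
  sSup {d : ℝ | d ≤ a ∧ (d = sInf A ∨ ∃ c, b - a ≤ d - c ∧ IsGap A c d)}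

/-- The left endpoint of the closest component of `ℝ \ A` of length `≥ b - a`
lying to the right of the gap `(a, b)`; the unbounded component `(sSup A, ∞)` qualifies. -/
noncomputable def rightPt (A : Set ℝ) (a b : ℝ) : ℝ :=
  sInf {e : ℝ | b ≤ e ∧ (e = sSup A ∨ ∃ f, b - a ≤ f - e ∧ IsGap A e f)}

/-- The thickness `C(A) = inf_I min(b_L, b_R) / |I|` over all bounded gaps `I` of `A`. -/
noncomputable def thickness (A : Set ℝ) : ℝ :=
  sInf {r : ℝ | ∃ a b : ℝ, IsGap A a b ∧
    r = min (a - leftPt A a b) (rightPt A a b - b) / (b - a)}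

/-- The normalized thickness `S(A) = C(A) / (C(A) + 1)`. -/
noncomputable def normThickness (A : Set ℝ) : ℝ :=
  thickness A / (thickness A + 1)

/-- The length of the largest bounded gap of `A`. -/
noncomputable def largestGap (A : Set ℝ) : ℝ :=
  sSup {g : ℝ | ∃ a b : ℝ, IsGap A a b ∧ g = b - a}

/-- A Cantor set: a nonempty compact, totally disconnected subset of `ℝ`
without isolated points. -/
def IsCantorSet (A : Set ℝ) : Prop :=
  A.Nonempty ∧ IsCompact A ∧ IsTotallyDisconnected A ∧ ∀ x ∈ A, AccPt x (Filter.principal A)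


open Set

namespace CtrAux

noncomputable def F (d : ℕ → ℕ) : ℝ := ∑' i : ℕ, (d i : ℝ) / (3:ℝ) ^ (i + 1)

lemma summable_term (d : ℕ → ℕ) (hd : ∀ i, d i ≤ 2) :
    Summable (fun i : ℕ => (d i : ℝ) / (3:ℝ) ^ (i+1)) := by
  refine Summable.of_nonneg_of_le (fun i => by positivity) (fun i => ?_)
    ((summable_geometric_of_lt_one (by norm_num) (by norm_num : (1/3:ℝ) < 1)).mul_left (2/3))
  have h1 : ((1:ℝ)/3)^i = 1/3^i := by rw [div_pow, one_pow]
  have h2 : ((d i : ℝ)) ≤ 2 := by exact_mod_cast hd i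
  rw [h1, pow_succ, div_le_iff₀ (by positivity)]
  calc (d i : ℝ) ≤ 2 := h2
    _ = 2/3 * (1/3^i) * (3^i * 3) := by field_simp
    _ ≤ _ := le_refl _

lemma tsum_two : ∑' i : ℕ, (2:ℝ) / 3 ^ (i+1) = 1 := by
  have h : ∀ i : ℕ, (2:ℝ)/3^(i+1) = (2/3) * (1/3)^i := fun i => by
    rw [div_pow, one_pow, pow_succ]; ring
  rw [tsum_congr h, tsum_mul_left, tsum_geometric_of_lt_one (by norm_num) (by norm_num)]
  norm_num

lemma mem_digit {x : ℝ} : x ∈ digitSet 3 {0,2} ↔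
    ∃ d : ℕ → ℕ, (∀ i, d i = 0 ∨ d i = 2) ∧ x = F d := by
  unfold digitSet F
  simp only [mem_setOf_eq, Nat.cast_ofNat, Set.mem_insert_iff, Set.mem_singleton_iff]

lemma F_nonneg (d : ℕ → ℕ) : 0 ≤ F d := tsum_nonneg (fun i => by positivity)

lemma F_le_one (d : ℕ → ℕ) (hd : ∀ i, d i ≤ 2) : F d ≤ 1 := by
  have h := Summable.tsum_le_tsum (f := fun i : ℕ => (d i : ℝ)/3^(i+1)) (g := fun i : ℕ => (2:ℝ)/3^(i+1))
    (fun i => by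
      have h2 : ((d i : ℝ)) ≤ 2 := by exact_mod_cast hd i
      exact (div_le_div_iff_of_pos_right (by positivity)).2 h2)
    (summable_term d hd) (summable_term (fun _ => 2) (fun _ => le_refl 2))
  rw [F]
  calc ∑' i : ℕ, (d i : ℝ)/3^(i+1) ≤ ∑' i : ℕ, (2:ℝ)/3^(i+1) := h
    _ = 1 := tsum_two

lemma F_split (d : ℕ → ℕ) (hd : ∀ i, d i ≤ 2) :
    F d = (d 0 : ℝ)/3 + (1/3) * F (fun i => d (i+1)) := by
  have hs := summable_term d hd
  rw [F, Summable.tsum_eq_zero_add hs]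
  congr 1
  · norm_num
  · rw [F, ← tsum_mul_left]
    apply tsum_congr; intro i
    rw [pow_succ]
    ring

lemma digit_bound {d : ℕ → ℕ} (hd : ∀ i, d i = 0 ∨ d i = 2) : ∀ i, d i ≤ 2 :=
  fun i => by rcases hd i with h | h <;> omega

lemma mem_subset_Icc {x : ℝ} (hx : x ∈ digitSet 3 {0,2}) : x ∈ Icc (0:ℝ) 1 := by
  rw [mem_digit] at hx
  obtain ⟨d, hd, rfl⟩ := hx
  exact ⟨F_nonneg d, F_le_one d (digit_bound hd)⟩

lemma prepend {b0 : ℕ} (h0 : b0 = 0 ∨ b0 = 2) {y : ℝ} (hy : y ∈ digitSet 3 {0,2}) :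
    ((b0:ℝ) + y)/3 ∈ digitSet 3 {0,2} := by
  rw [mem_digit] at hy ⊢
  obtain ⟨e, he, rfl⟩ := hy
  have hb : ∀ i, (fun i => Nat.casesOn i b0 e : ℕ → ℕ) i ≤ 2 := fun i => by
    cases i with
    | zero => rcases h0 with h|h <;> simp [h]
    | succ n => exact digit_bound he n
  refine ⟨fun i => Nat.casesOn i b0 e, fun i => ?_, ?_⟩
  · cases i with
    | zero => exact h0
    | succ n => exact he n
  rw [F_split (fun i => Nat.casesOn i b0 e) hb]
  have h1 : (fun i : ℕ => (fun i => Nat.casesOn i b0 e : ℕ → ℕ) (i+1)) = e := rfl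
  rw [h1]
  show ((b0:ℝ) + F e)/3 = (b0:ℝ)/3 + 1/3 * F e
  ring

lemma mem_iff {x : ℝ} : x ∈ digitSet 3 {0,2} ↔
    (∃ y ∈ digitSet 3 {0,2}, x = y/3) ∨ (∃ y ∈ digitSet 3 {0,2}, x = (2+y)/3) := by
  constructor
  · intro hx
    rw [mem_digit] at hx
    obtain ⟨d, hd, rfl⟩ := hx
    have hsplit := F_split d (digit_bound hd)
    have hy : F (fun i => d (i+1)) ∈ digitSet 3 {0,2} :=
      mem_digit.2 ⟨_, fun i => hd (i+1), rfl⟩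
    rcases hd 0 with h0 | h0
    · left; exact ⟨_, hy, by rw [hsplit, h0]; push_cast; ring⟩
    · right; exact ⟨_, hy, by rw [hsplit, h0]; push_cast; ring⟩
  · rintro (⟨y, hy, rfl⟩ | ⟨y, hy, rfl⟩)
    · have := prepend (Or.inl rfl) hy
      simpa using this
    · have := prepend (Or.inr rfl) hy
      simpa using this


lemma zero_mem : (0:ℝ) ∈ digitSet 3 {0,2} := by
  rw [mem_digit]
  refine ⟨fun _ => 0, fun i => Or.inl rfl, ?_⟩
  rw [F]
  simp

lemma one_mem : (1:ℝ) ∈ digitSet 3 {0,2} := by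
  rw [mem_digit]
  exact ⟨fun _ => 2, fun i => Or.inr rfl, by rw [F]; push_cast; exact tsum_two.symm⟩

lemma third_mem : (1/3:ℝ) ∈ digitSet 3 {0,2} := by
  have := mem_iff.2 (Or.inl ⟨1, one_mem, rfl⟩)
  exact this

lemma twothird_mem : (2/3:ℝ) ∈ digitSet 3 {0,2} := by
  have h : (2:ℝ)/3 = (2+(0:ℝ))/3 := by norm_num
  exact mem_iff.2 (Or.inr ⟨0, zero_mem, h⟩)

lemma left_or_right {x : ℝ} (hx : x ∈ digitSet 3 {0,2}) : x ≤ 1/3 ∨ 2/3 ≤ x := by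
  rcases mem_iff.1 hx with ⟨y, hy, rfl⟩ | ⟨y, hy, rfl⟩
  · left
    have := (mem_subset_Icc hy).2
    linarith
  · right
    have := (mem_subset_Icc hy).1
    linarith

lemma gap_scale_left {a b : ℝ} (h : IsGap (digitSet 3 {0,2}) a b) (hb : b ≤ 1/3) :
    IsGap (digitSet 3 {0,2}) (3*a) (3*b) := by
  obtain ⟨hab, ha, hbm, hempty⟩ := h
  have hmem : ∀ x ∈ digitSet 3 {0,2}, x ≤ 1/3 → 3*x ∈ digitSet 3 {0,2} := by
    intro x hx hx13
    rcases mem_iff.1 hx with ⟨y, hy, rfl⟩ | ⟨y, hy, rfl⟩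
    · have : 3*(y/3) = y := by ring
      rw [this]; exact hy
    · have := (mem_subset_Icc hy).1
      linarith
  refine ⟨by linarith, hmem a ha (by linarith), hmem b hbm hb, ?_⟩
  ext z
  simp only [Set.mem_inter_iff, Set.mem_Ioo, Set.mem_empty_iff_false, iff_false, not_and]
  rintro ⟨hz1, hz2⟩ hz
  have hz3 : z/3 ∈ digitSet 3 {0,2} := mem_iff.2 (Or.inl ⟨z, hz, rfl⟩)
  have : z/3 ∈ Set.Ioo a b ∩ digitSet 3 {0,2} := ⟨⟨by linarith, by linarith⟩, hz3⟩
  rw [hempty] at this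
  exact this

lemma gap_scale_right {a b : ℝ} (h : IsGap (digitSet 3 {0,2}) a b) (ha : 2/3 ≤ a) :
    IsGap (digitSet 3 {0,2}) (3*a-2) (3*b-2) := by
  obtain ⟨hab, ham, hbm, hempty⟩ := h
  have hmem : ∀ x ∈ digitSet 3 {0,2}, 2/3 ≤ x → 3*x-2 ∈ digitSet 3 {0,2} := by
    intro x hx hx23
    rcases mem_iff.1 hx with ⟨y, hy, rfl⟩ | ⟨y, hy, rfl⟩
    · exfalso
      have := (mem_subset_Icc hy).2
      linarith
    · have : 3*((2+y)/3)-2 = y := by ring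
      rw [this]; exact hy
  refine ⟨by linarith, hmem a ham ha, hmem b hbm (by linarith), ?_⟩
  ext z
  simp only [Set.mem_inter_iff, Set.mem_Ioo, Set.mem_empty_iff_false, iff_false, not_and]
  rintro ⟨hz1, hz2⟩ hz
  have hz3 : (2+z)/3 ∈ digitSet 3 {0,2} := mem_iff.2 (Or.inr ⟨z, hz, rfl⟩)
  have : (2+z)/3 ∈ Set.Ioo a b ∩ digitSet 3 {0,2} := ⟨⟨by linarith, by linarith⟩, hz3⟩
  rw [hempty] at this
  exact this

lemma gap_cls_aux : ∀ N : ℕ, ∀ a b : ℝ, IsGap (digitSet 3 {0,2}) a b → (1/3:ℝ)^N < b - a →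
    ∃ n q : ℕ, a = (3*q+1)/3^(n+1) ∧ b = (3*q+2)/3^(n+1) ∧ 3*q+3 ≤ 3^(n+1) := by
  intro N
  induction N with
  | zero =>
    intro a b hg hlen
    obtain ⟨hab, ha, hb, _⟩ := hg
    have h1 := (mem_subset_Icc ha).1
    have h2 := (mem_subset_Icc hb).2
    simp at hlen
    linarith
  | succ N ih =>
    intro a b hg hlen
    obtain ⟨hab, ha, hb, hempty⟩ := hg
    by_cases hb13 : b ≤ 1/3
    · obtain ⟨n, q, h1, h2, h3⟩ := ih (3*a) (3*b) (gap_scale_left ⟨hab, ha, hb, hempty⟩ hb13)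
        (by
          have : (1/3:ℝ)^N = 3 * (1/3)^(N+1) := by rw [pow_succ]; ring
          linarith)
      refine ⟨n+1, q, ?_, ?_, ?_⟩
      · have : a = (3*(q:ℝ)+1)/3^(n+1)/3 := by rw [← h1]; ring
        rw [this, pow_succ]; ring
      · have : b = (3*(q:ℝ)+2)/3^(n+1)/3 := by rw [← h2]; ring
        rw [this, pow_succ]; ring
      · calc 3*q+3 ≤ 3^(n+1) := h3
          _ ≤ 3^(n+1+1) := by apply pow_le_pow_right₀ <;> omega
    · by_cases ha23 : 2/3 ≤ a
      · obtain ⟨n, q, h1, h2, h3⟩ := ih (3*a-2) (3*b-2) (gap_scale_right ⟨hab, ha, hb, hempty⟩ ha23)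
          (by
            have : (1/3:ℝ)^N = 3 * (1/3)^(N+1) := by rw [pow_succ]; ring
            linarith)
        refine ⟨n+1, q + 2*3^n, ?_, ?_, ?_⟩
        · have ha' : a = ((3*(q:ℝ)+1)/3^(n+1) + 2)/3 := by rw [← h1]; ring
          rw [ha', pow_succ]
          push_cast
          have h9 : (3:ℝ)^(n+1) = 3 * 3^n := by rw [pow_succ]; ring
          field_simp
          ring
        · have hb' : b = ((3*(q:ℝ)+2)/3^(n+1) + 2)/3 := by rw [← h2]; ring
          rw [hb', pow_succ]
          push_cast
          field_simp
          ring
        · have h9 : 3^(n+1+1) = 3^(n+1) + 2*(3*3^n) := by rw [pow_succ, pow_succ]; ring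
          omega
      · -- middle case : a = 1/3, b = 2/3
        push_neg at hb13 ha23
        have h13 : ¬ ((1:ℝ)/3 ∈ Set.Ioo a b) := by
          intro hmem
          have : (1/3:ℝ) ∈ Set.Ioo a b ∩ digitSet 3 {0,2} := ⟨hmem, third_mem⟩
          rw [hempty] at this; exact this
        have h23 : ¬ ((2:ℝ)/3 ∈ Set.Ioo a b) := by
          intro hmem
          have : (2/3:ℝ) ∈ Set.Ioo a b ∩ digitSet 3 {0,2} := ⟨hmem, twothird_mem⟩
          rw [hempty] at this; exact this
        simp only [Set.mem_Ioo, not_and, not_lt] at h13 h23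
        have ha13 : 1/3 ≤ a := by
          by_contra hc
          push_neg at hc
          exact absurd (h13 hc) (by linarith)
        have hb23 : b ≤ 2/3 := by
          by_contra hc
          push_neg at hc
          have := h23 (by linarith)
          linarith
        have haeq : a = 1/3 := by
          rcases left_or_right ha with h | h
          · linarith
          · linarith
        have hbeq : b = 2/3 := by
          rcases left_or_right hb with h | h
          · linarith
          · linarith
        exact ⟨0, 0, by rw [haeq]; norm_num, by rw [hbeq]; norm_num, by norm_num⟩

lemma gap_cls {a b : ℝ} (h : IsGap (digitSet 3 {0,2}) a b) :
    ∃ n q : ℕ, a = (3*q+1)/3^(n+1) ∧ b = (3*q+2)/3^(n+1) ∧ 3*q+3 ≤ 3^(n+1) := by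
  have hpos : 0 < b - a := by linarith [h.1]
  obtain ⟨N, hN⟩ := exists_pow_lt_of_lt_one hpos (by norm_num : (1/3:ℝ) < 1)
  exact gap_cls_aux N a b h hN


/-- `(3q+1)·3^i ≠ (3r+2)·3^j` in `ℕ`. -/
lemma nat_neq (q r i j : ℕ) : (3*q+1)*3^i ≠ (3*r+2)*3^j := by
  intro h
  rcases le_total i j with hij | hij
  · obtain ⟨s, rfl⟩ := Nat.exists_eq_add_of_le hij
    rw [pow_add] at h
    have h3 : 0 < 3^i := pow_pos (by norm_num) i
    have h2 : (3*q+1)*3^i = ((3*r+2)*3^s)*3^i := by rw [h]; ring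
    have h' : 3*q+1 = (3*r+2)*3^s := Nat.eq_of_mul_eq_mul_right h3 h2
    cases s with
    | zero => simp at h'; omega
    | succ s =>
      have h'' : 3*q+1 = 3*((3*r+2)*3^s) := by rw [h', pow_succ]; ring
      omega
  · obtain ⟨s, rfl⟩ := Nat.exists_eq_add_of_le hij
    rw [pow_add] at h
    have h3 : 0 < 3^j := pow_pos (by norm_num) j
    have h2 : ((3*q+1)*3^s)*3^j = (3*r+2)*3^j := by rw [← h]; ring
    have h' : (3*q+1)*3^s = 3*r+2 := Nat.eq_of_mul_eq_mul_right h3 h2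
    cases s with
    | zero => simp at h'; omega
    | succ s =>
      have h'' : 3*((3*q+1)*3^s) = 3*r+2 := by rw [← h', pow_succ]; ring
      omega

/-- distance between endpoints of classified gaps: if `z = (3r+2)/3^(m+1) ≤ a = (3q+1)/3^(n+1)`
then `min (1/3^(n+1)) (1/3^(m+1)) ≤ a - z`. -/
lemma grid_dist {n q m r : ℕ} {a z : ℝ}
    (ha : a = (3*q+1)/3^(n+1)) (hz : z = (3*r+2)/3^(m+1)) (hle : z ≤ a) :
    min ((1:ℝ)/3^(n+1)) ((1:ℝ)/3^(m+1)) ≤ a - z := by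
  set P : ℕ := (3*q+1)*3^(m+1) with hP
  set Q : ℕ := (3*r+2)*3^(n+1) with hQ
  have hpow : (0:ℝ) < (3:ℝ)^(n+1) * 3^(m+1) := by positivity
  have haz : a - z = ((P:ℝ) - Q)/((3:ℝ)^(n+1) * 3^(m+1)) := by
    rw [ha, hz, hP, hQ]
    push_cast
    field_simp
  have hQP : Q ≤ P := by
    by_contra hc
    push_neg at hc
    have : a - z < 0 := by
      rw [haz]
      apply div_neg_of_neg_of_pos _ hpow
      have : (Q:ℝ) > P := by exact_mod_cast hc
      linarith
    linarith
  have hne : P ≠ Q := nat_neq q r (m+1) (n+1)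
  have hdvd : 3^(min (n+1) (m+1)) ∣ P - Q := by
    apply Nat.dvd_sub
    · exact Dvd.dvd.mul_left (pow_dvd_pow 3 (Nat.min_le_right _ _)) _
    · exact Dvd.dvd.mul_left (pow_dvd_pow 3 (Nat.min_le_left _ _)) _
  have hposPQ : 0 < P - Q := by omega
  have hge : 3^(min (n+1) (m+1)) ≤ P - Q := Nat.le_of_dvd hposPQ hdvd
  have hge' : ((3:ℝ)^(min (n+1) (m+1))) ≤ ((P:ℝ) - Q) := by
    have h1 : ((P - Q : ℕ):ℝ) = (P:ℝ) - Q := by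
      push_cast [Nat.cast_sub hQP]; ring
    calc ((3:ℝ)^(min (n+1) (m+1))) = ((3^(min (n+1) (m+1)) : ℕ) : ℝ) := by push_cast; ring
      _ ≤ ((P - Q : ℕ):ℝ) := by exact_mod_cast hge
      _ = _ := h1
  rw [haz]
  have key : min ((1:ℝ)/3^(n+1)) ((1:ℝ)/3^(m+1)) = (3:ℝ)^(min (n+1) (m+1)) / ((3:ℝ)^(n+1) * 3^(m+1)) := by
    rcases le_total (n+1) (m+1) with h | h
    · rw [min_eq_left h, min_eq_right]
      · rw [div_eq_div_iff (by positivity) (ne_of_gt hpow)]; ring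
      · apply one_div_le_one_div_of_le (by positivity)
        exact pow_le_pow_right₀ (by norm_num) h
    · rw [min_eq_right h, min_eq_left]
      · rw [div_eq_div_iff (by positivity) (ne_of_gt hpow)]; ring
      · apply one_div_le_one_div_of_le (by positivity)
        exact pow_le_pow_right₀ (by norm_num) h
  rw [key]
  exact (div_le_div_iff_of_pos_right hpow).2 hge'


open Real in
/-- increments of `x ↦ x^k` are monotone (convexity). -/
lemma incr_mono {k : ℝ} (hk : 1 ≤ k) {x y c : ℝ} (hx : 0 ≤ x) (hxy : x ≤ y) (hc : 0 ≤ c) :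
    (x+c)^k - x^k ≤ (y+c)^k - y^k := by
  have hcv := convexOn_rpow hk
  rcases eq_or_lt_of_le (show x ≤ y + c by linarith) with heq | hlt
  · have hc0 : c = 0 := by linarith
    have hxy' : x = y := by linarith
    rw [hc0, hxy']
  · set D := y + c - x with hD
    have hDpos : 0 < D := by linarith
    set l := c / D with hl
    have hl0 : 0 ≤ l := div_nonneg hc hDpos.le
    have hl1 : l ≤ 1 := by
      rw [hl, div_le_one hDpos]; linarith
    have hlD : l * D = c := by
      rw [hl]; field_simp
    have h1 : (1 - l) • x + l • (y + c) = x + c := by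
      simp only [smul_eq_mul]
      have : (1-l)*x + l*(y+c) = x + l*D := by rw [hD]; ring
      rw [this, hlD]
    have h2 : l • x + (1 - l) • (y + c) = y := by
      simp only [smul_eq_mul]
      have : l*x + (1-l)*(y+c) = (y+c) - l*D := by rw [hD]; ring
      rw [this, hlD]; ring
    have hyc : (0:ℝ) ≤ y + c := by linarith
    have e1 := hcv.2 (Set.mem_Ici.2 hx) (Set.mem_Ici.2 hyc)
      (by linarith : (0:ℝ) ≤ 1 - l) hl0 (by ring)
    have e2 := hcv.2 (Set.mem_Ici.2 hx) (Set.mem_Ici.2 hyc)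
      hl0 (by linarith : (0:ℝ) ≤ 1 - l) (by ring)
    rw [h1] at e1
    rw [h2] at e2
    simp only [smul_eq_mul] at e1 e2
    nlinarith [e1, e2]


noncomputable def Ak (k : ℝ) : Set ℝ := (fun x : ℝ => x ^ k) '' digitSet 3 {0,2}

lemma rev_le {k x y : ℝ} (hk : 0 < k) (hy : 0 ≤ y) (h : x^k ≤ y^k) : x ≤ y := by
  by_contra hc
  push_neg at hc
  exact absurd h (not_le.2 (Real.rpow_lt_rpow hy hc hk))

lemma rev_lt {k x y : ℝ} (hk : 0 < k) (hy : 0 ≤ y) (h : x^k < y^k) : x < y := by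
  by_contra hc
  push_neg at hc
  exact absurd h (not_lt.2 (Real.rpow_le_rpow hy hc hk.le))

lemma Ak_sub_Icc {k : ℝ} (hk : 0 < k) : Ak k ⊆ Set.Icc (0:ℝ) 1 := by
  rintro w ⟨x, hx, rfl⟩
  obtain ⟨hx0, hx1⟩ := mem_subset_Icc hx
  exact ⟨Real.rpow_nonneg hx0 k, Real.rpow_le_one hx0 hx1 hk.le⟩

lemma zero_mem_Ak {k : ℝ} (hk : 0 < k) : (0:ℝ) ∈ Ak k :=
  ⟨0, zero_mem, Real.zero_rpow (ne_of_gt hk)⟩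

lemma one_mem_Ak {k : ℝ} : (1:ℝ) ∈ Ak k := ⟨1, one_mem, Real.one_rpow k⟩

lemma sInf_Ak {k : ℝ} (hk : 0 < k) : sInf (Ak k) = 0 := by
  apply le_antisymm
  · exact csInf_le ⟨0, fun w hw => (Ak_sub_Icc hk hw).1⟩ (zero_mem_Ak hk)
  · exact le_csInf ⟨0, zero_mem_Ak hk⟩ (fun w hw => (Ak_sub_Icc hk hw).1)

lemma sSup_Ak {k : ℝ} (hk : 0 < k) : sSup (Ak k) = 1 := by
  apply le_antisymm
  · exact csSup_le ⟨0, zero_mem_Ak hk⟩ (fun w hw => (Ak_sub_Icc hk hw).2)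
  · exact le_csSup ⟨1, fun w hw => (Ak_sub_Icc hk hw).2⟩ one_mem_Ak

lemma gap_transfer {k a' b' : ℝ} (hk : 0 < k) (h : IsGap (Ak k) a' b') :
    ∃ a b : ℝ, IsGap (digitSet 3 {0,2}) a b ∧ a' = a^k ∧ b' = b^k := by
  obtain ⟨hab, ha', hb', hempty⟩ := h
  obtain ⟨a, haC, rfl⟩ := ha'
  obtain ⟨b, hbC, rfl⟩ := hb'
  have ha0 := (mem_subset_Icc haC).1
  have hb0 := (mem_subset_Icc hbC).1
  refine ⟨a, b, ⟨rev_lt hk hb0 hab, haC, hbC, ?_⟩, rfl, rfl⟩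
  ext z
  simp only [Set.mem_inter_iff, Set.mem_Ioo, Set.mem_empty_iff_false, iff_false, not_and]
  rintro ⟨hz1, hz2⟩ hz
  have hz0 : 0 ≤ z := le_trans ha0 hz1.le
  have : z^k ∈ Set.Ioo ((fun x : ℝ => x^k) a) ((fun x : ℝ => x^k) b) ∩ Ak k :=
    ⟨⟨Real.rpow_lt_rpow ha0 hz1 hk, Real.rpow_lt_rpow hz0 hz2 hk⟩, ⟨z, hz, rfl⟩⟩
  rw [hempty] at this
  exact this

lemma gap_transfer' {k a b : ℝ} (hk : 0 < k) (h : IsGap (digitSet 3 {0,2}) a b) :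
    IsGap (Ak k) (a^k) (b^k) := by
  obtain ⟨hab, haC, hbC, hempty⟩ := h
  have ha0 := (mem_subset_Icc haC).1
  refine ⟨Real.rpow_lt_rpow ha0 hab hk, ⟨a, haC, rfl⟩, ⟨b, hbC, rfl⟩, ?_⟩
  ext w
  simp only [Set.mem_inter_iff, Set.mem_Ioo, Set.mem_empty_iff_false, iff_false, not_and]
  rintro ⟨hw1, hw2⟩ hw
  obtain ⟨z, hz, rfl⟩ := hw
  have hz0 := (mem_subset_Icc hz).1
  have hb0 := (mem_subset_Icc hbC).1
  have : z ∈ Set.Ioo a b ∩ digitSet 3 {0,2} :=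
    ⟨⟨rev_lt hk hz0 hw1, rev_lt hk hb0 hw2⟩, hz⟩
  rw [hempty] at this
  exact this

lemma two_rpow_gt {k : ℝ} (hk : 1 < k) : 2 < (2:ℝ)^k := by
  have := Real.rpow_lt_rpow_of_exponent_lt (by norm_num : (1:ℝ) < 2) hk
  rwa [Real.rpow_one] at this

/-- every admissible left point is at distance ≥ m₀ from `a^k`. -/
lemma step_left {k a b : ℝ} (hk : 1 < k) (hgap : IsGap (digitSet 3 {0,2}) a b) :
    ∀ d' ∈ {d : ℝ | d ≤ a^k ∧ (d = sInf (Ak k) ∨ ∃ c, b^k - a^k ≤ d - c ∧ IsGap (Ak k) c d)},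
      d' ≤ a^k - (b^k - a^k)/((2:ℝ)^k - 1) := by
  have hk0 : (0:ℝ) < k := by linarith
  obtain ⟨n, q, ha, hb, hq⟩ := gap_cls hgap
  have hGpos : (0:ℝ) < 1/3^(n+1) := by positivity
  have hG : b - a = 1/3^(n+1) := by rw [ha, hb]; push_cast; ring
  have ha0 : 0 ≤ a := by rw [ha]; positivity
  have hag : 1/3^(n+1) ≤ a := by
    rw [ha]
    have hq0 : (0:ℝ) ≤ (q:ℝ) := Nat.cast_nonneg q
    exact (div_le_div_iff_of_pos_right (by positivity)).2 (by linarith)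
  have hb2a : b ≤ 2*a := by linarith
  have hden : (0:ℝ) < (2:ℝ)^k - 1 := by linarith [two_rpow_gt hk]
  have hΔpos : 0 < b^k - a^k := by
    have := Real.rpow_lt_rpow ha0 hgap.1 hk0
    linarith
  rintro d' ⟨hd'le, hcase⟩
  rcases hcase with h0 | ⟨c', hqual, hgap'⟩
  · rw [h0, sInf_Ak hk0]
    have h2a : b^k ≤ (2*a)^k := Real.rpow_le_rpow (le_trans ha0 hgap.1.le) hb2a hk0.le
    rw [Real.mul_rpow (by norm_num) ha0] at h2a
    have hble : (b^k - a^k)/((2:ℝ)^k - 1) ≤ a^k := by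
      rw [div_le_iff₀ hden]; linarith [h2a]
    linarith
  · obtain ⟨w, z, hgapwz, hc', hd'⟩ := gap_transfer hk0 hgap'
    obtain ⟨m, r, hw, hz, hr⟩ := gap_cls hgapwz
    have hw0 : 0 ≤ w := by rw [hw]; positivity
    have hz0 : 0 ≤ z := le_trans hw0 hgapwz.1.le
    have hza : z ≤ a := by
      rw [hd'] at hd'le
      exact rev_le hk0 ha0 hd'le
    have hH : z - w = 1/3^(m+1) := by rw [hw, hz]; push_cast; ring
    have hHpos : (0:ℝ) < 1/3^(m+1) := by positivity
    have hmin := grid_dist ha hz hza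
    have hqual' : b^k - a^k ≤ z^k - w^k := by rw [hc', hd'] at hqual; exact hqual
    have hm0 : (b^k - a^k)/((2:ℝ)^k - 1) ≤ b^k - a^k :=
      div_le_self hΔpos.le (by linarith [two_rpow_gt hk])
    rw [hd']
    by_cases hcase2 : z + (1/3^(m+1)) ≤ a
    · -- far case
      have e1 : z^k - w^k ≤ (z + (1/3^(m+1)))^k - z^k := by
        have := incr_mono hk.le hw0 hgapwz.1.le hHpos.le
        have hwz : w + (1/3^(m+1)) = z := by rw [← hH]; ring
        rw [hwz] at this
        linarith
      have e2 : (z + (1/3^(m+1)))^k ≤ a^k :=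
        Real.rpow_le_rpow (by linarith) hcase2 hk0.le
      linarith
    · -- near case : G ≤ t := a - z < H
      push_neg at hcase2
      have hGt : 1/3^(n+1) ≤ a - z := by
        rcases le_total ((1:ℝ)/3^(n+1)) ((1:ℝ)/3^(m+1)) with hle | hle
        · calc (1:ℝ)/3^(n+1) = min ((1:ℝ)/3^(n+1)) ((1:ℝ)/3^(m+1)) := (min_eq_left hle).symm
            _ ≤ a - z := hmin
        · exfalso
          have : (1:ℝ)/3^(m+1) ≤ a - z := by
            calc (1:ℝ)/3^(m+1) = min ((1:ℝ)/3^(n+1)) ((1:ℝ)/3^(m+1)) := (min_eq_right hle).symm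
              _ ≤ a - z := hmin
          linarith
      set t := a - z with htdef
      have htpos : 0 < t := lt_of_lt_of_le hGpos hGt
      have hbz2 : b ≤ z + 2*t := by
        have : b = a + 1/3^(n+1) := by linarith
        rw [this]; linarith
      have hbk : b^k ≤ (z + 2*t)^k := Real.rpow_le_rpow (by linarith) hbz2 hk0.le
      have e3 := incr_mono hk.le hz0 (by linarith : z ≤ z + 2*t) hz0
      -- (z+z)^k - z^k ≤ (z+2t+z)^k - (z+2t)^k
      have ezz : (z+z)^k = (2:ℝ)^k * z^k := by
        rw [show z+z = 2*z by ring, Real.mul_rpow (by norm_num) hz0]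
      have ezz2 : (z+2*t+z)^k = (2:ℝ)^k * a^k := by
        rw [show z+2*t+z = 2*(z+t) by ring, Real.mul_rpow (by norm_num) (by linarith)]
        congr 2
        linarith
      rw [ezz, ezz2] at e3
      -- Δ ≤ (2^k-1)(a^k - z^k)
      have key : b^k - a^k ≤ ((2:ℝ)^k - 1) * (a^k - z^k) := by linarith [e3, hbk]
      have : (b^k - a^k)/((2:ℝ)^k - 1) ≤ a^k - z^k := by
        rw [div_le_iff₀ hden]; linarith [key]
      linarith


/-- every admissible right point is at distance ≥ m₀ from `b^k`. -/
lemma step_right {k a b : ℝ} (hk : 1 < k) (hgap : IsGap (digitSet 3 {0,2}) a b) :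
    ∀ e ∈ {e : ℝ | b^k ≤ e ∧ (e = sSup (Ak k) ∨ ∃ f, b^k - a^k ≤ f - e ∧ IsGap (Ak k) e f)},
      b^k + (b^k - a^k)/((2:ℝ)^k - 1) ≤ e := by
  have hk0 : (0:ℝ) < k := by linarith
  obtain ⟨n, q, ha, hb, hq⟩ := gap_cls hgap
  have hGpos : (0:ℝ) < 1/3^(n+1) := by positivity
  have hG : b - a = 1/3^(n+1) := by rw [ha, hb]; ring
  have ha0 : 0 ≤ a := by rw [ha]; positivity
  have hb0 : 0 ≤ b := le_trans ha0 hgap.1.le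
  have hbG1 : b + 1/3^(n+1) ≤ 1 := by
    rw [hb]
    have h3 : ((3*q+3:ℕ):ℝ) ≤ ((3^(n+1):ℕ):ℝ) := by exact_mod_cast hq
    push_cast at h3
    have hpow : (0:ℝ) < 3^(n+1) := by positivity
    rw [← add_div, div_le_one hpow]
    linarith
  have hden : (0:ℝ) < (2:ℝ)^k - 1 := by linarith [two_rpow_gt hk]
  have hΔpos : 0 < b^k - a^k := by
    have := Real.rpow_lt_rpow ha0 hgap.1 hk0
    linarith
  have hm0 : (b^k - a^k)/((2:ℝ)^k - 1) ≤ b^k - a^k :=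
    div_le_self hΔpos.le (by linarith [two_rpow_gt hk])
  -- b^k - a^k ≤ (b+G)^k - b^k  (convexity, a + G = b)
  have hstepG : b^k - a^k ≤ (b + 1/3^(n+1))^k - b^k := by
    have := incr_mono hk.le ha0 hgap.1.le hGpos.le
    have hab' : a + 1/3^(n+1) = b := by linarith
    rw [hab'] at this
    linarith
  rintro e ⟨hele, hcase⟩
  rcases hcase with h1 | ⟨f', hqual, hgap'⟩
  · rw [h1, sSup_Ak hk0]
    have h1k : (b + 1/3^(n+1))^k ≤ 1 := Real.rpow_le_one (by linarith) hbG1 hk0.le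
    linarith
  · obtain ⟨c, d₂, hgapcd, he, hf'⟩ := gap_transfer hk0 hgap'
    obtain ⟨m, r, hc, hd₂, hr⟩ := gap_cls hgapcd
    have hc0 : 0 ≤ c := by rw [hc]; positivity
    have hbc : b ≤ c := by
      rw [he] at hele
      exact rev_le hk0 hc0 hele
    have hH : d₂ - c = 1/3^(m+1) := by rw [hc, hd₂]; ring
    have hHpos : (0:ℝ) < 1/3^(m+1) := by positivity
    have hmin := grid_dist hc hb hbc
    have hqual' : b^k - a^k ≤ d₂^k - c^k := by rw [he, hf'] at hqual; exact hqual
    rw [he]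
    by_cases hcase2 : b + (1/3^(n+1)) ≤ c
    · -- far case : c^k - b^k ≥ (b+G)^k - b^k ≥ Δ ≥ m₀
      have e2 : (b + 1/3^(n+1))^k ≤ c^k :=
        Real.rpow_le_rpow (by linarith) hcase2 hk0.le
      linarith
    · -- near case : H ≤ t := c - b < G
      push_neg at hcase2
      have hHt : 1/3^(m+1) ≤ c - b := by
        rcases le_total ((1:ℝ)/3^(m+1)) ((1:ℝ)/3^(n+1)) with hle | hle
        · calc (1:ℝ)/3^(m+1) = min ((1:ℝ)/3^(m+1)) ((1:ℝ)/3^(n+1)) := (min_eq_left hle).symm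
            _ ≤ c - b := hmin
        · exfalso
          have : (1:ℝ)/3^(n+1) ≤ c - b := by
            calc (1:ℝ)/3^(n+1) = min ((1:ℝ)/3^(m+1)) ((1:ℝ)/3^(n+1)) := (min_eq_right hle).symm
              _ ≤ c - b := hmin
          linarith
      set t := c - b with htdef
      have htpos : 0 < t := lt_of_lt_of_le hHpos hHt
      have hd2le : d₂ ≤ b + 2*t := by
        have : d₂ = c + 1/3^(m+1) := by linarith
        rw [this]; linarith
      have hd2k : d₂^k ≤ (b + 2*t)^k := by
        apply Real.rpow_le_rpow _ hd2le hk0.le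
        have := (mem_subset_Icc hgapcd.2.1).1
        linarith
      have e3 := incr_mono hk.le hb0 (by linarith : b ≤ b + 2*t) hb0
      -- (b+b)^k - b^k ≤ (b+2t+b)^k - (b+2t)^k
      have ebb : (b+b)^k = (2:ℝ)^k * b^k := by
        rw [show b+b = 2*b by ring, Real.mul_rpow (by norm_num) hb0]
      have ebb2 : (b+2*t+b)^k = (2:ℝ)^k * c^k := by
        rw [show b+2*t+b = 2*(b+t) by ring, Real.mul_rpow (by norm_num) (by linarith)]
        congr 2
        linarith
      rw [ebb, ebb2] at e3
      have hck : c^k = (b+t)^k := by rw [show b + t = c by linarith]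
      have key : b^k - a^k ≤ ((2:ℝ)^k - 1) * (c^k - b^k) := by linarith [e3, hd2k, hqual']
      have : (b^k - a^k)/((2:ℝ)^k - 1) ≤ c^k - b^k := by
        rw [div_le_iff₀ hden]; linarith [key]
      linarith

lemma bL_ge {k a b : ℝ} (hk : 1 < k) (hgap : IsGap (digitSet 3 {0,2}) a b) :
    (b^k - a^k)/((2:ℝ)^k - 1) ≤ a^k - leftPt (Ak k) (a^k) (b^k) := by
  have hk0 : (0:ℝ) < k := by linarith
  have ha0 : 0 ≤ a := (mem_subset_Icc hgap.2.1).1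
  have hne : ({d : ℝ | d ≤ a^k ∧ (d = sInf (Ak k) ∨
      ∃ c, b^k - a^k ≤ d - c ∧ IsGap (Ak k) c d)}).Nonempty :=
    ⟨0, Real.rpow_nonneg ha0 k, Or.inl (sInf_Ak hk0).symm⟩
  have h := csSup_le hne (step_left hk hgap)
  unfold leftPt
  linarith

lemma bR_ge {k a b : ℝ} (hk : 1 < k) (hgap : IsGap (digitSet 3 {0,2}) a b) :
    b^k + (b^k - a^k)/((2:ℝ)^k - 1) ≤ rightPt (Ak k) (a^k) (b^k) := by
  have hk0 : (0:ℝ) < k := by linarith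
  have hb1 : b ≤ 1 := (mem_subset_Icc hgap.2.2.1).2
  have hb0 : 0 ≤ b := (mem_subset_Icc hgap.2.2.1).1
  have hne : ({e : ℝ | b^k ≤ e ∧ (e = sSup (Ak k) ∨
      ∃ f, b^k - a^k ≤ f - e ∧ IsGap (Ak k) e f)}).Nonempty :=
    ⟨1, Real.rpow_le_one hb0 hb1 hk0.le, Or.inl (sSup_Ak hk0).symm⟩
  exact le_csInf hne (step_right hk hgap)

lemma ratio_lb {k : ℝ} (hk : 1 < k) :
    ∀ r ∈ {r : ℝ | ∃ a b : ℝ, IsGap (Ak k) a b ∧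
      r = min (a - leftPt (Ak k) a b) (rightPt (Ak k) a b - b) / (b - a)},
      1/((2:ℝ)^k - 1) ≤ r := by
  have hk0 : (0:ℝ) < k := by linarith
  have hden : (0:ℝ) < (2:ℝ)^k - 1 := by linarith [two_rpow_gt hk]
  rintro r ⟨a', b', hgap', rfl⟩
  obtain ⟨a, b, hgap, rfl, rfl⟩ := gap_transfer hk0 hgap'
  have ha0 : 0 ≤ a := (mem_subset_Icc hgap.2.1).1
  have hΔ : 0 < b^k - a^k := by
    have := Real.rpow_lt_rpow ha0 hgap.1 hk0
    linarith
  have h1 := bL_ge hk hgap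
  have h2 := bR_ge hk hgap
  have hmin : (b^k - a^k)/((2:ℝ)^k - 1) ≤
      min (a^k - leftPt (Ak k) (a^k) (b^k)) (rightPt (Ak k) (a^k) (b^k) - b^k) :=
    le_min h1 (by linarith)
  calc 1/((2:ℝ)^k - 1) = ((b^k - a^k)/((2:ℝ)^k - 1))/(b^k - a^k) := by
        field_simp
    _ ≤ _ := (div_le_div_iff_of_pos_right hΔ).2 hmin

lemma gap13 : IsGap (digitSet 3 {0,2}) (1/3) (2/3) := by
  refine ⟨by norm_num, third_mem, twothird_mem, ?_⟩
  ext z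
  simp only [Set.mem_inter_iff, Set.mem_Ioo, Set.mem_empty_iff_false, iff_false, not_and]
  rintro ⟨hz1, hz2⟩ hz
  rcases left_or_right hz with h | h <;> linarith

lemma leftPt13 {k : ℝ} (hk : 1 < k) : leftPt (Ak k) ((1/3:ℝ)^k) ((2/3:ℝ)^k) = 0 := by
  have hk0 : (0:ℝ) < k := by linarith
  have h23 : ((2:ℝ)/3)^k = (2:ℝ)^k * ((1:ℝ)/3)^k := by
    rw [← Real.mul_rpow (by norm_num) (by norm_num)]; norm_num
  have h13pos : (0:ℝ) < ((1:ℝ)/3)^k := Real.rpow_pos_of_pos (by norm_num) k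
  have h2k := two_rpow_gt hk
  have hset : {d : ℝ | d ≤ ((1:ℝ)/3)^k ∧ (d = sInf (Ak k) ∨
      ∃ c, ((2:ℝ)/3)^k - ((1:ℝ)/3)^k ≤ d - c ∧ IsGap (Ak k) c d)} = {0} := by
    apply Set.eq_singleton_iff_unique_mem.2
    refine ⟨⟨h13pos.le, Or.inl (sInf_Ak hk0).symm⟩, ?_⟩
    rintro d ⟨hdle, hd⟩
    rcases hd with h | ⟨c, hqc, hgapc⟩
    · rw [h, sInf_Ak hk0]
    · exfalso
      have hc0 : 0 ≤ c := (Ak_sub_Icc hk0 hgapc.2.1).1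
      nlinarith
  unfold leftPt
  rw [hset, csSup_singleton]

lemma thickness_val {k : ℝ} (hk : 1 < k) :
    thickness (Ak k) = 1/((2:ℝ)^k - 1) := by
  have hk0 : (0:ℝ) < k := by linarith
  have hden : (0:ℝ) < (2:ℝ)^k - 1 := by linarith [two_rpow_gt hk]
  have h23 : ((2:ℝ)/3)^k = (2:ℝ)^k * ((1:ℝ)/3)^k := by
    rw [← Real.mul_rpow (by norm_num) (by norm_num)]; norm_num
  have h13pos : (0:ℝ) < ((1:ℝ)/3)^k := Real.rpow_pos_of_pos (by norm_num) k
  have hgap' := gap_transfer' hk0 gap13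
  have hΔ : ((2:ℝ)/3)^k - ((1:ℝ)/3)^k = ((2:ℝ)^k - 1) * ((1:ℝ)/3)^k := by
    rw [h23]; ring
  -- the ratio at the special gap equals 1/(2^k-1)
  have hmem : (1/((2:ℝ)^k - 1)) ∈ {r : ℝ | ∃ a b : ℝ, IsGap (Ak k) a b ∧
      r = min (a - leftPt (Ak k) a b) (rightPt (Ak k) a b - b) / (b - a)} := by
    refine ⟨((1:ℝ)/3)^k, ((2:ℝ)/3)^k, hgap', ?_⟩
    have hL : ((1:ℝ)/3)^k - leftPt (Ak k) (((1:ℝ)/3)^k) (((2:ℝ)/3)^k) = ((1:ℝ)/3)^k := by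
      rw [leftPt13 hk]; ring
    have hR := bR_ge hk gap13
    have hRge : ((1:ℝ)/3)^k ≤ rightPt (Ak k) (((1:ℝ)/3)^k) (((2:ℝ)/3)^k) - ((2:ℝ)/3)^k := by
      have hm0eq : (((2:ℝ)/3)^k - ((1:ℝ)/3)^k)/((2:ℝ)^k - 1) = ((1:ℝ)/3)^k := by
        rw [hΔ, mul_div_assoc]
        rw [mul_comm] at *
        field_simp
      rw [hm0eq] at hR
      linarith
    rw [hL, min_eq_left hRge, hΔ]
    rw [eq_div_iff (by positivity)]
    field_simp
  apply le_antisymm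
  · exact csInf_le ⟨1/((2:ℝ)^k - 1), fun r hr => ratio_lb hk r hr⟩ hmem
  · exact le_csInf ⟨_, hmem⟩ (ratio_lb hk)

end CtrAux

/-- For real `k > 1`, the image `C₃^k` of the middle-third Cantor set under `x ↦ x ^ k`
(real power) has normalized thickness `1 / 2 ^ k`, equivalently thickness `1 / (2 ^ k - 1)`. -/
theorem thickness_cantor_rpow (k : ℝ) (hk : 1 < k) :
    normThickness ((fun x : ℝ => x ^ k) '' digitSet 3 {0, 2}) = 1 / (2 : ℝ) ^ k ∧
    thickness ((fun x : ℝ => x ^ k) '' digitSet 3 {0, 2}) = 1 / ((2 : ℝ) ^ k - 1) := by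
  have hA : (fun x : ℝ => x ^ k) '' digitSet 3 {0, 2} = CtrAux.Ak k := rfl
  have hthick := CtrAux.thickness_val hk
  have hden : (0:ℝ) < (2:ℝ)^k - 1 := by linarith [CtrAux.two_rpow_gt hk]
  constructor
  · rw [hA, normThickness, hthick]
    rw [div_eq_div_iff (by positivity) (by positivity)]
    field_simp
    ring
  · rw [hA, hthick]
end

section
/- Let b ≥ 3 be an integer and let B = {1, 2, …, b−1}. Then the normalized thickness of A_b^B equals S(A_b^B) = (b − 2)/(b − 1). -/
section Infra
open Finset

variable {b : ℕ}

/-- gap length at level n: `1/((b-1) b^n)` -/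
noncomputable def gl (b n : ℕ) : ℝ := ((b:ℝ) - 1)⁻¹ * ((b:ℝ)^n)⁻¹

lemma hb1 (hb : 3 ≤ b) : (1:ℝ) < (b:ℝ) := by
  have : (3:ℝ) ≤ (b:ℝ) := by exact_mod_cast hb
  linarith

lemma hbpos (hb : 3 ≤ b) : (0:ℝ) < (b:ℝ) := lt_trans one_pos (hb1 hb)

lemma hbm1 (hb : 3 ≤ b) : (0:ℝ) < (b:ℝ) - 1 := by linarith [hb1 hb]

lemma gl_pos (hb : 3 ≤ b) (n : ℕ) : 0 < gl b n := by
  exact mul_pos (inv_pos.2 (hbm1 hb)) (inv_pos.2 (pow_pos (hbpos hb) n))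

lemma gl_anti (hb : 3 ≤ b) {m n : ℕ} (h : m ≤ n) : gl b n ≤ gl b m := by
  have h1 := hb1 hb
  exact mul_le_mul_of_nonneg_left
    (inv_anti₀ (pow_pos (hbpos hb) m) (pow_le_pow_right₀ (le_of_lt h1) h))
    (le_of_lt (inv_pos.2 (hbm1 hb)))

/-- the i-th term of the series -/
noncomputable def trm (b : ℕ) (d : ℕ → ℕ) (i : ℕ) : ℝ := (d i : ℝ) / (b:ℝ)^(i+1)

noncomputable def dval (b : ℕ) (d : ℕ → ℕ) : ℝ := ∑' i, trm b d i

def Valid (b : ℕ) (d : ℕ → ℕ) : Prop := ∀ i, 1 ≤ d i ∧ d i ≤ b - 1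

lemma trm_nonneg (hb : 3 ≤ b) (d : ℕ → ℕ) (i : ℕ) : 0 ≤ trm b d i :=
  div_nonneg (Nat.cast_nonneg _) (le_of_lt (pow_pos (hbpos hb) _))

lemma trm_le (hb : 3 ≤ b) {d : ℕ → ℕ} (hd : ∀ i, d i ≤ b - 1) (i : ℕ) :
    trm b d i ≤ ((b:ℝ) - 1) * ((b:ℝ)⁻¹)^(i+1) := by
  have h1 := hbpos hb
  have hc : ((d i : ℝ)) ≤ (b:ℝ) - 1 := by
    have := hd i
    have : ((d i : ℕ):ℝ) ≤ ((b - 1 : ℕ):ℝ) := by exact_mod_cast this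
    rwa [Nat.cast_sub (by omega), Nat.cast_one] at this
  rw [trm, div_eq_mul_inv, ← inv_pow]
  exact mul_le_mul_of_nonneg_right hc (by positivity)

lemma summable_trm (hb : 3 ≤ b) {d : ℕ → ℕ} (hd : ∀ i, d i ≤ b - 1) :
    Summable (trm b d) := by
  have h1 := hb1 hb
  have hr : |(b:ℝ)⁻¹| < 1 := by
    rw [abs_of_nonneg (by positivity)]
    exact inv_lt_one_of_one_lt₀ h1
  have : Summable (fun i : ℕ => ((b:ℝ) - 1) * ((b:ℝ)⁻¹)^(i+1)) := by
    apply Summable.mul_left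
    exact (summable_geometric_of_abs_lt_one hr).comp_injective (add_left_injective 1)
  exact this.of_nonneg_of_le (trm_nonneg hb d) (trm_le hb hd)

/-- tail sum from position m -/
noncomputable def tl (b : ℕ) (d : ℕ → ℕ) (m : ℕ) : ℝ := ∑' i, trm b d (i + m)

lemma summable_trm_add (hb : 3 ≤ b) {d : ℕ → ℕ} (hd : ∀ i, d i ≤ b - 1) (m : ℕ) :
    Summable (fun i => trm b d (i + m)) :=
  (summable_nat_add_iff m).2 (summable_trm hb hd)

lemma dval_split (hb : 3 ≤ b) {d : ℕ → ℕ} (hd : ∀ i, d i ≤ b - 1) (n : ℕ) :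
    dval b d = (∑ i ∈ range n, trm b d i) + tl b d n :=
  (Summable.sum_add_tsum_nat_add n (summable_trm hb hd)).symm

/-- tail of constant sequence -/
lemma tl_const (hb : 3 ≤ b) (c m : ℕ) : tl b (fun _ => c) m = (c:ℝ) * gl b m := by
  have h0 := hbpos hb
  have h1 := hb1 hb
  have hne : (b:ℝ) ≠ 0 := ne_of_gt h0
  have key : ∀ i : ℕ, trm b (fun _ => c) (i + m) = ((c:ℝ) / (b:ℝ)^(m+1)) * ((b:ℝ)⁻¹)^i := by
    intro i
    rw [trm]
    rw [show i + m + 1 = (m+1) + i by ring, pow_add, inv_pow]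
    rw [div_mul_eq_div_div, div_eq_mul_inv]
  rw [tl, tsum_congr key, tsum_mul_left, tsum_geometric_of_lt_one (by positivity) (inv_lt_one_of_one_lt₀ h1)]
  rw [gl]
  have hne2 : (b:ℝ) - 1 ≠ 0 := ne_of_gt (hbm1 hb)
  have hpow : ((b:ℝ))^m ≠ 0 := pow_ne_zero _ hne
  field_simp
  ring

lemma bm1_cast (hb : 3 ≤ b) : ((b - 1 : ℕ) : ℝ) = (b:ℝ) - 1 := by
  rw [Nat.cast_sub (by omega), Nat.cast_one]

lemma bm1_gl (hb : 3 ≤ b) (m : ℕ) : ((b:ℝ) - 1) * gl b m = ((b:ℝ)^m)⁻¹ := by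
  rw [gl, ← mul_assoc, mul_inv_cancel₀ (ne_of_gt (hbm1 hb)), one_mul]

/-- tail bounds for valid digit sequences -/
lemma tl_le (hb : 3 ≤ b) {d : ℕ → ℕ} (hd : ∀ i, d i ≤ b - 1) (m : ℕ) :
    tl b d m ≤ ((b:ℝ)^m)⁻¹ := by
  have : tl b d m ≤ tl b (fun _ => b - 1) m := by
    apply Summable.tsum_le_tsum _ (summable_trm_add hb hd m)
      (summable_trm_add hb (fun _ => le_refl _) m)
    intro i
    apply div_le_div_of_nonneg_right _ (le_of_lt (pow_pos (hbpos hb) _))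
    · exact_mod_cast hd (i + m)
  rw [tl_const hb, bm1_cast hb, bm1_gl hb] at this
  exact this

lemma le_tl (hb : 3 ≤ b) {d : ℕ → ℕ} (hd : Valid b d) (m : ℕ) :
    gl b m ≤ tl b d m := by
  have : tl b (fun _ => 1) m ≤ tl b d m := by
    apply Summable.tsum_le_tsum _ (summable_trm_add hb (fun _ => by omega) m)
      (summable_trm_add hb (fun i => (hd i).2) m)
    intro i
    apply div_le_div_of_nonneg_right _ (le_of_lt (pow_pos (hbpos hb) _))
    · exact_mod_cast (hd (i + m)).1
  rwa [tl_const hb, Nat.cast_one, one_mul] at this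

/-- prefix sum through position n-1 -/
noncomputable def P (b : ℕ) (d : ℕ → ℕ) (n : ℕ) : ℝ := ∑ i ∈ range n, trm b d i

lemma P_congr {d e : ℕ → ℕ} (n : ℕ) (h : ∀ i < n, d i = e i) : P b d n = P b e n := by
  apply Finset.sum_congr rfl
  intro i hi
  rw [trm, trm, h i (mem_range.1 hi)]

/-- extension: prefix of e through k, then constant c -/
def exS (e : ℕ → ℕ) (k c : ℕ) : ℕ → ℕ := fun i => if i ≤ k then e i else c

lemma exS_valid (hb : 3 ≤ b) {e : ℕ → ℕ} {k c : ℕ} (he : ∀ i ≤ k, 1 ≤ e i ∧ e i ≤ b - 1)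
    (hc : 1 ≤ c ∧ c ≤ b - 1) : Valid b (exS e k c) := by
  intro i
  unfold exS
  split
  · exact he i (by assumption)
  · exact hc

lemma exS_le (hb : 3 ≤ b) {e : ℕ → ℕ} {k c : ℕ} (hc : c ≤ b - 1)
    (he : ∀ i ≤ k, e i ≤ b - 1) : ∀ i, exS e k c i ≤ b - 1 := by
  intro i; unfold exS; split
  · exact he i (by assumption)
  · exact hc

lemma dval_exS (hb : 3 ≤ b) (e : ℕ → ℕ) (k c : ℕ) (hc : c ≤ b - 1)
    (he : ∀ i ≤ k, e i ≤ b - 1) :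
    dval b (exS e k c) = P b e (k+1) + (c:ℝ) * gl b (k+1) := by
  rw [dval_split hb (exS_le hb hc he) (k+1)]
  congr 1
  · apply Finset.sum_congr rfl
    intro i hi
    have h2 : i ≤ k := by have := mem_range.1 hi; omega
    rw [trm, trm, exS, if_pos h2]
  · rw [← tl_const hb c (k+1), tl, tl]
    apply tsum_congr
    intro i
    rw [trm, trm, exS]
    rw [if_neg (by omega)]

lemma dval_eq_tl0 (hb : 3 ≤ b) {d : ℕ → ℕ} (hd : ∀ i, d i ≤ b - 1) : dval b d = tl b d 0 := by
  rw [dval_split hb hd 0]; simp [P]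

lemma dval_le_one (hb : 3 ≤ b) {d : ℕ → ℕ} (hd : ∀ i, d i ≤ b - 1) : dval b d ≤ 1 := by
  have := tl_le hb hd 0
  rw [← dval_eq_tl0 hb hd] at this
  simpa using this

lemma gl0_le_dval (hb : 3 ≤ b) {d : ℕ → ℕ} (hd : Valid b d) : gl b 0 ≤ dval b d := by
  have := le_tl hb hd 0
  rwa [← dval_eq_tl0 hb (fun i => (hd i).2)] at this

/-- the digit set as dval image -/
lemma mem_digitSet_iff (hb : 3 ≤ b) (x : ℝ) :
    x ∈ digitSet b {n : ℕ | 1 ≤ n ∧ n ≤ b - 1} ↔ ∃ d, Valid b d ∧ x = dval b d := by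
  rfl

/-- first-difference comparison: if digits agree below j and f j > e j, then
`dval e + gl (j+1) ≤ dval f`. -/
lemma compare_ge (hb : 3 ≤ b) {e f : ℕ → ℕ} (he : ∀ i, e i ≤ b - 1) (hf : Valid b f)
    (j : ℕ) (hpre : ∀ i < j, f i = e i) (hj : e j < f j) :
    dval b e + gl b (j+1) ≤ dval b f := by
  have hfle : ∀ i, f i ≤ b - 1 := fun i => (hf i).2
  rw [dval_split hb he (j+1), dval_split hb hfle (j+1)]
  have hP : P b f (j+1) = P b e (j+1) + ((f j : ℝ) - (e j : ℝ)) / (b:ℝ)^(j+1) := by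
    rw [P, P, Finset.sum_range_succ, Finset.sum_range_succ]
    have heq : ∑ i ∈ range j, trm b f i = ∑ i ∈ range j, trm b e i := by
      apply Finset.sum_congr rfl
      intro i hi
      rw [trm, trm, hpre i (mem_range.1 hi)]
    rw [heq, trm, trm]
    ring
  have h1 : (1:ℝ) / (b:ℝ)^(j+1) ≤ ((f j : ℝ) - (e j : ℝ)) / (b:ℝ)^(j+1) := by
    apply div_le_div_of_nonneg_right _ (le_of_lt (pow_pos (hbpos hb) _))
    have : (e j : ℝ) + 1 ≤ (f j : ℝ) := by exact_mod_cast hj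
    linarith
  have h2 : gl b (j+1) ≤ tl b f (j+1) := le_tl hb hf (j+1)
  have h3 : tl b e (j+1) ≤ ((b:ℝ)^(j+1))⁻¹ := tl_le hb he (j+1)
  have h4 : (1:ℝ) / (b:ℝ)^(j+1) = ((b:ℝ)^(j+1))⁻¹ := one_div _
  rw [P, P] at hP
  rw [hP]
  linarith

/-- first-difference comparison, decreasing case -/
lemma compare_lt (hb : 3 ≤ b) {e f : ℕ → ℕ} (he : Valid b e) (hf : ∀ i, f i ≤ b - 1)
    (j : ℕ) (hpre : ∀ i < j, f i = e i) (hj : f j < e j) :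
    dval b f < dval b e := by
  have := compare_ge hb hf he j (fun i hi => (hpre i hi).symm) hj
  have := gl_pos hb (j+1)
  linarith

/-- If e has all digits `b-1` after position k, then no valid point lies in
`(dval e, dval e + gl (k+1))`. -/
lemma gapEmpty (hb : 3 ≤ b) {e f : ℕ → ℕ} (he : Valid b e)
    (hek : ∀ i, k < i → e i = b - 1) (hf : Valid b f) (hlt : dval b e < dval b f) :
    dval b e + gl b (k+1) ≤ dval b f := by
  by_cases hall : ∀ i, f i = e i
  · have : dval b f = dval b e := by
      unfold dval
      exact tsum_congr (fun i => by rw [trm, trm, hall i])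
    linarith
  · push_neg at hall
    have hex : ∃ i, f i ≠ e i := hall
    classical
    set j := Nat.find hex with hjdef
    have hji : f j ≠ e j := Nat.find_spec hex
    have hpre : ∀ i < j, f i = e i := by
      intro i hi
      by_contra hne
      have : j ≤ i := Nat.find_le hne
      omega
    rcases lt_trichotomy (f j) (e j) with h | h | h
    · exact absurd (compare_lt hb he (fun i => (hf i).2) j hpre h) (by linarith)
    · exact absurd h hji
    · have hjk : j ≤ k := by
        by_contra hgt
        have hj2 : e j = b - 1 := hek j (by omega)
        have := (hf j).2
        omega
      have := compare_ge hb (fun i => (he i).2) hf j hpre h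
      have := gl_anti hb (Nat.succ_le_succ hjk)
      linarith

/-- abbreviation for the Cantor set -/
noncomputable def CS (b : ℕ) : Set ℝ := digitSet b {n : ℕ | 1 ≤ n ∧ n ≤ b - 1}

lemma dval_mem (hd : Valid b d) : dval b d ∈ CS b := ⟨d, hd, rfl⟩

lemma mem_CS_iff (x : ℝ) : x ∈ CS b ↔ ∃ d, Valid b d ∧ x = dval b d := Iff.rfl

lemma top_valid (hb : 3 ≤ b) : Valid b (fun _ => b - 1) := by
  intro i
  refine ⟨?_, le_refl _⟩
  show 1 ≤ b - 1
  omega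

lemma ones_valid (hb : 3 ≤ b) : Valid b (fun _ => 1) := by
  intro i
  refine ⟨le_refl _, ?_⟩
  show 1 ≤ b - 1
  omega

lemma dval_top (hb : 3 ≤ b) : dval b (fun _ => b - 1) = 1 := by
  rw [dval_eq_tl0 hb (fun _ => le_refl _), tl_const hb, bm1_cast hb, bm1_gl hb]
  simp

lemma dval_ones (hb : 3 ≤ b) : dval b (fun _ => 1) = gl b 0 := by
  rw [dval_eq_tl0 hb (fun _ => by omega), tl_const hb]
  simp

lemma CS_bddBelow (hb : 3 ≤ b) : BddBelow (CS b) := by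
  refine ⟨gl b 0, fun x hx => ?_⟩
  obtain ⟨d, hd, rfl⟩ := hx
  exact gl0_le_dval hb hd

lemma CS_bddAbove (hb : 3 ≤ b) : BddAbove (CS b) := by
  refine ⟨1, fun x hx => ?_⟩
  obtain ⟨d, hd, rfl⟩ := hx
  exact dval_le_one hb (fun i => (hd i).2)

lemma sInf_CS (hb : 3 ≤ b) : sInf (CS b) = gl b 0 := by
  apply le_antisymm
  · apply csInf_le (CS_bddBelow hb)
    rw [← dval_ones hb]
    exact dval_mem (ones_valid hb)
  · apply le_csInf ⟨1, by rw [← dval_top hb]; exact dval_mem (top_valid hb)⟩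
    rintro x ⟨d, hd, rfl⟩
    exact gl0_le_dval hb hd

lemma sSup_CS (hb : 3 ≤ b) : sSup (CS b) = 1 := by
  apply le_antisymm
  · apply csSup_le ⟨1, by rw [← dval_top hb]; exact dval_mem (top_valid hb)⟩
    rintro x ⟨d, hd, rfl⟩
    exact dval_le_one hb (fun i => (hd i).2)
  · apply le_csSup (CS_bddAbove hb)
    rw [← dval_top hb]
    exact dval_mem (top_valid hb)

lemma gl_step (hb : 3 ≤ b) (m : ℕ) : gl b m - gl b (m+1) = ((b:ℝ)^(m+1))⁻¹ := by
  have h0 : (b:ℝ) ≠ 0 := ne_of_gt (hbpos hb)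
  have h1 : (b:ℝ) - 1 ≠ 0 := ne_of_gt (hbm1 hb)
  have h2 : (b:ℝ)^m ≠ 0 := pow_ne_zero _ h0
  rw [gl, gl, pow_succ]
  field_simp

lemma glsum (hb : 3 ≤ b) {m n : ℕ} (h : m ≤ n) :
    ∑ i ∈ Finset.Ico m n, ((b:ℝ)^(i+1))⁻¹ = gl b m - gl b n := by
  induction n with
  | zero =>
    have : m = 0 := by omega
    subst this; simp
  | succ n ih =>
    rcases Nat.lt_or_ge m (n+1) with h2 | h2
    · have hmn : m ≤ n := by omega
      rw [Finset.sum_Ico_succ_top hmn, ih hmn, ← gl_step hb n]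
      ring
    · have : m = n + 1 := by omega
      subst this; simp

lemma P_update_succ (hb : 3 ≤ b) (e : ℕ → ℕ) (k m : ℕ) :
    P b (Function.update e k m) (k+1) = P b e (k+1) + ((m:ℝ) - (e k : ℝ)) * ((b:ℝ)^(k+1))⁻¹ := by
  rw [P, P, Finset.sum_range_succ, Finset.sum_range_succ]
  have heq : ∑ i ∈ Finset.range k, trm b (Function.update e k m) i
      = ∑ i ∈ Finset.range k, trm b e i := by
    apply Finset.sum_congr rfl
    intro i hi
    have hik := Finset.mem_range.1 hi
    rw [trm, trm, Function.update_of_ne (by omega : i ≠ k)]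
  rw [heq, trm, trm, Function.update_self]
  field_simp
  ring

/-- the left endpoint of the standard gap with prefix `e` (through position `k`) -/
noncomputable def gapA (b : ℕ) (e : ℕ → ℕ) (k : ℕ) : ℝ := P b e (k+1) + ((b:ℝ)^(k+1))⁻¹

lemma gapA_eq_dval (hb : 3 ≤ b) {e : ℕ → ℕ} {k : ℕ} (he : ∀ i ≤ k, 1 ≤ e i ∧ e i ≤ b - 1) :
    gapA b e k = dval b (exS e k (b - 1)) := by
  rw [dval_exS hb e k (b-1) (le_refl _) (fun i hi => (he i hi).2), gapA, bm1_cast hb, bm1_gl hb]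

lemma gapC_eq_dval (hb : 3 ≤ b) {e : ℕ → ℕ} {k : ℕ} (he : ∀ i ≤ k, 1 ≤ e i ∧ e i ≤ b - 1)
    (hek : e k ≤ b - 2) :
    gapA b e k + gl b (k+1) = dval b (exS (Function.update e k (e k + 1)) k 1) := by
  have hup : ∀ i ≤ k, Function.update e k (e k + 1) i ≤ b - 1 := by
    intro i hi
    rcases eq_or_ne i k with rfl | hne
    · rw [Function.update_self]; omega
    · rw [Function.update_of_ne hne]; exact (he i hi).2
  have h1b : (1:ℕ) ≤ b - 1 := by omega
  rw [dval_exS hb (Function.update e k (e k + 1)) k 1 h1b hup,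
    P_update_succ hb e k (e k + 1), gapA]
  have hc : ((e k + 1 : ℕ) : ℝ) - (e k : ℝ) = 1 := by push_cast; ring
  rw [hc]
  push_cast
  ring

lemma isGap_std (hb : 3 ≤ b) {e : ℕ → ℕ} {k : ℕ} (he : ∀ i ≤ k, 1 ≤ e i ∧ e i ≤ b - 1)
    (hek : e k ≤ b - 2) :
    IsGap (CS b) (gapA b e k) (gapA b e k + gl b (k+1)) := by
  have hexv : Valid b (exS e k (b - 1)) := exS_valid hb he ⟨by omega, le_refl _⟩
  refine ⟨by linarith [gl_pos hb (k+1)], ?_, ?_, ?_⟩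
  · rw [gapA_eq_dval hb he]; exact dval_mem hexv
  · rw [gapC_eq_dval hb he hek]
    apply dval_mem
    apply exS_valid hb _ ⟨le_refl _, by omega⟩
    intro i hi
    rcases eq_or_ne i k with rfl | hne
    · rw [Function.update_self]; constructor <;> omega
    · rw [Function.update_of_ne hne]; exact he i hi
  · ext y
    simp only [Set.mem_inter_iff, Set.mem_Ioo, Set.mem_empty_iff_false, iff_false, not_and]
    rintro ⟨hy1, hy2⟩ hy3
    obtain ⟨f, hf, hfe⟩ := hy3
    have hfv : Valid b f := hf
    have hfe' : y = dval b f := hfe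
    rw [hfe'] at hy1 hy2
    have htail : ∀ i, k < i → exS e k (b-1) i = b - 1 := by
      intro i hi; rw [exS, if_neg (by omega)]
    rw [gapA_eq_dval hb he] at hy1 hy2
    have := gapEmpty hb hexv htail hfv hy1
    linarith

lemma zNext_mem (hb : 3 ≤ b) {f : ℕ → ℕ} (hf : ∀ i ≤ j, 1 ≤ f i ∧ f i ≤ b - 1)
    (hfj : f j ≤ b - 2) : gapA b f j + gl b (j+1) ∈ CS b := by
  rw [gapC_eq_dval hb hf hfj]
  apply dval_mem
  apply exS_valid hb _ ⟨le_refl _, by omega⟩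
  intro i hi
  rcases eq_or_ne i j with rfl | hne
  · rw [Function.update_self]; have := hf i (le_refl _); constructor <;> omega
  · rw [Function.update_of_ne hne]; exact hf i hi

lemma zNext_bounds (hb : 3 ≤ b) {f : ℕ → ℕ} (hf : Valid b f) (j : ℕ) :
    dval b f < gapA b f j + gl b (j+1) ∧
      gapA b f j + gl b (j+1) ≤ dval b f + ((b:ℝ)^(j+1))⁻¹ := by
  have hsplit := dval_split hb (fun i => (hf i).2) (j+1)
  have h1 : gl b (j+1) ≤ tl b f (j+1) := le_tl hb hf (j+1)
  have h2 : tl b f (j+1) ≤ ((b:ℝ)^(j+1))⁻¹ := tl_le hb (fun i => (hf i).2) (j+1)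
  have hP : P b f (j+1) = ∑ i ∈ Finset.range (j+1), trm b f i := rfl
  rw [gapA]
  constructor
  · rw [hsplit, ← hP]
    have := gl_pos hb (j+1)
    linarith
  · rw [hsplit, ← hP]
    linarith

lemma dval_eq_of_tail_top (hb : 3 ≤ b) {e : ℕ → ℕ} {k : ℕ} (he : Valid b e)
    (htail : ∀ i, k < i → e i = b - 1) : dval b e = dval b (exS e k (b-1)) := by
  apply tsum_congr
  intro i
  rw [trm, trm, exS]
  split
  · rfl
  · rw [htail i (by omega)]

lemma gap_class (hb : 3 ≤ b) {a c : ℝ} (h : IsGap (CS b) a c) :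
    ∃ k e, Valid b e ∧ e k ≤ b - 2 ∧ a = gapA b e k ∧ c = gapA b e k + gl b (k+1) := by
  obtain ⟨hlt, ha, hc, hempty⟩ := h
  obtain ⟨e₀, he₀', hae⟩ := ha
  have he₀ : Valid b e₀ := he₀'
  have hae' : a = dval b e₀ := hae
  obtain ⟨f₀, hf₀', hcf⟩ := hc
  have hf₀ : Valid b f₀ := hf₀'
  have hcf' : c = dval b f₀ := hcf
  have hc1 : c ≤ 1 := by rw [hcf']; exact dval_le_one hb (fun i => (hf₀ i).2)
  have hnotin : ∀ z ∈ CS b, a < z → c ≤ z := by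
    intro z hz h1
    by_contra h2
    push_neg at h2
    have : z ∈ Set.Ioo a c ∩ CS b := ⟨⟨h1, h2⟩, hz⟩
    rw [hempty] at this
    exact this
  -- S nonempty
  have hSne : ∃ j, e₀ j ≤ b - 2 := by
    by_contra hall
    push_neg at hall
    have : ∀ i, e₀ i = b - 1 := by
      intro i; have h1 := (he₀ i).2; have h2 := hall i; omega
    have : a = 1 := by
      rw [hae', ← dval_top hb]
      exact tsum_congr (fun i => by rw [trm, trm, this i])
    linarith
  -- S bounded
  have hSbd : ∃ N, ∀ j, N < j → ¬ (e₀ j ≤ b - 2) := by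
    by_contra hub
    push_neg at hub
    have hca : 0 < c - a := by linarith
    have hinv : (0:ℝ) < (b:ℝ)⁻¹ ∧ (b:ℝ)⁻¹ < 1 := by
      constructor
      · exact inv_pos.2 (hbpos hb)
      · exact inv_lt_one_of_one_lt₀ (hb1 hb)
    obtain ⟨n, hn⟩ := exists_pow_lt_of_lt_one hca hinv.2
    obtain ⟨j, hjn, hjS⟩ := hub n
    -- z := zNext e₀ j
    have hval : ∀ i ≤ j, 1 ≤ e₀ i ∧ e₀ i ≤ b - 1 := fun i _ => he₀ i
    have hzmem := zNext_mem hb hval hjS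
    have hzb := zNext_bounds hb he₀ j
    have hpow : ((b:ℝ)^(j+1))⁻¹ ≤ ((b:ℝ)⁻¹)^n := by
      rw [← inv_pow]
      apply pow_le_pow_of_le_one (le_of_lt hinv.1) (le_of_lt hinv.2)
      omega
    have hz1 : a < gapA b e₀ j + gl b (j+1) := by rw [hae']; exact hzb.1
    have hz2 : gapA b e₀ j + gl b (j+1) < c := by
      have := hzb.2
      rw [← hae'] at this
      linarith
    have := hnotin _ hzmem hz1
    linarith
  obtain ⟨N, hN⟩ := hSbd
  obtain ⟨j₀, hj₀⟩ := hSne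
  have hj₀N : j₀ ≤ N := by
    by_contra h2
    exact hN j₀ (by omega) hj₀
  set k := Nat.findGreatest (fun j => e₀ j ≤ b - 2) N with hk
  have hkS : e₀ k ≤ b - 2 := by rw [hk]; exact Nat.findGreatest_spec (P := fun j => e₀ j ≤ b - 2) hj₀N hj₀
  have hkmax : ∀ i, k < i → e₀ i = b - 1 := by
    intro i hi
    have h1 := (he₀ i).2
    rcases Nat.lt_or_ge N i with h2 | h2
    · have := hN i h2; omega
    · have := Nat.findGreatest_is_greatest (hk ▸ hi) h2
      omega
  refine ⟨k, e₀, he₀, hkS, ?_, ?_⟩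
  · rw [hae', dval_eq_of_tail_top hb he₀ hkmax, gapA_eq_dval hb (fun i _ => he₀ i)]
  · -- c = a + gl
    have hage : a = gapA b e₀ k := by
      rw [hae', dval_eq_of_tail_top hb he₀ hkmax, gapA_eq_dval hb (fun i _ => he₀ i)]
    have heq : dval b e₀ = gapA b e₀ k := by rw [← hae', hage]
    have hzb := zNext_bounds hb he₀ k
    have hle : c ≤ gapA b e₀ k + gl b (k+1) := by
      have hzmem := zNext_mem hb (fun i _ => he₀ i) hkS
      have hz1 : a < gapA b e₀ k + gl b (k+1) := by
        rw [hae', heq]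
        have := gl_pos hb (k+1)
        linarith
      exact hnotin _ hzmem hz1
    have hge : gapA b e₀ k + gl b (k+1) ≤ c := by
      have hcd : dval b e₀ < dval b f₀ := by rw [← hae', ← hcf']; exact hlt
      have h2 := gapEmpty hb he₀ hkmax hf₀ hcd
      rw [hcf']
      linarith
    linarith

lemma P_nat (hb : 3 ≤ b) (d : ℕ → ℕ) (n : ℕ) : ∃ N : ℕ, P b d n * (b:ℝ)^n = N := by
  induction n with
  | zero => exact ⟨0, by simp [P]⟩
  | succ n ih =>
    obtain ⟨N, hN⟩ := ih
    refine ⟨N * b + d n, ?_⟩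
    have hP : P b d (n+1) = P b d n + trm b d n := Finset.sum_range_succ _ _
    have hbne : (b:ℝ) ≠ 0 := ne_of_gt (hbpos hb)
    have hpne : (b:ℝ)^(n+1) ≠ 0 := pow_ne_zero _ hbne
    rw [hP, trm, add_mul, div_mul_cancel₀ _ hpne, pow_succ, ← mul_assoc, hN]
    push_cast
    ring

lemma pow_inv_lt_gl (hb : 3 ≤ b) (k : ℕ) : ((b:ℝ)^(k+2))⁻¹ < gl b (k+1) := by
  rw [gl]
  have h0 := hbpos hb
  have h1 := hbm1 hb
  have h2 : (0:ℝ) < (b:ℝ)^(k+1) := pow_pos h0 _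
  rw [pow_succ ((b:ℝ)) (k+1), mul_inv, mul_comm (((b:ℝ)^(k+1))⁻¹) (((b:ℝ))⁻¹)]
  apply mul_lt_mul_of_pos_right _ (inv_pos.2 h2)
  apply inv_strictAnti₀ h1
  linarith

lemma piece_density (hb : 3 ≤ b) {e : ℕ → ℕ} {k : ℕ} (he : ∀ i ≤ k, 1 ≤ e i ∧ e i ≤ b - 1)
    {x : ℝ} (hx : x ∈ CS b) (hx1 : P b e (k+1) + gl b (k+1) ≤ x) (hx2 : x < gapA b e k) :
    ∃ z ∈ CS b, x < z ∧ z < x + gl b (k+1) := by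
  obtain ⟨f, hf', hxf⟩ := hx
  have hf : Valid b f := hf'
  have hxf' : x = dval b f := hxf
  by_cases h : ∃ i, k < i ∧ f i ≤ b - 2
  · obtain ⟨j, hjk, hj2⟩ := h
    refine ⟨gapA b f j + gl b (j+1), zNext_mem hb (fun i _ => hf i) hj2, ?_, ?_⟩
    · rw [hxf']; exact (zNext_bounds hb hf j).1
    · have h2 := (zNext_bounds hb hf j).2
      have h3 : ((b:ℝ)^(j+1))⁻¹ ≤ ((b:ℝ)^(k+2))⁻¹ := by
        apply inv_anti₀ (pow_pos (hbpos hb) _)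
        apply pow_le_pow_right₀ (le_of_lt (hb1 hb))
        omega
      have h4 := pow_inv_lt_gl hb k
      rw [hxf']
      linarith
  · push_neg at h
    have htail : ∀ i, k < i → f i = b - 1 := by
      intro i hi
      have h1 := (hf i).2
      have h2 := h i hi
      omega
    have hxg : x = gapA b f k := by
      rw [hxf', dval_eq_of_tail_top hb hf htail, gapA_eq_dval hb (fun i _ => hf i)]
    exfalso
    obtain ⟨N, hN⟩ := P_nat hb f (k+1)
    obtain ⟨M, hM⟩ := P_nat hb e (k+1)
    have hpow : (0:ℝ) < (b:ℝ)^(k+1) := pow_pos (hbpos hb) _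
    have hNM : (N:ℝ) < M := by
      have hPP : P b f (k+1) < P b e (k+1) := by
        rw [hxg, gapA] at hx2
        rw [gapA] at hx2
        linarith
      calc (N:ℝ) = P b f (k+1) * (b:ℝ)^(k+1) := hN.symm
        _ < P b e (k+1) * (b:ℝ)^(k+1) := by exact mul_lt_mul_of_pos_right hPP hpow
        _ = M := hM
    have hNM' : N + 1 ≤ M := by exact_mod_cast hNM
    have hstep : P b f (k+1) + ((b:ℝ)^(k+1))⁻¹ ≤ P b e (k+1) := by
      have h1 : ((N:ℝ) + 1) ≤ (M:ℝ) := by exact_mod_cast hNM'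
      have h2 : (P b f (k+1) + ((b:ℝ)^(k+1))⁻¹) * (b:ℝ)^(k+1) = (N:ℝ) + 1 := by
        rw [add_mul, hN, inv_mul_cancel₀ (ne_of_gt hpow)]
      have h3 : P b e (k+1) * (b:ℝ)^(k+1) = M := hM
      nlinarith
    rw [hxg, gapA] at hx1
    have := gl_pos hb (k+1)
    linarith

lemma gl_le_pow_inv (hb : 3 ≤ b) (m : ℕ) : gl b m ≤ ((b:ℝ)^m)⁻¹ := by
  rw [gl]
  have h2 : (0:ℝ) < ((b:ℝ)^m)⁻¹ := inv_pos.2 (pow_pos (hbpos hb) _)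
  have h3 : ((b:ℝ) - 1)⁻¹ ≤ 1 := by
    rw [inv_le_one_iff₀]
    right
    have := hb1 hb
    have : (3:ℝ) ≤ (b:ℝ) := by exact_mod_cast hb
    linarith
  nlinarith

lemma tPt_eq_dval (hb : 3 ≤ b) {e : ℕ → ℕ} {k : ℕ} (he : ∀ i ≤ k, 1 ≤ e i ∧ e i ≤ b - 1) :
    P b e (k+1) + gl b (k+1) = dval b (exS e k 1) := by
  rw [dval_exS hb e k 1 (by omega) (fun i hi => (he i hi).2), Nat.cast_one, one_mul]

lemma tPt_mem (hb : 3 ≤ b) {e : ℕ → ℕ} {k : ℕ} (he : ∀ i ≤ k, 1 ≤ e i ∧ e i ≤ b - 1) :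
    P b e (k+1) + gl b (k+1) ∈ CS b := by
  rw [tPt_eq_dval hb he]
  exact dval_mem (exS_valid hb he ⟨le_refl _, by omega⟩)

lemma gapA_mem (hb : 3 ≤ b) {e : ℕ → ℕ} {k : ℕ} (he : ∀ i ≤ k, 1 ≤ e i ∧ e i ≤ b - 1) :
    gapA b e k ∈ CS b := by
  rw [gapA_eq_dval hb he]
  exact dval_mem (exS_valid hb he ⟨by omega, le_refl _⟩)

lemma P_diff {e : ℕ → ℕ} {m n : ℕ} (h : m ≤ n) :
    P b e n - P b e m = ∑ i ∈ Finset.Ico m n, trm b e i := by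
  rw [P, P, Finset.sum_Ico_eq_sub _ h]

lemma upd_bounds {e : ℕ → ℕ} {j m n : ℕ} (hm : 1 ≤ m ∧ m ≤ b - 1)
    (he : ∀ i ≤ n, 1 ≤ e i ∧ e i ≤ b - 1) :
    ∀ i ≤ n, 1 ≤ Function.update e j m i ∧ Function.update e j m i ≤ b - 1 := by
  intro i hi
  rw [Function.update_apply]
  split_ifs
  · exact hm
  · exact he i hi

lemma leftPt_eq (hb : 3 ≤ b) {e : ℕ → ℕ} {k : ℕ} (he : Valid b e) (hek : e k ≤ b - 2) :
    leftPt (CS b) (gapA b e k) (gapA b e k + gl b (k+1)) = P b e (k+1) + gl b (k+1) := by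
  set a := gapA b e k with ha
  set t := P b e (k+1) + gl b (k+1) with ht
  have hta : t ≤ a := by
    rw [ht, ha, gapA]
    have := gl_le_pow_inv hb (k+1)
    linarith
  have htmem : t ∈ CS b := tPt_mem hb (fun i _ => he i)
  have hsub : (gapA b e k + gl b (k+1)) - a = gl b (k+1) := by rw [ha]; ring
  have htS : t ∈ {d : ℝ | d ≤ a ∧ (d = sInf (CS b) ∨
      ∃ c', (gapA b e k + gl b (k+1)) - a ≤ d - c' ∧ IsGap (CS b) c' d)} := by
    refine ⟨hta, ?_⟩
    by_cases hall : ∀ i ≤ k, e i = 1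
    · left
      rw [sInf_CS hb, ht, ← dval_ones hb, tPt_eq_dval hb (fun i _ => he i)]
      apply tsum_congr
      intro i
      rw [trm, trm, exS]
      split
      · rw [hall i (by assumption)]
      · rfl
    · right
      push_neg at hall
      obtain ⟨j₀, hj₀k, hj₀⟩ := hall
      have hj₀2 : 2 ≤ e j₀ := by have := (he j₀).1; omega
      set j := Nat.findGreatest (fun i => 2 ≤ e i) k with hj
      have hjS : 2 ≤ e j := by
        rw [hj]; exact Nat.findGreatest_spec (P := fun i => 2 ≤ e i) hj₀k hj₀2
      have hjk : j ≤ k := by rw [hj]; exact Nat.findGreatest_le k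
      have hjmax : ∀ i, j < i → i ≤ k → e i = 1 := by
        intro i h1 h2
        have h3 := Nat.findGreatest_is_greatest (hj ▸ h1) h2
        simp only [not_le] at h3
        have := (he i).1
        omega
      set e₂ := Function.update e j (e j - 1) with he₂
      have he₂v : ∀ i ≤ j, 1 ≤ e₂ i ∧ e₂ i ≤ b - 1 := by
        rw [he₂]
        exact upd_bounds ⟨by have := (he j).2; omega, by have := (he j).2; omega⟩
          (fun i hi => he i)
      have he₂j : e₂ j ≤ b - 2 := by
        rw [he₂, Function.update_self]
        have := (he j).2
        omega
      have hgap := isGap_std hb he₂v he₂j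
      have hPe₂ : gapA b e₂ j = P b e (j+1) := by
        rw [gapA, he₂, P_update_succ hb e j (e j - 1)]
        have hc : ((e j - 1 : ℕ) : ℝ) - (e j : ℝ) = -1 := by
          rw [Nat.cast_sub (by omega), Nat.cast_one]
          ring
        rw [hc]
        ring
      have hteq : gapA b e₂ j + gl b (j+1) = t := by
        rw [hPe₂, ht]
        have hdiff : P b e (k+1) - P b e (j+1) = gl b (j+1) - gl b (k+1) := by
          rw [P_diff (by omega : j+1 ≤ k+1), ← glsum hb (by omega : j+1 ≤ k+1)]
          apply Finset.sum_congr rfl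
          intro i hi
          have hmem := Finset.mem_Ico.1 hi
          rw [trm, hjmax i (by omega) (by omega), Nat.cast_one, one_div]
        linarith
      refine ⟨gapA b e₂ j, ?_, ?_⟩
      · rw [hsub]
        have h5 : t - gapA b e₂ j = gl b (j+1) := by linarith
        rw [h5]
        exact gl_anti hb (by omega)
      · rw [← hteq]
        exact hgap
  apply le_antisymm
  · apply csSup_le ⟨t, htS⟩
    rintro d ⟨hda, hcase⟩
    rcases hcase with hinf | ⟨c', hlen, hgap'⟩
    · rw [hinf]
      exact csInf_le (CS_bddBelow hb) htmem
    · by_contra hdt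
      push_neg at hdt
      obtain ⟨hltcd, hc'mem, hdmem, hempty'⟩ := hgap'
      rw [hsub] at hlen
      have htc' : t ≤ c' := by
        by_contra h2
        push_neg at h2
        have : t ∈ Set.Ioo c' d ∩ CS b := ⟨⟨h2, hdt⟩, htmem⟩
        rw [hempty'] at this
        exact this
      have hc'a : c' < a := lt_of_lt_of_le hltcd hda
      obtain ⟨z, hzmem, hz1, hz2⟩ := piece_density hb (fun i _ => he i) hc'mem
        (by rw [← ht]; exact htc') (by rw [← ha]; exact hc'a)
      have : z ∈ Set.Ioo c' d ∩ CS b := ⟨⟨hz1, by linarith⟩, hzmem⟩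
      rw [hempty'] at this
      exact this
  · apply le_csSup _ htS
    refine ⟨a, ?_⟩
    rintro d ⟨hda, _⟩
    exact hda

lemma rightPt_eq (hb : 3 ≤ b) {e : ℕ → ℕ} {k : ℕ} (he : Valid b e) (hek : e k ≤ b - 2) :
    rightPt (CS b) (gapA b e k) (gapA b e k + gl b (k+1)) =
      gapA b (Function.update e k (e k + 1)) k := by
  set a := gapA b e k with ha
  set c := gapA b e k + gl b (k+1) with hc
  set e' := Function.update e k (e k + 1) with he'
  have he'v : ∀ i ≤ k, 1 ≤ e' i ∧ e' i ≤ b - 1 := by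
    rw [he']
    exact upd_bounds ⟨by omega, by have := (he k).2; omega⟩ (fun i _ => he i)
  have hPe' : P b e' (k+1) = P b e (k+1) + ((b:ℝ)^(k+1))⁻¹ := by
    rw [he', P_update_succ hb e k (e k + 1)]
    have hcc : ((e k + 1 : ℕ) : ℝ) - (e k : ℝ) = 1 := by push_cast; ring
    rw [hcc, one_mul]
  set t' := gapA b e' k with ht'
  have ht'val : t' = P b e (k+1) + ((b:ℝ)^(k+1))⁻¹ + ((b:ℝ)^(k+1))⁻¹ := by
    rw [ht', gapA, hPe']
  have hcval : c = P b e' (k+1) + gl b (k+1) := by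
    rw [hc, hPe', gapA]
  have hct' : c ≤ t' := by
    rw [hcval, ht', gapA]
    have := gl_le_pow_inv hb (k+1)
    linarith
  have ht'mem : t' ∈ CS b := gapA_mem hb he'v
  have hsub : c - a = gl b (k+1) := by rw [hc]; ring
  have ht'S : t' ∈ {y : ℝ | c ≤ y ∧ (y = sSup (CS b) ∨
      ∃ f, c - a ≤ f - y ∧ IsGap (CS b) y f)} := by
    refine ⟨hct', ?_⟩
    by_cases hall : ∀ i ≤ k, e' i = b - 1
    · left
      rw [sSup_CS hb, ht', gapA_eq_dval hb he'v, ← dval_top hb]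
      apply tsum_congr
      intro i
      rw [trm, trm, exS]
      split
      · rw [hall i (by assumption)]
      · rfl
    · right
      push_neg at hall
      obtain ⟨j₀, hj₀k, hj₀⟩ := hall
      have hj₀2 : e' j₀ ≤ b - 2 := by have := (he'v j₀ hj₀k).2; omega
      set j := Nat.findGreatest (fun i => e' i ≤ b - 2) k with hj
      have hjS : e' j ≤ b - 2 := by
        rw [hj]; exact Nat.findGreatest_spec (P := fun i => e' i ≤ b - 2) hj₀k hj₀2
      have hjk : j ≤ k := by rw [hj]; exact Nat.findGreatest_le k
      have hjmax : ∀ i, j < i → i ≤ k → e' i = b - 1 := by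
        intro i h1 h2
        have h3 := Nat.findGreatest_is_greatest (hj ▸ h1) h2
        simp only [not_le] at h3
        have := (he'v i h2).2
        omega
      have hgap := isGap_std hb (fun i hi => he'v i (le_trans hi hjk)) hjS
      have hteq : gapA b e' j = t' := by
        rw [ht', gapA, gapA]
        have hdiff : P b e' (k+1) - P b e' (j+1) =
            ((b:ℝ)^(j+1))⁻¹ - ((b:ℝ)^(k+1))⁻¹ := by
          rw [P_diff (by omega : j+1 ≤ k+1)]
          have hsum : ∑ i ∈ Finset.Ico (j+1) (k+1), trm b e' i
              = ∑ i ∈ Finset.Ico (j+1) (k+1), ((b:ℝ) - 1) * ((b:ℝ)^(i+1))⁻¹ := by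
            apply Finset.sum_congr rfl
            intro i hi
            have hmem := Finset.mem_Ico.1 hi
            rw [trm, hjmax i (by omega) (by omega), bm1_cast hb, div_eq_mul_inv]
          rw [hsum, ← Finset.mul_sum, glsum hb (by omega : j+1 ≤ k+1), mul_sub,
            bm1_gl hb, bm1_gl hb]
        linarith
      refine ⟨gapA b e' j + gl b (j+1), ?_, ?_⟩
      · rw [hsub, hteq]
        have h5 : gapA b e' j + gl b (j+1) - t' = gl b (j+1) := by rw [hteq]; ring
        rw [hteq] at h5
        rw [h5]
        exact gl_anti hb (by omega)
      · rw [← hteq]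
        exact hgap
  apply le_antisymm
  · apply csInf_le _ ht'S
    refine ⟨c, ?_⟩
    rintro y ⟨hcy, _⟩
    exact hcy
  · apply le_csInf ⟨t', ht'S⟩
    rintro y ⟨hcy, hcase⟩
    rcases hcase with hsup | ⟨f, hlen, hgap'⟩
    · rw [hsup, sSup_CS hb]
      rw [← sSup_CS hb]
      exact le_csSup (CS_bddAbove hb) ht'mem
    · by_contra hyt
      push_neg at hyt
      obtain ⟨hltyf, hymem, hfmem, hempty'⟩ := hgap'
      rw [hsub] at hlen
      have hft' : f ≤ t' := by
        by_contra h2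
        push_neg at h2
        have : t' ∈ Set.Ioo y f ∩ CS b := ⟨⟨hyt, h2⟩, ht'mem⟩
        rw [hempty'] at this
        exact this
      obtain ⟨z, hzmem, hz1, hz2⟩ := piece_density hb he'v hymem
        (by rw [← hcval]; exact hcy) (by rw [← ht']; exact hyt)
      have : z ∈ Set.Ioo y f ∩ CS b := ⟨⟨hz1, by linarith⟩, hzmem⟩
      rw [hempty'] at this
      exact this

lemma ratio_eq (hb : 3 ≤ b) {a c : ℝ} (h : IsGap (CS b) a c) :
    min (a - leftPt (CS b) a c) (rightPt (CS b) a c - c) / (c - a) = (b:ℝ) - 2 := by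
  obtain ⟨k, e, he, hek, hae, hce⟩ := gap_class hb h
  subst hae hce
  rw [leftPt_eq hb he hek, rightPt_eq hb he hek]
  have hPe' : P b (Function.update e k (e k + 1)) (k+1) = P b e (k+1) + ((b:ℝ)^(k+1))⁻¹ := by
    rw [P_update_succ hb e k (e k + 1)]
    have hcc : ((e k + 1 : ℕ) : ℝ) - (e k : ℝ) = 1 := by push_cast; ring
    rw [hcc, one_mul]
  have hinv : ((b:ℝ)^(k+1))⁻¹ = ((b:ℝ) - 1) * gl b (k+1) := (bm1_gl hb (k+1)).symm
  have hglne : gl b (k+1) ≠ 0 := ne_of_gt (gl_pos hb (k+1))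
  have h1 : gapA b e k - (P b e (k+1) + gl b (k+1)) = ((b:ℝ) - 2) * gl b (k+1) := by
    rw [gapA, hinv]; ring
  have h2 : gapA b (Function.update e k (e k + 1)) k - (gapA b e k + gl b (k+1))
      = ((b:ℝ) - 2) * gl b (k+1) := by
    rw [gapA, gapA, hPe', hinv]; ring
  have h3 : gapA b e k + gl b (k+1) - gapA b e k = gl b (k+1) := by ring
  rw [h1, h2, h3, min_self, mul_div_assoc, div_self hglne, mul_one]

lemma thickness_CS (hb : 3 ≤ b) : thickness (CS b) = (b:ℝ) - 2 := by
  have hset : {r : ℝ | ∃ a c : ℝ, IsGap (CS b) a c ∧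
      r = min (a - leftPt (CS b) a c) (rightPt (CS b) a c - c) / (c - a)}
      = {(b:ℝ) - 2} := by
    ext r
    constructor
    · rintro ⟨a, c, hgap, rfl⟩
      exact ratio_eq hb hgap
    · rintro hr
      rw [Set.mem_singleton_iff] at hr
      subst hr
      have honesv : ∀ i ≤ 0, 1 ≤ (fun _ : ℕ => 1) i ∧ (fun _ : ℕ => 1) i ≤ b - 1 := by
        intro i _
        refine ⟨le_refl _, ?_⟩
        show 1 ≤ b - 1
        omega
      have h0 : (fun _ : ℕ => 1) 0 ≤ b - 2 := by show 1 ≤ b - 2; omega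
      have hgap0 := isGap_std hb honesv h0
      exact ⟨_, _, hgap0, (ratio_eq hb hgap0).symm⟩
  rw [thickness, hset, csInf_singleton]

/-- For `b ≥ 3` and `B = {1, …, b-1}`, the normalized thickness of `A_b^B` is
`(b - 2) / (b - 1)`. -/
theorem normThickness_digitSet_nonzero (b : ℕ) (hb : 3 ≤ b) :
    normThickness (digitSet b {n : ℕ | 1 ≤ n ∧ n ≤ b - 1}) =
      ((b : ℝ) - 2) / ((b : ℝ) - 1) := by
  show normThickness (CS b) = _
  rw [normThickness, thickness_CS hb]
  congr 1
  ring
end Infra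
end

section
/- Let A_1, A_2, A_3 be Cantor sets in ℝ with S(A_1) + S(A_2) + S(A_3) ≥ 1. Let I_1, I_2, I_3 be their convex hulls and let g_1, g_2, g_3 be the lengths of their largest bounded gaps, and suppose min{|I_1|, |I_2|, |I_3|} > max{g_1, g_2, g_3}. Then there is a nonempty open set O ⊆ S² such that for every v ∈ O and every a ∈ ℝ: if the plane H_v(a) = {y ∈ ℝ³ : ⟨y, v⟩ = a} intersects I_1 × I_2 × I_3, then H_v(a) intersects A_1 × A_2 × A_3. -/
open scoped RealInnerProductSpace

namespace CantorAux


/-- basic facts -/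
lemma cantor_bddBelow {A : Set ℝ} (h : IsCantorSet A) : BddBelow A := h.2.1.bddBelow
lemma cantor_bddAbove {A : Set ℝ} (h : IsCantorSet A) : BddAbove A := h.2.1.bddAbove
lemma sInf_mem_cantor {A : Set ℝ} (h : IsCantorSet A) : sInf A ∈ A :=
  h.2.1.sInf_mem h.1
lemma sSup_mem_cantor {A : Set ℝ} (h : IsCantorSet A) : sSup A ∈ A :=
  h.2.1.sSup_mem h.1
lemma sInf_le_of_mem {A : Set ℝ} (h : IsCantorSet A) {x : ℝ} (hx : x ∈ A) : sInf A ≤ x :=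
  csInf_le (cantor_bddBelow h) hx
lemma le_sSup_of_mem {A : Set ℝ} (h : IsCantorSet A) {x : ℝ} (hx : x ∈ A) : x ≤ sSup A :=
  le_csSup (cantor_bddAbove h) hx



/-- In a Cantor set, between any two points there is a gap. -/
lemma exists_gap_between {A : Set ℝ} (h : IsCantorSet A) {l r : ℝ}
    (hl : l ∈ A) (hr : r ∈ A) (hlr : l < r) :
    ∃ a b, IsGap A a b ∧ l ≤ a ∧ b ≤ r := by
  -- find a point of Icc l r not in A
  have hni : ¬ (Set.Icc l r ⊆ A) := by
    intro hsub
    have := h.2.2.1 (Set.Icc l r) hsub isPreconnected_Icc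
    exact absurd (this (Set.left_mem_Icc.2 hlr.le) (Set.right_mem_Icc.2 hlr.le)) hlr.ne
  obtain ⟨z, hz, hzA⟩ := Set.not_subset.1 hni
  have hzl : l < z := lt_of_le_of_ne hz.1 (by rintro rfl; exact hzA hl)
  have hzr : z < r := lt_of_le_of_ne hz.2 (by rintro rfl; exact hzA hr)
  set a := sSup (A ∩ Set.Icc l z) with ha
  set b := sInf (A ∩ Set.Icc z r) with hb
  have hcl : IsCompact (A ∩ Set.Icc l z) := h.2.1.inter_right isClosed_Icc
  have hcr : IsCompact (A ∩ Set.Icc z r) := h.2.1.inter_right isClosed_Icc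
  have hnel : (A ∩ Set.Icc l z).Nonempty := ⟨l, hl, Set.left_mem_Icc.2 hzl.le⟩
  have hner : (A ∩ Set.Icc z r).Nonempty := ⟨r, hr, Set.right_mem_Icc.2 hzr.le⟩
  have haA : a ∈ A ∩ Set.Icc l z := hcl.sSup_mem hnel
  have hbA : b ∈ A ∩ Set.Icc z r := hcr.sInf_mem hner
  have haz : a < z := lt_of_le_of_ne haA.2.2 (by rintro h'; exact hzA (h' ▸ haA.1))
  have hzb : z < b := lt_of_le_of_ne hbA.2.1 (by rintro h'; exact hzA (h' ▸ hbA.1))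
  refine ⟨a, b, ⟨haz.trans hzb, haA.1, hbA.1, ?_⟩, haA.2.1, hbA.2.2⟩
  ext w; simp only [Set.mem_inter_iff, Set.mem_Ioo, Set.mem_empty_iff_false, iff_false]
  rintro ⟨⟨hwa, hwb⟩, hwA⟩
  rcases le_total w z with hwz | hwz
  · exact absurd (le_csSup hcl.bddAbove ⟨hwA, haA.2.1.trans hwa.le, hwz⟩) (not_le.2 hwa)
  · exact absurd (csInf_le hcr.bddBelow ⟨hwA, hwz, hwb.le.trans hbA.2.2⟩) (not_le.2 hwb)



variable {A : Set ℝ}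

lemma leftPt_le (h : IsCantorSet A) {a b : ℝ} (hg : IsGap A a b) : leftPt A a b ≤ a := by
  refine csSup_le ⟨sInf A, csInf_le h.2.1.bddBelow hg.2.1, Or.inl rfl⟩ (fun d hd => hd.1)

lemma le_leftPt (h : IsCantorSet A) {a b z : ℝ} (hg : IsGap A a b)
    (hz : z ≤ a ∧ (z = sInf A ∨ ∃ c, b - a ≤ z - c ∧ IsGap A c z)) : z ≤ leftPt A a b :=
  le_csSup ⟨a, fun d hd => hd.1⟩ hz

lemma le_rightPt (h : IsCantorSet A) {a b : ℝ} (hg : IsGap A a b) : b ≤ rightPt A a b := by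
  refine le_csInf ⟨sSup A, le_csSup h.2.1.bddAbove hg.2.2.1, Or.inl rfl⟩ (fun e he => he.1)

lemma rightPt_le (h : IsCantorSet A) {a b z : ℝ} (hg : IsGap A a b)
    (hz : b ≤ z ∧ (z = sSup A ∨ ∃ f, b - a ≤ f - z ∧ IsGap A z f)) : rightPt A a b ≤ z :=
  csInf_le ⟨b, fun e he => he.1⟩ hz

lemma ratio_nonneg (h : IsCantorSet A) {x : ℝ}
    (hx : x ∈ {r : ℝ | ∃ a b : ℝ, IsGap A a b ∧
      r = min (a - leftPt A a b) (rightPt A a b - b) / (b - a)}) : 0 ≤ x := by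
  obtain ⟨a, b, hg, rfl⟩ := hx
  have h1 : 0 ≤ a - leftPt A a b := sub_nonneg.2 (leftPt_le h hg)
  have h2 : 0 ≤ rightPt A a b - b := sub_nonneg.2 (le_rightPt h hg)
  exact div_nonneg (le_min h1 h2) (sub_nonneg.2 hg.1.le)

lemma thickness_nonneg (h : IsCantorSet A) : 0 ≤ thickness A :=
  Real.sInf_nonneg (fun _ hx => ratio_nonneg h hx)

lemma normThickness_nonneg (h : IsCantorSet A) : 0 ≤ normThickness A :=
  div_nonneg (thickness_nonneg h) (by linarith [thickness_nonneg h])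

lemma normThickness_lt_one (h : IsCantorSet A) : normThickness A < 1 := by
  have := thickness_nonneg h
  rw [normThickness, div_lt_one (by linarith)]; linarith

/-- `(1 - S) * (1 + C) = 1` -/
lemma one_sub_normThickness (h : IsCantorSet A) :
    (1 - normThickness A) * (1 + thickness A) = 1 := by
  have := thickness_nonneg h
  have h1 : thickness A + 1 ≠ 0 := by linarith
  rw [normThickness]; field_simp; ring

/-- `S * (1 + C) = C` -/
lemma normThickness_mul (h : IsCantorSet A) :
    normThickness A * (1 + thickness A) = thickness A := by
  have := thickness_nonneg h
  have h1 : thickness A + 1 ≠ 0 := by linarith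
  rw [normThickness]
  rw [div_mul_eq_mul_div, mul_comm, div_eq_iff h1]
  ring

/-- the key side estimate on the left -/
lemma left_side_ge (h : IsCantorSet A) {a b z : ℝ} (hg : IsGap A a b)
    (hz : z ≤ a) (hq : z = sInf A ∨ ∃ c, b - a ≤ z - c ∧ IsGap A c z) :
    thickness A * (b - a) ≤ a - z := by
  have hzl : z ≤ leftPt A a b := le_leftPt h hg ⟨hz, hq⟩
  have hmem : min (a - leftPt A a b) (rightPt A a b - b) / (b - a) ∈
      {r : ℝ | ∃ a b : ℝ, IsGap A a b ∧
        r = min (a - leftPt A a b) (rightPt A a b - b) / (b - a)} := ⟨a, b, hg, rfl⟩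
  have hle : thickness A ≤ min (a - leftPt A a b) (rightPt A a b - b) / (b - a) :=
    csInf_le ⟨0, fun _ hx => ratio_nonneg h hx⟩ hmem
  have hba : (0:ℝ) < b - a := sub_pos.2 hg.1
  have := (le_div_iff₀ hba).1 hle
  have : thickness A * (b - a) ≤ a - leftPt A a b := le_trans this (min_le_left _ _)
  linarith

/-- the key side estimate on the right -/
lemma right_side_ge (h : IsCantorSet A) {a b z : ℝ} (hg : IsGap A a b)
    (hz : b ≤ z) (hq : z = sSup A ∨ ∃ f, b - a ≤ f - z ∧ IsGap A z f) :
    thickness A * (b - a) ≤ z - b := by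
  have hzl : rightPt A a b ≤ z := rightPt_le h hg ⟨hz, hq⟩
  have hmem : min (a - leftPt A a b) (rightPt A a b - b) / (b - a) ∈
      {r : ℝ | ∃ a b : ℝ, IsGap A a b ∧
        r = min (a - leftPt A a b) (rightPt A a b - b) / (b - a)} := ⟨a, b, hg, rfl⟩
  have hle : thickness A ≤ min (a - leftPt A a b) (rightPt A a b - b) / (b - a) :=
    csInf_le ⟨0, fun _ hx => ratio_nonneg h hx⟩ hmem
  have hba : (0:ℝ) < b - a := sub_pos.2 hg.1
  have := (le_div_iff₀ hba).1 hle
  have : thickness A * (b - a) ≤ rightPt A a b - b := le_trans this (min_le_right _ _)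
  linarith

lemma isGap_le_largestGap (h : IsCantorSet A) {a b : ℝ} (hg : IsGap A a b) :
    b - a ≤ largestGap A := by
  have hbd : BddAbove {g : ℝ | ∃ a b : ℝ, IsGap A a b ∧ g = b - a} := by
    refine ⟨sSup A - sInf A, ?_⟩
    rintro g ⟨a', b', hg', rfl⟩
    have h1 := csInf_le h.2.1.bddBelow hg'.2.1
    have h2 := le_csSup h.2.1.bddAbove hg'.2.2.1
    linarith
  exact le_csSup hbd ⟨a, b, hg, rfl⟩

lemma largestGap_nonneg (h : IsCantorSet A) : 0 ≤ largestGap A := by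
  apply Real.sSup_nonneg
  rintro g ⟨a, b, hg, rfl⟩; linarith [hg.1]



/-- Lengths of gaps lying inside `[l, r]`. -/
def gapLens (A : Set ℝ) (l r : ℝ) : Set ℝ :=
  {g : ℝ | ∃ a b, IsGap A a b ∧ l ≤ a ∧ b ≤ r ∧ g = b - a}

/-- The length of the largest gap inside `[l, r]` (0 if there is none). -/
noncomputable def maxGapLen (A : Set ℝ) (l r : ℝ) : ℝ := sSup (gapLens A l r)

lemma gapLens_bddAbove (A : Set ℝ) (l r : ℝ) : BddAbove (gapLens A l r) := by
  refine ⟨r - l, ?_⟩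
  rintro g ⟨a, b, hg, h1, h2, rfl⟩
  have := hg.1; linarith

lemma maxGapLen_nonneg (A : Set ℝ) (l r : ℝ) : 0 ≤ maxGapLen A l r := by
  apply Real.sSup_nonneg
  rintro g ⟨a, b, hg, h1, h2, rfl⟩; linarith [hg.1]

lemma le_maxGapLen {A : Set ℝ} {l r a b : ℝ} (hg : IsGap A a b) (h1 : l ≤ a) (h2 : b ≤ r) :
    b - a ≤ maxGapLen A l r :=
  le_csSup (gapLens_bddAbove A l r) ⟨a, b, hg, h1, h2, rfl⟩

lemma maxGapLen_mono {A : Set ℝ} {l r l' r' : ℝ} (hl : l ≤ l') (hr : r' ≤ r) :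
    maxGapLen A l' r' ≤ maxGapLen A l r := by
  apply Real.sSup_le _ (maxGapLen_nonneg A l r)
  rintro g ⟨a, b, hg, h1, h2, rfl⟩
  exact le_maxGapLen hg (hl.trans h1) (h2.trans hr)

/-- two gaps sharing left endpoint are equal -/
lemma gap_right_unique {A : Set ℝ} {a b b' : ℝ} (h : IsGap A a b) (h' : IsGap A a b') :
    b = b' := by
  by_contra hne
  rcases lt_or_gt_of_ne hne with hlt | hlt
  · have : b ∈ Set.Ioo a b' ∩ A := ⟨⟨h.1, hlt⟩, h.2.2.1⟩
    rw [h'.2.2.2] at this; exact this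
  · have : b' ∈ Set.Ioo a b ∩ A := ⟨⟨h'.1, hlt⟩, h'.2.2.1⟩
    rw [h.2.2.2] at this; exact this

/-- distinct gaps have separated left endpoints -/
lemma gap_sep {A : Set ℝ} {a b a' b' : ℝ} (h : IsGap A a b) (h' : IsGap A a' b')
    (hne : a ≠ a') (hlt : a < a') : b - a ≤ a' - a := by
  -- show b ≤ a'
  have hb : b ≤ a' := by
    by_contra hc
    push_neg at hc
    have ha' : a' ∈ Set.Ioo a b ∩ A := ⟨⟨hlt, hc⟩, h'.2.1⟩
    rw [h.2.2.2] at ha'; exact ha'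
  linarith

lemma floor_sep {x y d : ℝ} (hd : 0 < d) (h : x + d ≤ y) : ⌊x/d⌋ < ⌊y/d⌋ := by
  have hfl := Int.floor_le (x/d)
  have hxy : x/d + 1 ≤ y/d := by
    have h2 : (x+d)/d ≤ y/d := by gcongr
    have h3 : (x+d)/d = x/d + 1 := by field_simp
    linarith
  have h1 : (⌊x/d⌋ : ℝ) + 1 ≤ y / d := by linarith
  have : (↑(⌊x/d⌋ + 1) : ℝ) ≤ y/d := by push_cast; linarith
  exact Int.lt_iff_add_one_le.2 (Int.le_floor.2 this)

/-- The set of gaps inside `[l,r]` with length at least `d > 0` is finite. -/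
lemma gaps_finite {A : Set ℝ} {l r d : ℝ} (hd : 0 < d) :
    {p : ℝ × ℝ | IsGap A p.1 p.2 ∧ l ≤ p.1 ∧ p.2 ≤ r ∧ d ≤ p.2 - p.1}.Finite := by
  set S := {p : ℝ × ℝ | IsGap A p.1 p.2 ∧ l ≤ p.1 ∧ p.2 ≤ r ∧ d ≤ p.2 - p.1} with hS
  have hinj : Set.InjOn (fun p : ℝ × ℝ => ⌊p.1 / d⌋) S := by
    rintro p hp q hq hpq
    simp only at hpq
    have hsep : p.1 = q.1 := by
      by_contra hne
      rcases lt_or_gt_of_ne hne with hlt | hlt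
      · have h1 : p.2 - p.1 ≤ q.1 - p.1 := gap_sep hp.1 hq.1 hne hlt
        have h2 : p.1 + d ≤ q.1 := by linarith [hp.2.2.2]
        exact absurd hpq (ne_of_lt (floor_sep hd h2))
      · have h1 : q.2 - q.1 ≤ p.1 - q.1 := gap_sep hq.1 hp.1 (Ne.symm hne) hlt
        have h2 : q.1 + d ≤ p.1 := by linarith [hq.2.2.2]
        exact absurd hpq.symm (ne_of_lt (floor_sep hd h2))
    have := gap_right_unique (hsep ▸ hp.1) hq.1
    exact Prod.ext hsep this
  have himg : ((fun p : ℝ × ℝ => ⌊p.1 / d⌋) '' S).Finite := by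
    apply Set.Finite.subset (Set.finite_Icc ⌊l/d⌋ ⌊r/d⌋)
    rintro z ⟨p, hp, rfl⟩
    constructor
    · exact Int.floor_le_floor ((div_le_div_iff_of_pos_right hd).2 hp.2.1)
    · exact Int.floor_le_floor ((div_le_div_iff_of_pos_right hd).2 (by linarith [hp.1.1, hp.2.2.1]))
  exact Set.Finite.of_finite_image himg hinj



lemma lt_of_maxGapLen_pos {A : Set ℝ} {l r : ℝ} (h : 0 < maxGapLen A l r) : l < r := by
  by_contra hc
  push_neg at hc
  have : gapLens A l r = ∅ := by
    ext g; simp only [gapLens, Set.mem_setOf_eq, Set.mem_empty_iff_false, iff_false]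
    rintro ⟨a, b, hg, h1, h2, rfl⟩
    have := hg.1; linarith
  rw [maxGapLen, this, Real.sSup_empty] at h
  exact absurd h (lt_irrefl 0)

lemma maxGapLen_attained {A : Set ℝ} (h : IsCantorSet A) {l r : ℝ}
    (hl : l ∈ A) (hr : r ∈ A) (hlr : l < r) :
    ∃ a b, IsGap A a b ∧ l ≤ a ∧ b ≤ r ∧ b - a = maxGapLen A l r := by
  obtain ⟨a₀, b₀, hg₀, h1₀, h2₀⟩ := exists_gap_between h hl hr hlr
  have hd₀ : 0 < b₀ - a₀ := sub_pos.2 hg₀.1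
  set B := {p : ℝ × ℝ | IsGap A p.1 p.2 ∧ l ≤ p.1 ∧ p.2 ≤ r ∧ b₀ - a₀ ≤ p.2 - p.1} with hB
  have hfin : B.Finite := gaps_finite hd₀
  have hne : ((a₀, b₀) : ℝ × ℝ) ∈ B := ⟨hg₀, h1₀, h2₀, le_refl _⟩
  have hfne : hfin.toFinset.Nonempty := ⟨(a₀, b₀), hfin.mem_toFinset.2 hne⟩
  obtain ⟨p, hp, hmax⟩ := Finset.exists_max_image hfin.toFinset (fun p => p.2 - p.1) hfne
  rw [Set.Finite.mem_toFinset] at hp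
  refine ⟨p.1, p.2, hp.1, hp.2.1, hp.2.2.1, le_antisymm ?_ ?_⟩
  · exact le_maxGapLen hp.1 hp.2.1 hp.2.2.1
  · apply Real.sSup_le _ (by linarith [hp.1.1] : (0:ℝ) ≤ p.2 - p.1)
    rintro g ⟨a, b, hg, h1, h2, rfl⟩
    rcases le_or_gt (b₀ - a₀) (b - a) with hc | hc
    · exact hmax (a, b) (hfin.mem_toFinset.2 ⟨hg, h1, h2, hc⟩)
    · have := hmax (a₀, b₀) (hfin.mem_toFinset.2 hne)
      simp only at this
      linarith

/-- a point of `A ∩ [l,r]` within `maxGapLen` of any point of `[l,r]` -/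
lemma exists_near {A : Set ℝ} (h : IsCantorSet A) {l r ξ : ℝ}
    (hl : l ∈ A) (hr : r ∈ A) (hξ : ξ ∈ Set.Icc l r) :
    ∃ x, x ∈ A ∧ x ∈ Set.Icc l r ∧ |x - ξ| ≤ maxGapLen A l r := by
  have hcl : IsCompact (A ∩ Set.Icc l ξ) := h.2.1.inter_right isClosed_Icc
  have hnel : (A ∩ Set.Icc l ξ).Nonempty := ⟨l, hl, Set.left_mem_Icc.2 hξ.1⟩
  set x := sSup (A ∩ Set.Icc l ξ) with hx
  have hxm : x ∈ A ∩ Set.Icc l ξ := hcl.sSup_mem hnel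
  rcases eq_or_lt_of_le hxm.2.2 with heq | hlt
  · refine ⟨x, hxm.1, ⟨hxm.2.1, by linarith [hξ.2]⟩, ?_⟩
    rw [heq, sub_self, abs_zero]; exact maxGapLen_nonneg A l r
  · -- x < ξ ; find next point
    have hcr : IsCompact (A ∩ Set.Icc ξ r) := h.2.1.inter_right isClosed_Icc
    have hner : (A ∩ Set.Icc ξ r).Nonempty := ⟨r, hr, Set.right_mem_Icc.2 hξ.2⟩
    set y := sInf (A ∩ Set.Icc ξ r) with hy
    have hym : y ∈ A ∩ Set.Icc ξ r := hcr.sInf_mem hner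
    have hgap : IsGap A x y := by
      refine ⟨lt_of_lt_of_le hlt hym.2.1, hxm.1, hym.1, ?_⟩
      ext w; simp only [Set.mem_inter_iff, Set.mem_Ioo, Set.mem_empty_iff_false, iff_false]
      rintro ⟨⟨hwx, hwy⟩, hwA⟩
      rcases le_total w ξ with hwz | hwz
      · exact absurd (le_csSup hcl.bddAbove ⟨hwA, hxm.2.1.trans hwx.le, hwz⟩) (not_le.2 hwx)
      · exact absurd (csInf_le hcr.bddBelow ⟨hwA, hwz, hwy.le.trans hym.2.2⟩) (not_le.2 hwy)
    have hle : y - x ≤ maxGapLen A l r := le_maxGapLen hgap hxm.2.1 hym.2.2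
    refine ⟨x, hxm.1, ⟨hxm.2.1, by linarith [hξ.2]⟩, ?_⟩
    rw [abs_sub_comm, abs_of_nonneg (by linarith : (0:ℝ) ≤ ξ - x)]
    linarith [hym.2.1]


lemma maxGapLen_le_largestGap {A : Set ℝ} (h : IsCantorSet A) (l r : ℝ) :
    maxGapLen A l r ≤ largestGap A := by
  apply Real.sSup_le _ (largestGap_nonneg h)
  rintro g ⟨a, b, hg, h1, h2, rfl⟩
  exact isGap_le_largestGap h hg


/-- One cutting step, performed in the bridge `[lX, rX]` of the set `X`.
`Y`-data and `Z`-data enter only through linear bookkeeping. -/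
lemma cut_step {X : Set ℝ} (hX : IsCantorSet X)
    {vX vY vZ t lX rX lY rY lZ rZ : ℝ} (hvX : 0 < vX)
    (hlm : lX ∈ X) (hrm : rX ∈ X)
    (hBl : lX = sInf X ∨ ∃ c, IsGap X c lX ∧ maxGapLen X lX rX ≤ lX - c)
    (hBr : rX = sSup X ∨ ∃ d, IsGap X rX d ∧ maxGapLen X lX rX ≤ d - rX)
    (hγpos : 0 < maxGapLen X lX rX)
    (hcut : vX * maxGapLen X lX rX ≤ vY * (rY - lY) + vZ * (rZ - lZ))
    (hfl : vX * lX + vY * lY + vZ * lZ ≤ t) (hfr : t ≤ vX * rX + vY * rY + vZ * rZ) :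
    ∃ lX' rX' a b, IsGap X a b ∧ lX ≤ a ∧ b ≤ rX ∧ b - a = maxGapLen X lX rX ∧
      lX' ∈ X ∧ rX' ∈ X ∧ lX' ≤ rX' ∧ lX ≤ lX' ∧ rX' ≤ rX ∧
      ¬(lX' ≤ a ∧ b ≤ rX') ∧
      (lX' = sInf X ∨ ∃ c, IsGap X c lX' ∧ maxGapLen X lX' rX' ≤ lX' - c) ∧
      (rX' = sSup X ∨ ∃ d, IsGap X rX' d ∧ maxGapLen X lX' rX' ≤ d - rX') ∧
      thickness X * maxGapLen X lX rX ≤ rX' - lX' ∧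
      maxGapLen X lX' rX' ≤ maxGapLen X lX rX ∧
      vX * lX' + vY * lY + vZ * lZ ≤ t ∧ t ≤ vX * rX' + vY * rY + vZ * rZ := by
  set γ := maxGapLen X lX rX with hγ
  have hlr : lX < rX := lt_of_maxGapLen_pos hγpos
  obtain ⟨a, b, hg, hla, hbr, hab⟩ := maxGapLen_attained hX hlm hrm hlr
  by_cases hside : t ≤ vX * a + vY * rY + vZ * rZ
  · -- keep the left part [lX, a]
    have hmono : maxGapLen X lX a ≤ γ := maxGapLen_mono (le_refl lX) (by linarith [hg.1])
    have hkept : thickness X * γ ≤ a - lX := by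
      rw [hγ, ← hab]
      refine left_side_ge hX hg hla ?_
      rcases hBl with h1 | ⟨c, hc1, hc2⟩
      · exact Or.inl h1
      · exact Or.inr ⟨c, by linarith, hc1⟩
    refine ⟨lX, a, a, b, hg, hla, hbr, hab.symm ▸ rfl, hlm, hg.2.1, hla, le_refl _, by linarith [hg.1], ?_, ?_, ?_, ?_, ?_, ?_, ?_⟩
    · rintro ⟨-, hba⟩; linarith [hg.1]
    · rcases hBl with h1 | ⟨c, hc1, hc2⟩
      · exact Or.inl h1
      · exact Or.inr ⟨c, hc1, by linarith⟩
    · exact Or.inr ⟨b, hg, by rw [hab]; linarith⟩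
    · linarith
    · exact hmono
    · linarith
    · linarith
  · -- keep the right part [b, rX]
    push_neg at hside
    have hmono : maxGapLen X b rX ≤ γ := maxGapLen_mono (by linarith [hg.1]) (le_refl rX)
    have hkept : thickness X * γ ≤ rX - b := by
      rw [hγ, ← hab]
      refine right_side_ge hX hg hbr ?_
      rcases hBr with h1 | ⟨d, hd1, hd2⟩
      · exact Or.inl h1
      · exact Or.inr ⟨d, by linarith, hd1⟩
    refine ⟨b, rX, a, b, hg, hla, hbr, hab.symm ▸ rfl, hg.2.2.1, hrm, hbr, by linarith [hg.1], le_refl _, ?_, ?_, ?_, ?_, ?_, ?_, ?_⟩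
    · rintro ⟨hba, -⟩; linarith [hg.1]
    · exact Or.inr ⟨a, hg, by rw [hab]; linarith⟩
    · rcases hBr with h1 | ⟨d, hd1, hd2⟩
      · exact Or.inl h1
      · exact Or.inr ⟨d, hd1, by linarith⟩
    · linarith
    · exact hmono
    · -- lower feasibility: t > vX*a + vY*rY + vZ*rZ ≥ vX*b + vY*lY + vZ*lZ
      have : vX * (b - a) = vX * γ := by rw [hab]
      nlinarith [hside]
    · linarith


lemma clamp1 {v l r t : ℝ} (hv : 0 < v) (h1 : v * l ≤ t) (h2 : t ≤ v * r) :
    ∃ ξ, l ≤ ξ ∧ ξ ≤ r ∧ v * ξ = t := by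
  refine ⟨t / v, ?_, ?_, ?_⟩
  · rw [le_div_iff₀ hv]; linarith
  · rw [div_le_iff₀ hv]; linarith
  · field_simp

lemma clamp2 {v₂ v₃ l₂ r₂ l₃ r₃ t : ℝ} (hv₂ : 0 < v₂) (hv₃ : 0 < v₃)
    (hl₂ : l₂ ≤ r₂) (hl₃ : l₃ ≤ r₃)
    (h1 : v₂ * l₂ + v₃ * l₃ ≤ t) (h2 : t ≤ v₂ * r₂ + v₃ * r₃) :
    ∃ ξ₂ ξ₃, l₂ ≤ ξ₂ ∧ ξ₂ ≤ r₂ ∧ l₃ ≤ ξ₃ ∧ ξ₃ ≤ r₃ ∧ v₂ * ξ₂ + v₃ * ξ₃ = t := by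
  set c := (t - v₃ * l₃) / v₂ with hc
  set ξ₂ := min r₂ c with hξ₂
  have hcc : v₂ * c = t - v₃ * l₃ := by rw [hc]; field_simp
  have hξ₂r : ξ₂ ≤ r₂ := min_le_left _ _
  have hξ₂l : l₂ ≤ ξ₂ := by
    refine le_min hl₂ ?_
    rw [hc, le_div_iff₀ hv₂]; linarith
  have hlow : v₃ * l₃ ≤ t - v₂ * ξ₂ := by
    have : v₂ * ξ₂ ≤ v₂ * c := mul_le_mul_of_nonneg_left (min_le_right _ _) hv₂.le
    linarith
  have hup : t - v₂ * ξ₂ ≤ v₃ * r₃ := by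
    rcases le_total r₂ c with hrc | hrc
    · rw [hξ₂, min_eq_left hrc]; linarith
    · rw [hξ₂, min_eq_right hrc]; rw [hcc]
      have := mul_le_mul_of_nonneg_left hl₃ hv₃.le
      linarith
  obtain ⟨ξ₃, h₃l, h₃r, h₃⟩ := clamp1 hv₃ hlow hup
  exact ⟨ξ₂, ξ₃, hξ₂l, hξ₂r, h₃l, h₃r, by linarith⟩

lemma clamp3 {v₁ v₂ v₃ l₁ r₁ l₂ r₂ l₃ r₃ t : ℝ}
    (hv₁ : 0 < v₁) (hv₂ : 0 < v₂) (hv₃ : 0 < v₃)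
    (hl₁ : l₁ ≤ r₁) (hl₂ : l₂ ≤ r₂) (hl₃ : l₃ ≤ r₃)
    (h1 : v₁ * l₁ + v₂ * l₂ + v₃ * l₃ ≤ t) (h2 : t ≤ v₁ * r₁ + v₂ * r₂ + v₃ * r₃) :
    ∃ ξ₁ ξ₂ ξ₃, l₁ ≤ ξ₁ ∧ ξ₁ ≤ r₁ ∧ l₂ ≤ ξ₂ ∧ ξ₂ ≤ r₂ ∧ l₃ ≤ ξ₃ ∧ ξ₃ ≤ r₃ ∧
      v₁ * ξ₁ + v₂ * ξ₂ + v₃ * ξ₃ = t := by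
  set c := (t - v₂ * l₂ - v₃ * l₃) / v₁ with hc
  set ξ₁ := min r₁ c with hξ₁
  have hcc : v₁ * c = t - v₂ * l₂ - v₃ * l₃ := by rw [hc]; field_simp
  have hξ₁r : ξ₁ ≤ r₁ := min_le_left _ _
  have hξ₁l : l₁ ≤ ξ₁ := by
    refine le_min hl₁ ?_
    rw [hc, le_div_iff₀ hv₁]; linarith
  have hlow : v₂ * l₂ + v₃ * l₃ ≤ t - v₁ * ξ₁ := by
    have : v₁ * ξ₁ ≤ v₁ * c := mul_le_mul_of_nonneg_left (min_le_right _ _) hv₁.le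
    linarith
  have hup : t - v₁ * ξ₁ ≤ v₂ * r₂ + v₃ * r₃ := by
    rcases le_total r₁ c with hrc | hrc
    · rw [hξ₁, min_eq_left hrc]; linarith
    · rw [hξ₁, min_eq_right hrc]; rw [hcc]
      have h2' := mul_le_mul_of_nonneg_left hl₂ hv₂.le
      have h3' := mul_le_mul_of_nonneg_left hl₃ hv₃.le
      linarith
  obtain ⟨ξ₂, ξ₃, a1, a2, a3, a4, a5⟩ := clamp2 hv₂ hv₃ hl₂ hl₃ hlow hup
  exact ⟨ξ₁, ξ₂, ξ₃, hξ₁l, hξ₁r, a1, a2, a3, a4, by linarith⟩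



set_option maxHeartbeats 1000000 in
/-- One full step of the algorithm, assuming the (weighted, thickness-normalized)
largest gap is in the bridge of `X`. -/
lemma step1 {X Y Z : Set ℝ} (hX : IsCantorSet X) (hY : IsCantorSet Y) (hZ : IsCantorSet Z)
    {vX vY vZ t lX rX lY rY lZ rZ E δ' : ℝ}
    (hvX : 0 < vX) (hvY : 0 < vY) (hvZ : 0 < vZ)
    (hlmX : lX ∈ X) (hrmX : rX ∈ X)
    (hlrY : lY ≤ rY) (hlrZ : lZ ≤ rZ)
    (hBl : lX = sInf X ∨ ∃ c, IsGap X c lX ∧ maxGapLen X lX rX ≤ lX - c)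
    (hBr : rX = sSup X ∨ ∃ d, IsGap X rX d ∧ maxGapLen X lX rX ≤ d - rX)
    (hE1 : (1 + thickness X) * (vX * maxGapLen X lX rX) = E)
    (hEpos : 0 < E)
    (hVY : normThickness Y * E ≤ vY * (rY - lY) ∨ (lY = sInf Y ∧ rY = sSup Y))
    (hVZ : normThickness Z * E ≤ vZ * (rZ - lZ) ∨ (lZ = sInf Z ∧ rZ = sSup Z))
    (hcrossY : vX * largestGap X < vY * (sSup Y - sInf Y))
    (hcrossZ : vX * largestGap X < vZ * (sSup Z - sInf Z))
    (hS3 : 1 ≤ normThickness X + normThickness Y + normThickness Z)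
    (hδ' : 0 < δ') (hEδ : (1 + thickness X) * δ' < E)
    (hfl : vX * lX + vY * lY + vZ * lZ ≤ t) (hfr : t ≤ vX * rX + vY * rY + vZ * rZ) :
    ∃ lX' rX' a b, IsGap X a b ∧ lX ≤ a ∧ b ≤ rX ∧
      lX' ∈ X ∧ rX' ∈ X ∧ lX' ≤ rX' ∧ lX ≤ lX' ∧ rX' ≤ rX ∧
      ¬(lX' ≤ a ∧ b ≤ rX') ∧
      (lX' = sInf X ∨ ∃ c, IsGap X c lX' ∧ maxGapLen X lX' rX' ≤ lX' - c) ∧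
      (rX' = sSup X ∨ ∃ d, IsGap X rX' d ∧ maxGapLen X lX' rX' ≤ d - rX') ∧
      vX * lX' + vY * lY + vZ * lZ ≤ t ∧ t ≤ vX * rX' + vY * rY + vZ * rZ ∧
      δ' / vX ≤ b - a ∧
      normThickness X * E ≤ vX * (rX' - lX') ∧
      (1 + thickness X) * (vX * maxGapLen X lX' rX') ≤ E := by
  have hCX : 0 ≤ thickness X := thickness_nonneg hX
  have hγ0 : 0 ≤ maxGapLen X lX rX := maxGapLen_nonneg X lX rX
  have hγpos : 0 < maxGapLen X lX rX := by
    rcases hγ0.lt_or_eq with h | h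
    · exact h
    · exfalso; rw [← h, mul_zero, mul_zero] at hE1; linarith
  have hγLG : maxGapLen X lX rX ≤ largestGap X := maxGapLen_le_largestGap hX lX rX
  -- cuttability
  have hcut : vX * maxGapLen X lX rX ≤ vY * (rY - lY) + vZ * (rZ - lZ) := by
    have hLY : 0 ≤ vY * (rY - lY) := mul_nonneg hvY.le (by linarith)
    have hLZ : 0 ≤ vZ * (rZ - lZ) := mul_nonneg hvZ.le (by linarith)
    have hXle : vX * maxGapLen X lX rX ≤ vX * largestGap X :=
      mul_le_mul_of_nonneg_left hγLG hvX.le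
    rcases hVY with hVY | ⟨hY1, hY2⟩
    · rcases hVZ with hVZ | ⟨hZ1, hZ2⟩
      · -- both thickness bounds
        have hSX := one_sub_normThickness hX
        have hSY0 : 0 ≤ normThickness Y := normThickness_nonneg hY
        have hSZ0 : 0 ≤ normThickness Z := normThickness_nonneg hZ
        have hsum : (1 - normThickness X) * E ≤ vY * (rY - lY) + vZ * (rZ - lZ) := by
          nlinarith [hEpos.le]
        nlinarith [hEpos.le]
      · rw [hZ1, hZ2] at *; nlinarith
    · rw [hY1, hY2] at *; nlinarith
  obtain ⟨lX', rX', a, b, hgab, hla, hbr, hlen, m1, m2, m3, m4, m5, m6, m7, m8, m9, m10, m11, m12⟩ :=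
    cut_step hX hvX hlmX hrmX hBl hBr hγpos hcut hfl hfr
  have hkept : normThickness X * E ≤ vX * (rX' - lX') := by
    have hsx := normThickness_mul hX
    have h1 : vX * (thickness X * maxGapLen X lX rX) ≤ vX * (rX' - lX') :=
      mul_le_mul_of_nonneg_left m9 hvX.le
    have h2 : normThickness X * E = vX * (thickness X * maxGapLen X lX rX) := by
      rw [← hE1]; linear_combination (vX * maxGapLen X lX rX) * hsx
    linarith
  have hvγ : δ' < vX * maxGapLen X lX rX := by nlinarith
  refine ⟨lX', rX', a, b, hgab, hla, hbr, m1, m2, m3, m4, m5, m6, m7, m8, m11, m12, ?_, hkept, ?_⟩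
  · rw [div_le_iff₀ hvX, hlen]; nlinarith
  · calc (1 + thickness X) * (vX * maxGapLen X lX' rX')
        ≤ (1 + thickness X) * (vX * maxGapLen X lX rX) := by
          apply mul_le_mul_of_nonneg_left (mul_le_mul_of_nonneg_left m10 hvX.le) (by linarith)
      _ = E := hE1


/-- weighted, thickness-normalized largest-gap functional -/
noncomputable def eW (A : Set ℝ) (v l r : ℝ) : ℝ :=
  (1 + thickness A) * (v * maxGapLen A l r)

/-- the set of gaps of `A` inside `[l,r]` of weighted length at least `δ'` -/
def GSet (A : Set ℝ) (v δ' l r : ℝ) : Set (ℝ × ℝ) :=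
  {p : ℝ × ℝ | IsGap A p.1 p.2 ∧ l ≤ p.1 ∧ p.2 ≤ r ∧ δ' / v ≤ p.2 - p.1}

lemma GSet_finite {A : Set ℝ} {v δ' : ℝ} (hv : 0 < v) (hδ' : 0 < δ') (l r : ℝ) :
    (GSet A v δ' l r).Finite := gaps_finite (div_pos hδ' hv)

lemma finish_small {A₁ A₂ A₃ : Set ℝ} (h₁ : IsCantorSet A₁) (h₂ : IsCantorSet A₂)
    (h₃ : IsCantorSet A₃) {v₁ v₂ v₃ t δ l₁ r₁ l₂ r₂ l₃ r₃ : ℝ}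
    (hv₁ : 0 < v₁) (hv₂ : 0 < v₂) (hv₃ : 0 < v₃)
    (hm₁ : l₁ ∈ A₁) (hm₁' : r₁ ∈ A₁) (hm₂ : l₂ ∈ A₂) (hm₂' : r₂ ∈ A₂)
    (hm₃ : l₃ ∈ A₃) (hm₃' : r₃ ∈ A₃)
    (hlr₁ : l₁ ≤ r₁) (hlr₂ : l₂ ≤ r₂) (hlr₃ : l₃ ≤ r₃)
    (hfl : v₁ * l₁ + v₂ * l₂ + v₃ * l₃ ≤ t) (hfr : t ≤ v₁ * r₁ + v₂ * r₂ + v₃ * r₃)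
    (hs₁ : v₁ * maxGapLen A₁ l₁ r₁ ≤ δ) (hs₂ : v₂ * maxGapLen A₂ l₂ r₂ ≤ δ)
    (hs₃ : v₃ * maxGapLen A₃ l₃ r₃ ≤ δ) :
    ∃ x₁ x₂ x₃, x₁ ∈ A₁ ∧ x₂ ∈ A₂ ∧ x₃ ∈ A₃ ∧
      |v₁ * x₁ + v₂ * x₂ + v₃ * x₃ - t| ≤ 3 * δ := by
  obtain ⟨ξ₁, ξ₂, ξ₃, b1, b2, b3, b4, b5, b6, hsum⟩ :=
    clamp3 hv₁ hv₂ hv₃ hlr₁ hlr₂ hlr₃ hfl hfr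
  obtain ⟨x₁, hx₁A, _, hx₁⟩ := exists_near h₁ hm₁ hm₁' (Set.mem_Icc.2 ⟨b1, b2⟩)
  obtain ⟨x₂, hx₂A, _, hx₂⟩ := exists_near h₂ hm₂ hm₂' (Set.mem_Icc.2 ⟨b3, b4⟩)
  obtain ⟨x₃, hx₃A, _, hx₃⟩ := exists_near h₃ hm₃ hm₃' (Set.mem_Icc.2 ⟨b5, b6⟩)
  refine ⟨x₁, x₂, x₃, hx₁A, hx₂A, hx₃A, ?_⟩
  obtain ⟨c1, c2⟩ := abs_le.1 hx₁
  obtain ⟨c3, c4⟩ := abs_le.1 hx₂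
  obtain ⟨c5, c6⟩ := abs_le.1 hx₃
  have p1 : v₁ * (x₁ - ξ₁) ≤ v₁ * maxGapLen A₁ l₁ r₁ := mul_le_mul_of_nonneg_left c2 hv₁.le
  have p2 : v₂ * (x₂ - ξ₂) ≤ v₂ * maxGapLen A₂ l₂ r₂ := mul_le_mul_of_nonneg_left c4 hv₂.le
  have p3 : v₃ * (x₃ - ξ₃) ≤ v₃ * maxGapLen A₃ l₃ r₃ := mul_le_mul_of_nonneg_left c6 hv₃.le
  have p4 : v₁ * (ξ₁ - x₁) ≤ v₁ * maxGapLen A₁ l₁ r₁ :=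
    mul_le_mul_of_nonneg_left (by linarith) hv₁.le
  have p5 : v₂ * (ξ₂ - x₂) ≤ v₂ * maxGapLen A₂ l₂ r₂ :=
    mul_le_mul_of_nonneg_left (by linarith) hv₂.le
  have p6 : v₃ * (ξ₃ - x₃) ≤ v₃ * maxGapLen A₃ l₃ r₃ :=
    mul_le_mul_of_nonneg_left (by linarith) hv₃.le
  rw [mul_sub] at p1 p2 p3 p4 p5 p6
  rw [abs_le]; constructor <;> linarith


lemma le_eW {A : Set ℝ} (hA : IsCantorSet A) {v : ℝ} (hv : 0 ≤ v) (l r : ℝ) :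
    v * maxGapLen A l r ≤ eW A v l r := by
  have h1 := thickness_nonneg hA
  have h2 := maxGapLen_nonneg A l r
  have h3 : 0 ≤ v * maxGapLen A l r := mul_nonneg hv h2
  unfold eW; nlinarith

set_option maxHeartbeats 2000000 in
lemma key (A₁ A₂ A₃ : Set ℝ) (h₁ : IsCantorSet A₁) (h₂ : IsCantorSet A₂) (h₃ : IsCantorSet A₃)
    (v₁ v₂ v₃ : ℝ) (hv₁ : 0 < v₁) (hv₂ : 0 < v₂) (hv₃ : 0 < v₃)
    (hS : 1 ≤ normThickness A₁ + normThickness A₂ + normThickness A₃)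
    (hc12 : v₁ * largestGap A₁ < v₂ * (sSup A₂ - sInf A₂))
    (hc13 : v₁ * largestGap A₁ < v₃ * (sSup A₃ - sInf A₃))
    (hc21 : v₂ * largestGap A₂ < v₁ * (sSup A₁ - sInf A₁))
    (hc23 : v₂ * largestGap A₂ < v₃ * (sSup A₃ - sInf A₃))
    (hc31 : v₃ * largestGap A₃ < v₁ * (sSup A₁ - sInf A₁))
    (hc32 : v₃ * largestGap A₃ < v₂ * (sSup A₂ - sInf A₂))
    (t δ : ℝ) (hδ : 0 < δ) :
    ∀ n : ℕ, ∀ l₁ r₁ l₂ r₂ l₃ r₃ : ℝ,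
    l₁ ∈ A₁ → r₁ ∈ A₁ → l₂ ∈ A₂ → r₂ ∈ A₂ → l₃ ∈ A₃ → r₃ ∈ A₃ →
    l₁ ≤ r₁ → l₂ ≤ r₂ → l₃ ≤ r₃ →
    (l₁ = sInf A₁ ∨ ∃ c, IsGap A₁ c l₁ ∧ maxGapLen A₁ l₁ r₁ ≤ l₁ - c) →
    (r₁ = sSup A₁ ∨ ∃ d, IsGap A₁ r₁ d ∧ maxGapLen A₁ l₁ r₁ ≤ d - r₁) →
    (l₂ = sInf A₂ ∨ ∃ c, IsGap A₂ c l₂ ∧ maxGapLen A₂ l₂ r₂ ≤ l₂ - c) →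
    (r₂ = sSup A₂ ∨ ∃ d, IsGap A₂ r₂ d ∧ maxGapLen A₂ l₂ r₂ ≤ d - r₂) →
    (l₃ = sInf A₃ ∨ ∃ c, IsGap A₃ c l₃ ∧ maxGapLen A₃ l₃ r₃ ≤ l₃ - c) →
    (r₃ = sSup A₃ ∨ ∃ d, IsGap A₃ r₃ d ∧ maxGapLen A₃ l₃ r₃ ≤ d - r₃) →
    (normThickness A₁ * max (eW A₁ v₁ l₁ r₁) (max (eW A₂ v₂ l₂ r₂) (eW A₃ v₃ l₃ r₃)) ≤
        v₁ * (r₁ - l₁) ∨ (l₁ = sInf A₁ ∧ r₁ = sSup A₁)) →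
    (normThickness A₂ * max (eW A₁ v₁ l₁ r₁) (max (eW A₂ v₂ l₂ r₂) (eW A₃ v₃ l₃ r₃)) ≤
        v₂ * (r₂ - l₂) ∨ (l₂ = sInf A₂ ∧ r₂ = sSup A₂)) →
    (normThickness A₃ * max (eW A₁ v₁ l₁ r₁) (max (eW A₂ v₂ l₂ r₂) (eW A₃ v₃ l₃ r₃)) ≤
        v₃ * (r₃ - l₃) ∨ (l₃ = sInf A₃ ∧ r₃ = sSup A₃)) →
    v₁ * l₁ + v₂ * l₂ + v₃ * l₃ ≤ t → t ≤ v₁ * r₁ + v₂ * r₂ + v₃ * r₃ →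
    (GSet A₁ v₁ (δ / (1 + max (thickness A₁) (max (thickness A₂) (thickness A₃)))) l₁ r₁).ncard +
      (GSet A₂ v₂ (δ / (1 + max (thickness A₁) (max (thickness A₂) (thickness A₃)))) l₂ r₂).ncard +
      (GSet A₃ v₃ (δ / (1 + max (thickness A₁) (max (thickness A₂) (thickness A₃)))) l₃ r₃).ncard ≤ n →
    ∃ x₁ x₂ x₃, x₁ ∈ A₁ ∧ x₂ ∈ A₂ ∧ x₃ ∈ A₃ ∧
      |v₁ * x₁ + v₂ * x₂ + v₃ * x₃ - t| ≤ 3 * δ := by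
  have hC1 := thickness_nonneg h₁
  have hC2 := thickness_nonneg h₂
  have hC3 := thickness_nonneg h₃
  set Cm := max (thickness A₁) (max (thickness A₂) (thickness A₃)) with hCm
  have hCm0 : 0 ≤ Cm := le_trans hC1 (le_max_left _ _)
  have hCm1 : thickness A₁ ≤ Cm := le_max_left _ _
  have hCm2 : thickness A₂ ≤ Cm := le_trans (le_max_left _ _) (le_max_right _ _)
  have hCm3 : thickness A₃ ≤ Cm := le_trans (le_max_right _ _) (le_max_right _ _)
  set δp := δ / (1 + Cm) with hδpdef
  have hδp_pos : 0 < δp := div_pos hδ (by linarith)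
  have hδpδ : δp ≤ δ := div_le_self hδ.le (by linarith)
  have hmul : (1 + Cm) * δp = δ := by
    rw [hδpdef]; field_simp
  intro n
  induction n with
  | zero =>
    intro l₁ r₁ l₂ r₂ l₃ r₃ m1l m1r m2l m2r m3l m3r o1 o2 o3 B1l B1r B2l B2r B3l B3r
      V1 V2 V3 F1 F2 hn
    by_cases hsm : v₁ * maxGapLen A₁ l₁ r₁ ≤ δ ∧ v₂ * maxGapLen A₂ l₂ r₂ ≤ δ ∧
        v₃ * maxGapLen A₃ l₃ r₃ ≤ δ
    · exact finish_small h₁ h₂ h₃ hv₁ hv₂ hv₃ m1l m1r m2l m2r m3l m3r o1 o2 o3 F1 F2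
        hsm.1 hsm.2.1 hsm.2.2
    · exfalso
      have hbig : δ < v₁ * maxGapLen A₁ l₁ r₁ ∨ δ < v₂ * maxGapLen A₂ l₂ r₂ ∨
          δ < v₃ * maxGapLen A₃ l₃ r₃ := by
        by_contra hc; push_neg at hc; exact hsm ⟨hc.1, hc.2.1, hc.2.2⟩
      rcases hbig with hb | hb | hb
      · have hγ0 := maxGapLen_nonneg A₁ l₁ r₁
        have hγpos : 0 < maxGapLen A₁ l₁ r₁ := by nlinarith
        obtain ⟨a, b, hg, ha, hbb, hlen⟩ :=
          maxGapLen_attained h₁ m1l m1r (lt_of_maxGapLen_pos hγpos)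
        have hmem : (a, b) ∈ GSet A₁ v₁ δp l₁ r₁ := by
          refine ⟨hg, ha, hbb, ?_⟩
          rw [div_le_iff₀ hv₁, hlen]; nlinarith
        have := (Set.ncard_pos (GSet_finite hv₁ hδp_pos l₁ r₁)).2 ⟨(a, b), hmem⟩
        omega
      · have hγ0 := maxGapLen_nonneg A₂ l₂ r₂
        have hγpos : 0 < maxGapLen A₂ l₂ r₂ := by nlinarith
        obtain ⟨a, b, hg, ha, hbb, hlen⟩ :=
          maxGapLen_attained h₂ m2l m2r (lt_of_maxGapLen_pos hγpos)
        have hmem : (a, b) ∈ GSet A₂ v₂ δp l₂ r₂ := by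
          refine ⟨hg, ha, hbb, ?_⟩
          rw [div_le_iff₀ hv₂, hlen]; nlinarith
        have := (Set.ncard_pos (GSet_finite hv₂ hδp_pos l₂ r₂)).2 ⟨(a, b), hmem⟩
        omega
      · have hγ0 := maxGapLen_nonneg A₃ l₃ r₃
        have hγpos : 0 < maxGapLen A₃ l₃ r₃ := by nlinarith
        obtain ⟨a, b, hg, ha, hbb, hlen⟩ :=
          maxGapLen_attained h₃ m3l m3r (lt_of_maxGapLen_pos hγpos)
        have hmem : (a, b) ∈ GSet A₃ v₃ δp l₃ r₃ := by
          refine ⟨hg, ha, hbb, ?_⟩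
          rw [div_le_iff₀ hv₃, hlen]; nlinarith
        have := (Set.ncard_pos (GSet_finite hv₃ hδp_pos l₃ r₃)).2 ⟨(a, b), hmem⟩
        omega
  | succ n ih =>
    intro l₁ r₁ l₂ r₂ l₃ r₃ m1l m1r m2l m2r m3l m3r o1 o2 o3 B1l B1r B2l B2r B3l B3r
      V1 V2 V3 F1 F2 hn
    by_cases hsm : v₁ * maxGapLen A₁ l₁ r₁ ≤ δ ∧ v₂ * maxGapLen A₂ l₂ r₂ ≤ δ ∧
        v₃ * maxGapLen A₃ l₃ r₃ ≤ δ
    · exact finish_small h₁ h₂ h₃ hv₁ hv₂ hv₃ m1l m1r m2l m2r m3l m3r o1 o2 o3 F1 F2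
        hsm.1 hsm.2.1 hsm.2.2
    set e₁ := eW A₁ v₁ l₁ r₁ with he₁
    set e₂ := eW A₂ v₂ l₂ r₂ with he₂
    set e₃ := eW A₃ v₃ l₃ r₃ with he₃
    set E := max e₁ (max e₂ e₃) with hE
    have hEm1 : e₁ ≤ E := le_max_left _ _
    have hEm2 : e₂ ≤ E := le_trans (le_max_left _ _) (le_max_right _ _)
    have hEm3 : e₃ ≤ E := le_trans (le_max_right _ _) (le_max_right _ _)
    have hbig : δ < v₁ * maxGapLen A₁ l₁ r₁ ∨ δ < v₂ * maxGapLen A₂ l₂ r₂ ∨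
        δ < v₃ * maxGapLen A₃ l₃ r₃ := by
      by_contra hc; push_neg at hc; exact hsm ⟨hc.1, hc.2.1, hc.2.2⟩
    have hEbig : δ < E := by
      rcases hbig with hb | hb | hb
      · exact lt_of_lt_of_le hb (le_trans (le_eW h₁ hv₁.le l₁ r₁) hEm1)
      · exact lt_of_lt_of_le hb (le_trans (le_eW h₂ hv₂.le l₂ r₂) hEm2)
      · exact lt_of_lt_of_le hb (le_trans (le_eW h₃ hv₃.le l₃ r₃) hEm3)
    have hEpos : 0 < E := hδ.trans hEbig
    rcases le_total e₂ e₁ with h21 | h12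
    · rcases le_total e₃ e₁ with h31 | h13
      · -- cut bridge 1
        have hEeq : E = e₁ := max_eq_left (max_le h21 h31)
        have hE1 : (1 + thickness A₁) * (v₁ * maxGapLen A₁ l₁ r₁) = E := hEeq.symm
        have hEδ : (1 + thickness A₁) * δp < E := by
          have := mul_le_mul_of_nonneg_right (by linarith : 1 + thickness A₁ ≤ 1 + Cm) hδp_pos.le
          linarith
        obtain ⟨l₁', r₁', a, b, G1, G2, G3, G4, G5, G6, G7, G8, G9, G10, G11, G12, G13,
            G14, G15, G16⟩ :=
          step1 h₁ h₂ h₃ hv₁ hv₂ hv₃ m1l m1r o2 o3 B1l B1r hE1 hEpos V2 V3 hc12 hc13 hS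
            hδp_pos hEδ F1 F2
        have hE'le : max (eW A₁ v₁ l₁' r₁') (max e₂ e₃) ≤ E :=
          max_le G16 (max_le hEm2 hEm3)
        have hS₁0 := normThickness_nonneg h₁
        have hS₂0 := normThickness_nonneg h₂
        have hS₃0 := normThickness_nonneg h₃
        have V1' : normThickness A₁ * max (eW A₁ v₁ l₁' r₁') (max e₂ e₃) ≤ v₁ * (r₁' - l₁') ∨
            (l₁' = sInf A₁ ∧ r₁' = sSup A₁) :=
          Or.inl (le_trans (mul_le_mul_of_nonneg_left hE'le hS₁0) G15)
        have V2' : normThickness A₂ * max (eW A₁ v₁ l₁' r₁') (max e₂ e₃) ≤ v₂ * (r₂ - l₂) ∨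
            (l₂ = sInf A₂ ∧ r₂ = sSup A₂) := by
          rcases V2 with hj | hj
          · exact Or.inl (le_trans (mul_le_mul_of_nonneg_left hE'le hS₂0) hj)
          · exact Or.inr hj
        have V3' : normThickness A₃ * max (eW A₁ v₁ l₁' r₁') (max e₂ e₃) ≤ v₃ * (r₃ - l₃) ∨
            (l₃ = sInf A₃ ∧ r₃ = sSup A₃) := by
          rcases V3 with hj | hj
          · exact Or.inl (le_trans (mul_le_mul_of_nonneg_left hE'le hS₃0) hj)
          · exact Or.inr hj
        have hsub : GSet A₁ v₁ δp l₁' r₁' ⊆ GSet A₁ v₁ δp l₁ r₁ := by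
          rintro p ⟨hpg, hp1, hp2, hp3⟩
          exact ⟨hpg, G7.trans hp1, hp2.trans G8, hp3⟩
        have hwit : (a, b) ∈ GSet A₁ v₁ δp l₁ r₁ := ⟨G1, G2, G3, G14⟩
        have hnot : (a, b) ∉ GSet A₁ v₁ δp l₁' r₁' := by
          rintro ⟨-, hx1, hx2, -⟩; exact G9 ⟨hx1, hx2⟩
        have hlt : (GSet A₁ v₁ δp l₁' r₁').ncard < (GSet A₁ v₁ δp l₁ r₁).ncard :=
          Set.ncard_lt_ncard ((Set.ssubset_iff_of_subset hsub).2 ⟨(a, b), hwit, hnot⟩)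
            (GSet_finite hv₁ hδp_pos l₁ r₁)
        exact ih l₁' r₁' l₂ r₂ l₃ r₃ G4 G5 m2l m2r m3l m3r G6 o2 o3 G10 G11 B2l B2r B3l B3r
          V1' V2' V3' G12 G13 (by omega)
      · -- cut bridge 3 (e₁ ≤ e₃, e₂ ≤ e₁ ≤ e₃)
        have hEeq : E = e₃ := by
          rw [hE, max_eq_right (le_trans h21 h13), max_eq_right h13]
        have hE3 : (1 + thickness A₃) * (v₃ * maxGapLen A₃ l₃ r₃) = E := hEeq.symm
        have hEδ : (1 + thickness A₃) * δp < E := by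
          have := mul_le_mul_of_nonneg_right (by linarith : 1 + thickness A₃ ≤ 1 + Cm) hδp_pos.le
          linarith
        obtain ⟨l₃', r₃', a, b, G1, G2, G3, G4, G5, G6, G7, G8, G9, G10, G11, G12, G13,
            G14, G15, G16⟩ :=
          step1 (t := t) h₃ h₁ h₂ hv₃ hv₁ hv₂ m3l m3r o1 o2 B3l B3r hE3 hEpos V1 V2 hc31 hc32
            (by linarith) hδp_pos hEδ (by linarith) (by linarith)
        have hE'le : max e₁ (max e₂ (eW A₃ v₃ l₃' r₃')) ≤ E :=
          max_le hEm1 (max_le hEm2 G16)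
        have hS₁0 := normThickness_nonneg h₁
        have hS₂0 := normThickness_nonneg h₂
        have hS₃0 := normThickness_nonneg h₃
        have V3' : normThickness A₃ * max e₁ (max e₂ (eW A₃ v₃ l₃' r₃')) ≤ v₃ * (r₃' - l₃') ∨
            (l₃' = sInf A₃ ∧ r₃' = sSup A₃) :=
          Or.inl (le_trans (mul_le_mul_of_nonneg_left hE'le hS₃0) G15)
        have V1' : normThickness A₁ * max e₁ (max e₂ (eW A₃ v₃ l₃' r₃')) ≤ v₁ * (r₁ - l₁) ∨
            (l₁ = sInf A₁ ∧ r₁ = sSup A₁) := by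
          rcases V1 with hj | hj
          · exact Or.inl (le_trans (mul_le_mul_of_nonneg_left hE'le hS₁0) hj)
          · exact Or.inr hj
        have V2' : normThickness A₂ * max e₁ (max e₂ (eW A₃ v₃ l₃' r₃')) ≤ v₂ * (r₂ - l₂) ∨
            (l₂ = sInf A₂ ∧ r₂ = sSup A₂) := by
          rcases V2 with hj | hj
          · exact Or.inl (le_trans (mul_le_mul_of_nonneg_left hE'le hS₂0) hj)
          · exact Or.inr hj
        have hsub : GSet A₃ v₃ δp l₃' r₃' ⊆ GSet A₃ v₃ δp l₃ r₃ := by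
          rintro p ⟨hpg, hp1, hp2, hp3⟩
          exact ⟨hpg, G7.trans hp1, hp2.trans G8, hp3⟩
        have hwit : (a, b) ∈ GSet A₃ v₃ δp l₃ r₃ := ⟨G1, G2, G3, G14⟩
        have hnot : (a, b) ∉ GSet A₃ v₃ δp l₃' r₃' := by
          rintro ⟨-, hx1, hx2, -⟩; exact G9 ⟨hx1, hx2⟩
        have hlt : (GSet A₃ v₃ δp l₃' r₃').ncard < (GSet A₃ v₃ δp l₃ r₃).ncard :=
          Set.ncard_lt_ncard ((Set.ssubset_iff_of_subset hsub).2 ⟨(a, b), hwit, hnot⟩)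
            (GSet_finite hv₃ hδp_pos l₃ r₃)
        exact ih l₁ r₁ l₂ r₂ l₃' r₃' m1l m1r m2l m2r G4 G5 o1 o2 G6 B1l B1r B2l B2r G10 G11
          V1' V2' V3' (by linarith) (by linarith) (by omega)
    · rcases le_total e₃ e₂ with h32 | h23
      · -- cut bridge 2
        have hEeq : E = e₂ := by
          rw [hE, max_eq_left h32, max_eq_right h12]
        have hE2 : (1 + thickness A₂) * (v₂ * maxGapLen A₂ l₂ r₂) = E := hEeq.symm
        have hEδ : (1 + thickness A₂) * δp < E := by
          have := mul_le_mul_of_nonneg_right (by linarith : 1 + thickness A₂ ≤ 1 + Cm) hδp_pos.le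
          linarith
        obtain ⟨l₂', r₂', a, b, G1, G2, G3, G4, G5, G6, G7, G8, G9, G10, G11, G12, G13,
            G14, G15, G16⟩ :=
          step1 (t := t) h₂ h₁ h₃ hv₂ hv₁ hv₃ m2l m2r o1 o3 B2l B2r hE2 hEpos V1 V3 hc21 hc23
            (by linarith) hδp_pos hEδ (by linarith) (by linarith)
        have hE'le : max e₁ (max (eW A₂ v₂ l₂' r₂') e₃) ≤ E :=
          max_le hEm1 (max_le G16 hEm3)
        have hS₁0 := normThickness_nonneg h₁
        have hS₂0 := normThickness_nonneg h₂
        have hS₃0 := normThickness_nonneg h₃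
        have V2' : normThickness A₂ * max e₁ (max (eW A₂ v₂ l₂' r₂') e₃) ≤ v₂ * (r₂' - l₂') ∨
            (l₂' = sInf A₂ ∧ r₂' = sSup A₂) :=
          Or.inl (le_trans (mul_le_mul_of_nonneg_left hE'le hS₂0) G15)
        have V1' : normThickness A₁ * max e₁ (max (eW A₂ v₂ l₂' r₂') e₃) ≤ v₁ * (r₁ - l₁) ∨
            (l₁ = sInf A₁ ∧ r₁ = sSup A₁) := by
          rcases V1 with hj | hj
          · exact Or.inl (le_trans (mul_le_mul_of_nonneg_left hE'le hS₁0) hj)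
          · exact Or.inr hj
        have V3' : normThickness A₃ * max e₁ (max (eW A₂ v₂ l₂' r₂') e₃) ≤ v₃ * (r₃ - l₃) ∨
            (l₃ = sInf A₃ ∧ r₃ = sSup A₃) := by
          rcases V3 with hj | hj
          · exact Or.inl (le_trans (mul_le_mul_of_nonneg_left hE'le hS₃0) hj)
          · exact Or.inr hj
        have hsub : GSet A₂ v₂ δp l₂' r₂' ⊆ GSet A₂ v₂ δp l₂ r₂ := by
          rintro p ⟨hpg, hp1, hp2, hp3⟩
          exact ⟨hpg, G7.trans hp1, hp2.trans G8, hp3⟩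
        have hwit : (a, b) ∈ GSet A₂ v₂ δp l₂ r₂ := ⟨G1, G2, G3, G14⟩
        have hnot : (a, b) ∉ GSet A₂ v₂ δp l₂' r₂' := by
          rintro ⟨-, hx1, hx2, -⟩; exact G9 ⟨hx1, hx2⟩
        have hlt : (GSet A₂ v₂ δp l₂' r₂').ncard < (GSet A₂ v₂ δp l₂ r₂).ncard :=
          Set.ncard_lt_ncard ((Set.ssubset_iff_of_subset hsub).2 ⟨(a, b), hwit, hnot⟩)
            (GSet_finite hv₂ hδp_pos l₂ r₂)
        exact ih l₁ r₁ l₂' r₂' l₃ r₃ m1l m1r G4 G5 m3l m3r o1 G6 o3 B1l B1r G10 G11 B3l B3r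
          V1' V2' V3' (by linarith) (by linarith) (by omega)
      · -- cut bridge 3 (e₂ ≤ e₃, e₁ ≤ e₂ ≤ e₃)
        have hEeq : E = e₃ := by
          rw [hE, max_eq_right h23, max_eq_right (le_trans h12 h23)]
        have hE3 : (1 + thickness A₃) * (v₃ * maxGapLen A₃ l₃ r₃) = E := hEeq.symm
        have hEδ : (1 + thickness A₃) * δp < E := by
          have := mul_le_mul_of_nonneg_right (by linarith : 1 + thickness A₃ ≤ 1 + Cm) hδp_pos.le
          linarith
        obtain ⟨l₃', r₃', a, b, G1, G2, G3, G4, G5, G6, G7, G8, G9, G10, G11, G12, G13,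
            G14, G15, G16⟩ :=
          step1 (t := t) h₃ h₁ h₂ hv₃ hv₁ hv₂ m3l m3r o1 o2 B3l B3r hE3 hEpos V1 V2 hc31 hc32
            (by linarith) hδp_pos hEδ (by linarith) (by linarith)
        have hE'le : max e₁ (max e₂ (eW A₃ v₃ l₃' r₃')) ≤ E :=
          max_le hEm1 (max_le hEm2 G16)
        have hS₁0 := normThickness_nonneg h₁
        have hS₂0 := normThickness_nonneg h₂
        have hS₃0 := normThickness_nonneg h₃
        have V3' : normThickness A₃ * max e₁ (max e₂ (eW A₃ v₃ l₃' r₃')) ≤ v₃ * (r₃' - l₃') ∨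
            (l₃' = sInf A₃ ∧ r₃' = sSup A₃) :=
          Or.inl (le_trans (mul_le_mul_of_nonneg_left hE'le hS₃0) G15)
        have V1' : normThickness A₁ * max e₁ (max e₂ (eW A₃ v₃ l₃' r₃')) ≤ v₁ * (r₁ - l₁) ∨
            (l₁ = sInf A₁ ∧ r₁ = sSup A₁) := by
          rcases V1 with hj | hj
          · exact Or.inl (le_trans (mul_le_mul_of_nonneg_left hE'le hS₁0) hj)
          · exact Or.inr hj
        have V2' : normThickness A₂ * max e₁ (max e₂ (eW A₃ v₃ l₃' r₃')) ≤ v₂ * (r₂ - l₂) ∨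
            (l₂ = sInf A₂ ∧ r₂ = sSup A₂) := by
          rcases V2 with hj | hj
          · exact Or.inl (le_trans (mul_le_mul_of_nonneg_left hE'le hS₂0) hj)
          · exact Or.inr hj
        have hsub : GSet A₃ v₃ δp l₃' r₃' ⊆ GSet A₃ v₃ δp l₃ r₃ := by
          rintro p ⟨hpg, hp1, hp2, hp3⟩
          exact ⟨hpg, G7.trans hp1, hp2.trans G8, hp3⟩
        have hwit : (a, b) ∈ GSet A₃ v₃ δp l₃ r₃ := ⟨G1, G2, G3, G14⟩
        have hnot : (a, b) ∉ GSet A₃ v₃ δp l₃' r₃' := by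
          rintro ⟨-, hx1, hx2, -⟩; exact G9 ⟨hx1, hx2⟩
        have hlt : (GSet A₃ v₃ δp l₃' r₃').ncard < (GSet A₃ v₃ δp l₃ r₃).ncard :=
          Set.ncard_lt_ncard ((Set.ssubset_iff_of_subset hsub).2 ⟨(a, b), hwit, hnot⟩)
            (GSet_finite hv₃ hδp_pos l₃ r₃)
        exact ih l₁ r₁ l₂ r₂ l₃' r₃' m1l m1r m2l m2r G4 G5 o1 o2 G6 B1l B1r B2l B2r G10 G11
          V1' V2' V3' (by linarith) (by linarith) (by omega)


theorem sum_cover (A₁ A₂ A₃ : Set ℝ) (h₁ : IsCantorSet A₁) (h₂ : IsCantorSet A₂)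
    (h₃ : IsCantorSet A₃)
    (v₁ v₂ v₃ : ℝ) (hv₁ : 0 < v₁) (hv₂ : 0 < v₂) (hv₃ : 0 < v₃)
    (hS : 1 ≤ normThickness A₁ + normThickness A₂ + normThickness A₃)
    (hc12 : v₁ * largestGap A₁ < v₂ * (sSup A₂ - sInf A₂))
    (hc13 : v₁ * largestGap A₁ < v₃ * (sSup A₃ - sInf A₃))
    (hc21 : v₂ * largestGap A₂ < v₁ * (sSup A₁ - sInf A₁))
    (hc23 : v₂ * largestGap A₂ < v₃ * (sSup A₃ - sInf A₃))
    (hc31 : v₃ * largestGap A₃ < v₁ * (sSup A₁ - sInf A₁))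
    (hc32 : v₃ * largestGap A₃ < v₂ * (sSup A₂ - sInf A₂))
    (t : ℝ) (htl : v₁ * sInf A₁ + v₂ * sInf A₂ + v₃ * sInf A₃ ≤ t)
    (htr : t ≤ v₁ * sSup A₁ + v₂ * sSup A₂ + v₃ * sSup A₃) :
    ∃ x₁ x₂ x₃, x₁ ∈ A₁ ∧ x₂ ∈ A₂ ∧ x₃ ∈ A₃ ∧ v₁ * x₁ + v₂ * x₂ + v₃ * x₃ = t := by
  set f : ℝ × ℝ × ℝ → ℝ := fun p => v₁ * p.1 + v₂ * p.2.1 + v₃ * p.2.2 with hf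
  set Ei : Set ℝ := f '' (A₁ ×ˢ (A₂ ×ˢ A₃)) with hEi
  have hcont : Continuous f := by
    apply Continuous.add
    apply Continuous.add
    · exact continuous_const.mul continuous_fst
    · exact continuous_const.mul (continuous_fst.comp continuous_snd)
    · exact continuous_const.mul (continuous_snd.comp continuous_snd)
  have hcomp : IsCompact Ei := (h₁.2.1.prod (h₂.2.1.prod h₃.2.1)).image hcont
  have hcl : t ∈ closure Ei := by
    rw [Metric.mem_closure_iff]
    intro ε hε
    have hδ : 0 < ε / 4 := by linarith
    obtain ⟨x₁, x₂, x₃, hx₁, hx₂, hx₃, hb⟩ :=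
      key A₁ A₂ A₃ h₁ h₂ h₃ v₁ v₂ v₃ hv₁ hv₂ hv₃ hS hc12 hc13 hc21 hc23 hc31 hc32 t (ε / 4) hδ
        ((GSet A₁ v₁ ((ε / 4) / (1 + max (thickness A₁) (max (thickness A₂) (thickness A₃))))
            (sInf A₁) (sSup A₁)).ncard +
          (GSet A₂ v₂ ((ε / 4) / (1 + max (thickness A₁) (max (thickness A₂) (thickness A₃))))
            (sInf A₂) (sSup A₂)).ncard +
          (GSet A₃ v₃ ((ε / 4) / (1 + max (thickness A₁) (max (thickness A₂) (thickness A₃))))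
            (sInf A₃) (sSup A₃)).ncard)
        (sInf A₁) (sSup A₁) (sInf A₂) (sSup A₂) (sInf A₃) (sSup A₃)
        (sInf_mem_cantor h₁) (sSup_mem_cantor h₁) (sInf_mem_cantor h₂) (sSup_mem_cantor h₂)
        (sInf_mem_cantor h₃) (sSup_mem_cantor h₃)
        (sInf_le_of_mem h₁ (sSup_mem_cantor h₁)) (sInf_le_of_mem h₂ (sSup_mem_cantor h₂))
        (sInf_le_of_mem h₃ (sSup_mem_cantor h₃))
        (Or.inl rfl) (Or.inl rfl) (Or.inl rfl) (Or.inl rfl) (Or.inl rfl) (Or.inl rfl)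
        (Or.inr ⟨rfl, rfl⟩) (Or.inr ⟨rfl, rfl⟩) (Or.inr ⟨rfl, rfl⟩)
        htl htr (le_refl _)
    refine ⟨v₁ * x₁ + v₂ * x₂ + v₃ * x₃, ⟨(x₁, x₂, x₃), ⟨hx₁, hx₂, hx₃⟩, rfl⟩, ?_⟩
    rw [Real.dist_eq, abs_sub_comm]
    calc |v₁ * x₁ + v₂ * x₂ + v₃ * x₃ - t| ≤ 3 * (ε / 4) := hb
      _ < ε := by linarith
  rw [hcomp.isClosed.closure_eq] at hcl
  obtain ⟨⟨x₁, x₂, x₃⟩, ⟨hx₁, hx₂, hx₃⟩, hfx⟩ := hcl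
  exact ⟨x₁, x₂, x₃, hx₁, hx₂, hx₃, hfx⟩

end CantorAux

open CantorAux

/-- Corollary of Astels' theorem: three Cantor sets whose normalized thicknesses sum to at
least 1 and whose convex hulls are all longer than all their largest gaps admit a nonempty
open set `O` of directions on the sphere `S²` such that any plane normal to `v ∈ O` meeting
the product of the convex hulls also meets `A₁ × A₂ × A₃`. -/
theorem slice_of_thick_cantor_sets (A₁ A₂ A₃ : Set ℝ)
    (h₁ : IsCantorSet A₁) (h₂ : IsCantorSet A₂) (h₃ : IsCantorSet A₃)
    (hS : 1 ≤ normThickness A₁ + normThickness A₂ + normThickness A₃)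
    (hgap : max (largestGap A₁) (max (largestGap A₂) (largestGap A₃)) <
      min (sSup A₁ - sInf A₁) (min (sSup A₂ - sInf A₂) (sSup A₃ - sInf A₃))) :
    ∃ O : Set (EuclideanSpace ℝ (Fin 3)), O ⊆ Metric.sphere 0 1 ∧ O.Nonempty ∧
      IsOpen {z : Metric.sphere (0 : EuclideanSpace ℝ (Fin 3)) 1 |
        (z : EuclideanSpace ℝ (Fin 3)) ∈ O} ∧
      ∀ v ∈ O, ∀ a : ℝ,
        (∃ y : EuclideanSpace ℝ (Fin 3),
            y 0 ∈ Set.Icc (sInf A₁) (sSup A₁) ∧ y 1 ∈ Set.Icc (sInf A₂) (sSup A₂) ∧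
            y 2 ∈ Set.Icc (sInf A₃) (sSup A₃) ∧ ⟪y, v⟫ = a) →
        ∃ y : EuclideanSpace ℝ (Fin 3),
          y 0 ∈ A₁ ∧ y 1 ∈ A₂ ∧ y 2 ∈ A₃ ∧ ⟪y, v⟫ = a := by
  set gmax := max (largestGap A₁) (max (largestGap A₂) (largestGap A₃)) with hgm
  set imin := min (sSup A₁ - sInf A₁) (min (sSup A₂ - sInf A₂) (sSup A₃ - sInf A₃)) with him
  have hLG1 : 0 ≤ largestGap A₁ := largestGap_nonneg h₁
  have hLG2 : 0 ≤ largestGap A₂ := largestGap_nonneg h₂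
  have hLG3 : 0 ≤ largestGap A₃ := largestGap_nonneg h₃
  have hgmax0 : 0 ≤ gmax := le_trans hLG1 (le_max_left _ _)
  have himin0 : 0 ≤ imin := le_of_lt (lt_of_le_of_lt hgmax0 hgap)
  set U : Set (EuclideanSpace ℝ (Fin 3)) :=
    {w | 0 < w 0 ∧ 0 < w 1 ∧ 0 < w 2 ∧
      max (w 0) (max (w 1) (w 2)) * gmax < min (w 0) (min (w 1) (w 2)) * imin} with hU
  refine ⟨Metric.sphere 0 1 ∩ U, Set.inter_subset_left, ?_, ?_, ?_⟩
  · -- nonempty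
    set c := (Real.sqrt 3)⁻¹ with hc
    have hcpos : 0 < c := by
      rw [hc]; exact inv_pos.2 (Real.sqrt_pos.2 (by norm_num))
    refine ⟨(WithLp.equiv 2 (Fin 3 → ℝ)).symm (fun _ => c), ?_, ?_⟩
    · rw [mem_sphere_zero_iff_norm, EuclideanSpace.norm_eq]
      simp only [WithLp.equiv_symm_apply, PiLp.toLp_apply, Real.norm_eq_abs, Fin.sum_univ_three]
      rw [abs_of_nonneg hcpos.le]
      rw [show c ^ 2 = ((Real.sqrt 3) ^ 2)⁻¹ by rw [hc]; ring]
      rw [Real.sq_sqrt (by norm_num : (0:ℝ) ≤ 3)]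
      rw [show (3:ℝ)⁻¹ + 3⁻¹ + 3⁻¹ = 1 by norm_num]
      exact Real.sqrt_one
    · simp only [hU, Set.mem_setOf_eq, WithLp.equiv_symm_apply, PiLp.toLp_apply]
      refine ⟨hcpos, hcpos, hcpos, ?_⟩
      rw [max_self, max_self, min_self, min_self]
      exact mul_lt_mul_of_pos_left hgap hcpos
  · -- openness
    have hUopen : IsOpen U := by
      have c0 : Continuous (fun w : EuclideanSpace ℝ (Fin 3) => w 0) :=
        (EuclideanSpace.proj (0 : Fin 3)).continuous
      have c1 : Continuous (fun w : EuclideanSpace ℝ (Fin 3) => w 1) :=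
        (EuclideanSpace.proj (1 : Fin 3)).continuous
      have c2 : Continuous (fun w : EuclideanSpace ℝ (Fin 3) => w 2) :=
        (EuclideanSpace.proj (2 : Fin 3)).continuous
      have h1 : IsOpen {w : EuclideanSpace ℝ (Fin 3) | 0 < w 0} :=
        isOpen_lt continuous_const c0
      have h2 : IsOpen {w : EuclideanSpace ℝ (Fin 3) | 0 < w 1} :=
        isOpen_lt continuous_const c1
      have h3 : IsOpen {w : EuclideanSpace ℝ (Fin 3) | 0 < w 2} :=
        isOpen_lt continuous_const c2
      have h4 : IsOpen {w : EuclideanSpace ℝ (Fin 3) |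
          max (w 0) (max (w 1) (w 2)) * gmax < min (w 0) (min (w 1) (w 2)) * imin} :=
        isOpen_lt (((c0.max (c1.max c2)).mul continuous_const))
          (((c0.min (c1.min c2)).mul continuous_const))
      have : U = {w : EuclideanSpace ℝ (Fin 3) | 0 < w 0} ∩ ({w | 0 < w 1} ∩
          ({w | 0 < w 2} ∩ {w : EuclideanSpace ℝ (Fin 3) |
            max (w 0) (max (w 1) (w 2)) * gmax < min (w 0) (min (w 1) (w 2)) * imin})) := by
        ext w; simp only [hU, Set.mem_setOf_eq, Set.mem_inter_iff]
      rw [this]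
      exact h1.inter (h2.inter (h3.inter h4))
    have hset : {z : Metric.sphere (0 : EuclideanSpace ℝ (Fin 3)) 1 |
        (z : EuclideanSpace ℝ (Fin 3)) ∈ Metric.sphere 0 1 ∩ U} =
        Subtype.val ⁻¹' U := by
      ext z
      simp only [Set.mem_setOf_eq, Set.mem_inter_iff, Set.mem_preimage]
      exact ⟨fun h => h.2, fun h => ⟨z.2, h⟩⟩
    rw [hset]
    exact hUopen.preimage continuous_subtype_val
  · -- main property
    rintro v ⟨hvs, hv0, hv1, hv2, hvkey⟩ a ⟨y, hy1, hy2, hy3, hya⟩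
    have hin : ⟪y, v⟫ = y 0 * v 0 + y 1 * v 1 + y 2 * v 2 := by
      simp [PiLp.inner_apply, RCLike.inner_apply, Fin.sum_univ_three, mul_comm]
    -- t-range
    have hb1l := mul_le_mul_of_nonneg_left hy1.1 hv0.le
    have hb1r := mul_le_mul_of_nonneg_left hy1.2 hv0.le
    have hb2l := mul_le_mul_of_nonneg_left hy2.1 hv1.le
    have hb2r := mul_le_mul_of_nonneg_left hy2.2 hv1.le
    have hb3l := mul_le_mul_of_nonneg_left hy3.1 hv2.le
    have hb3r := mul_le_mul_of_nonneg_left hy3.2 hv2.le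
    have hmax0 : 0 ≤ max (v 0) (max (v 1) (v 2)) := le_trans hv0.le (le_max_left _ _)
    have hmin0 : 0 ≤ min (v 0) (min (v 1) (v 2)) :=
      le_min hv0.le (le_min hv1.le hv2.le)
    -- the six cross inequalities
    have cross : ∀ va vb LG II : ℝ, 0 ≤ LG → LG ≤ gmax → imin ≤ II →
        va ≤ max (v 0) (max (v 1) (v 2)) → min (v 0) (min (v 1) (v 2)) ≤ vb → 0 ≤ vb →
        va * LG < vb * II := by
      intro va vb LG II hLG hLGg hImin hvam hbm hvb
      calc va * LG ≤ max (v 0) (max (v 1) (v 2)) * gmax := mul_le_mul hvam hLGg hLG hmax0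
        _ < min (v 0) (min (v 1) (v 2)) * imin := hvkey
        _ ≤ vb * II := mul_le_mul hbm hImin himin0 hvb
    obtain ⟨x₁, x₂, x₃, hx₁, hx₂, hx₃, hsum⟩ :=
      sum_cover A₁ A₂ A₃ h₁ h₂ h₃ (v 0) (v 1) (v 2) hv0 hv1 hv2 hS
        (cross _ _ _ _ hLG1 (le_max_left _ _) ((min_le_right _ _).trans (min_le_left _ _))
          (le_max_left _ _) ((min_le_right _ _).trans (min_le_left _ _)) hv1.le)
        (cross _ _ _ _ hLG1 (le_max_left _ _) ((min_le_right _ _).trans (min_le_right _ _))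
          (le_max_left _ _) ((min_le_right _ _).trans (min_le_right _ _)) hv2.le)
        (cross _ _ _ _ hLG2 ((le_max_left _ _).trans (le_max_right _ _)) (min_le_left _ _)
          ((le_max_left _ _).trans (le_max_right _ _)) (min_le_left _ _) hv0.le)
        (cross _ _ _ _ hLG2 ((le_max_left _ _).trans (le_max_right _ _))
          ((min_le_right _ _).trans (min_le_right _ _))
          ((le_max_left _ _).trans (le_max_right _ _))
          ((min_le_right _ _).trans (min_le_right _ _)) hv2.le)
        (cross _ _ _ _ hLG3 ((le_max_right _ _).trans (le_max_right _ _)) (min_le_left _ _)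
          ((le_max_right _ _).trans (le_max_right _ _)) (min_le_left _ _) hv0.le)
        (cross _ _ _ _ hLG3 ((le_max_right _ _).trans (le_max_right _ _))
          ((min_le_right _ _).trans (min_le_left _ _))
          ((le_max_right _ _).trans (le_max_right _ _))
          ((min_le_right _ _).trans (min_le_left _ _)) hv1.le)
        a (by rw [hin] at hya; linarith) (by rw [hin] at hya; linarith)
    refine ⟨(WithLp.equiv 2 (Fin 3 → ℝ)).symm ![x₁, x₂, x₃], ?_, ?_, ?_, ?_⟩
    · simpa using hx₁
    · simpa using hx₂
    · simpa using hx₃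
    · have hin2 : ⟪((WithLp.equiv 2 (Fin 3 → ℝ)).symm ![x₁, x₂, x₃] :
          EuclideanSpace ℝ (Fin 3)), v⟫ = x₁ * v 0 + x₂ * v 1 + x₃ * v 2 := by
        simp [PiLp.inner_apply, RCLike.inner_apply, Fin.sum_univ_three, mul_comm]
      rw [hin2]; linarith
end

section
/- Let p and q be distinct odd primes. Let A_p = {x ∈ [1, p] : x admits a base-p expansion all of whose digits are ≤ (p−1)/2} and A_q = {x ∈ [1, q] : x admits a base-q expansion all of whose digits are ≤ (q−1)/2}. Then there exists ε > 0 such that for every real r with |r − 1| < ε there exist x ∈ A_p and y ∈ A_q with y = r·x. -/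
/-- `x` admits a base-`b` expansion `x = Σ_{i=0}^m d_i b^i + Σ_{i=1}^∞ e_i b^{-i}`
with all digits in `B`. -/
def HasRestrictedExpansion (b : ℕ) (B : Set ℕ) (x : ℝ) : Prop :=
  ∃ (m : ℕ) (d e : ℕ → ℕ), (∀ i, d i ∈ B) ∧ (∀ i, e i ∈ B) ∧
    x = (∑ i ∈ Finset.range (m + 1), (d i : ℝ) * (b : ℝ) ^ i) +
        ∑' i : ℕ, (e i : ℝ) / (b : ℝ) ^ (i + 1)

/-- `A_p`: points of `[1, p]` admitting a base-`p` expansion with all digits `≤ (p-1)/2`. -/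
def lowDigitSet (p : ℕ) : Set ℝ :=
  {x ∈ Set.Icc (1 : ℝ) (p : ℝ) | HasRestrictedExpansion p {n : ℕ | 2 * n ≤ p - 1} x}


noncomputable section RatioAux

structure DigState where
  e : ℕ → ℕ
  f : ℕ → ℕ
  m : ℕ
  n : ℕ

def pSum (b : ℕ) (g : ℕ → ℕ) (m : ℕ) : ℝ :=
  ∑ i ∈ Finset.range m, (g i : ℝ) / (b : ℝ) ^ (i + 1)

def Trem (p q : ℕ) (r t : ℝ) (s : DigState) : ℝ :=
  t + r * pSum p s.e s.m - pSum q s.f s.n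

def dstep (p q : ℕ) (r t : ℝ) (s : DigState) : DigState :=
  if (p : ℝ) ^ (s.m + 1) ≤ r * (q : ℝ) ^ (s.n + 1) then
    ⟨Function.update s.e s.m (min ((p - 1) / 2)
      (⌈(-(Trem p q r t s)) * (p : ℝ) ^ (s.m + 1) / r - 1/2⌉.toNat)),
     s.f, s.m + 1, s.n⟩
  else
    ⟨s.e, Function.update s.f s.n (min ((q - 1) / 2)
      (⌈(Trem p q r t s) * (q : ℝ) ^ (s.n + 1) - 1/2⌉.toNat)),
     s.m, s.n + 1⟩

def dstates (p q : ℕ) (r t : ℝ) : ℕ → DigState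
  | 0 => ⟨fun _ => 0, fun _ => 0, 0, 0⟩
  | j + 1 => dstep p q r t (dstates p q r t j)

def DInv (p q : ℕ) (r t : ℝ) (s : DigState) : Prop :=
  (p : ℝ) ^ s.m ≤ r * (q : ℝ) ^ (s.n + 1) ∧
  r * (q : ℝ) ^ s.n ≤ (p : ℝ) ^ (s.m + 1) ∧
  -(r / (2 * (p : ℝ) ^ s.m)) ≤ Trem p q r t s ∧
  Trem p q r t s ≤ 1 / (2 * (q : ℝ) ^ s.n)

lemma pSum_update (b : ℕ) (g : ℕ → ℕ) (m d : ℕ) :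
    pSum b (Function.update g m d) (m + 1) = pSum b g m + (d : ℝ) / (b : ℝ) ^ (m + 1) := by
  unfold pSum
  rw [Finset.sum_range_succ, Function.update_self]
  congr 1
  refine Finset.sum_congr rfl fun i hi => ?_
  rw [Function.update_of_ne (Nat.ne_of_lt (Finset.mem_range.mp hi))]

lemma half_cast {p : ℕ} (hpo : Odd p) : (((p - 1) / 2 : ℕ) : ℝ) = ((p : ℝ) - 1) / 2 := by
  obtain ⟨l, rfl⟩ := hpo
  have h : (2 * l + 1 - 1) / 2 = l := by omega
  rw [h]; push_cast; ring

set_option maxHeartbeats 1000000 in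
lemma dInv_step (p q : ℕ) (r t : ℝ) (hp3 : 3 ≤ p) (hq3 : 3 ≤ q)
    (hpo : Odd p) (hqo : Odd q) (hr0 : 0 < r) (s : DigState)
    (h : DInv p q r t s) : DInv p q r t (dstep p q r t s) := by
  obtain ⟨K1, K2, T1, T2⟩ := h
  have hP1 : (1 : ℝ) < (p : ℝ) := by exact_mod_cast (by omega : 1 < p)
  have hQ1 : (1 : ℝ) < (q : ℝ) := by exact_mod_cast (by omega : 1 < q)
  have hPm : (0 : ℝ) < (p : ℝ) ^ s.m := pow_pos (by linarith) _
  have hQn : (0 : ℝ) < (q : ℝ) ^ s.n := pow_pos (by linarith) _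
  have hu : (0 : ℝ) < (p : ℝ) ^ (s.m + 1) := pow_pos (by linarith) _
  have hv : (0 : ℝ) < (q : ℝ) ^ (s.n + 1) := pow_pos (by linarith) _
  set T := Trem p q r t s with hTdef
  by_cases hc : (p : ℝ) ^ (s.m + 1) ≤ r * (q : ℝ) ^ (s.n + 1)
  · -- p-step
    set u : ℝ := (p : ℝ) ^ (s.m + 1) with hudef
    set x : ℝ := (-T) * u / r - 1/2 with hxdef
    have hxle : x ≤ (((p - 1) / 2 : ℕ) : ℝ) := by
      rw [half_cast hpo]
      have h1 : -T ≤ r / (2 * (p : ℝ) ^ s.m) := by linarith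
      have h2 : (-T) * u / r ≤ (r / (2 * (p : ℝ) ^ s.m)) * u / r := by gcongr
      have h3 : (r / (2 * (p : ℝ) ^ s.m)) * u / r = (p : ℝ) / 2 := by
        rw [hudef, pow_succ]
        field_simp
      rw [hxdef]; rw [h3] at h2; linarith
    have hceil : ⌈x⌉.toNat ≤ (p - 1) / 2 := by
      rw [Int.toNat_le]
      exact Int.ceil_le.mpr (by exact_mod_cast hxle)
    have hmin : min ((p - 1) / 2) ⌈x⌉.toNat = ⌈x⌉.toNat := min_eq_right hceil
    set d : ℕ := ⌈x⌉.toNat with hddef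
    have hdx : x ≤ (d : ℝ) := by
      refine le_trans (Int.le_ceil x) ?_
      exact_mod_cast Int.self_le_toNat ⌈x⌉
    have hstep : dstep p q r t s =
        ⟨Function.update s.e s.m d, s.f, s.m + 1, s.n⟩ := by
      unfold dstep
      rw [if_pos hc, hmin]
    rw [hstep]
    have hT' : Trem p q r t ⟨Function.update s.e s.m d, s.f, s.m + 1, s.n⟩
        = T + r * ((d : ℝ) / u) := by
      show t + r * pSum p (Function.update s.e s.m d) (s.m + 1) - pSum q s.f s.n = _
      rw [pSum_update, hTdef]
      unfold Trem
      ring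
    refine ⟨hc, ?_, ?_, ?_⟩
    · -- r * Q^n ≤ P^(m+2)
      show r * (q : ℝ) ^ s.n ≤ (p : ℝ) ^ (s.m + 1 + 1)
      refine le_trans K2 ?_
      exact pow_le_pow_right₀ (by linarith) (by omega)
    · -- lower bound on new T
      show -(r / (2 * (p : ℝ) ^ (s.m + 1))) ≤ _
      rw [hT']
      have key : -(r / 2) ≤ T * u + r * (d : ℝ) := by
        have h1 : (-T) * u / r ≤ (d : ℝ) + 1/2 := by rw [hxdef] at hdx; linarith
        have h2 : (-T) * u ≤ ((d : ℝ) + 1/2) * r := (div_le_iff₀ hr0).mp h1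
        clear_value d x u T
        nlinarith
      have e1 : T + r * ((d : ℝ) / u) = (T * u + r * d) / u := by
        field_simp
      have e2 : -(r / (2 * u)) = (-(r / 2)) / u := by
        rw [neg_div, div_div]
      rw [e1, e2]
      gcongr
    · -- upper bound on new T
      show _ ≤ 1 / (2 * (q : ℝ) ^ s.n)
      rw [hT']
      by_cases hz : ⌈x⌉ ≤ 0
      · have : d = 0 := by rw [hddef]; omega
        rw [this]
        simpa using T2
      · have hd1 : (d : ℝ) < x + 1 := by
          have : (d : ℤ) = ⌈x⌉ := Int.toNat_of_nonneg (by omega)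
          have h2 : ((d : ℤ) : ℝ) < x + 1 := by rw [this]; exact Int.ceil_lt_add_one x
          exact_mod_cast h2
        have hrx : r * x = (-T) * u - r / 2 := by
          rw [hxdef]
          field_simp
        have key : T * u + r * (d : ℝ) ≤ r / 2 := by
          have h5 := mul_lt_mul_of_pos_left hd1 hr0
          clear_value d x u T
          nlinarith
        have e1 : T + r * ((d : ℝ) / u) = (T * u + r * d) / u := by
          field_simp
        rw [e1]
        have e3 : (T * u + r * d) / u ≤ (r / 2) / u := by gcongr
        refine le_trans e3 ?_
        rw [div_le_div_iff₀ hu (by positivity)]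
        nlinarith
  · -- q-step
    set v : ℝ := (q : ℝ) ^ (s.n + 1) with hvdef
    have hc' : r * v < (p : ℝ) ^ (s.m + 1) := not_le.mp hc
    set x : ℝ := T * v - 1/2 with hxdef
    have hxle : x ≤ (((q - 1) / 2 : ℕ) : ℝ) := by
      rw [half_cast hqo]
      have h2 : T * v ≤ (1 / (2 * (q : ℝ) ^ s.n)) * v := by gcongr
      have h3 : (1 / (2 * (q : ℝ) ^ s.n)) * v = (q : ℝ) / 2 := by
        rw [hvdef, pow_succ]
        field_simp
      rw [hxdef]; rw [h3] at h2; linarith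
    have hceil : ⌈x⌉.toNat ≤ (q - 1) / 2 := by
      rw [Int.toNat_le]
      exact Int.ceil_le.mpr (by exact_mod_cast hxle)
    have hmin : min ((q - 1) / 2) ⌈x⌉.toNat = ⌈x⌉.toNat := min_eq_right hceil
    set d : ℕ := ⌈x⌉.toNat with hddef
    have hdx : x ≤ (d : ℝ) := by
      refine le_trans (Int.le_ceil x) ?_
      exact_mod_cast Int.self_le_toNat ⌈x⌉
    have hstep : dstep p q r t s =
        ⟨s.e, Function.update s.f s.n d, s.m, s.n + 1⟩ := by
      unfold dstep
      rw [if_neg hc, hmin]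
    rw [hstep]
    have hT' : Trem p q r t ⟨s.e, Function.update s.f s.n d, s.m, s.n + 1⟩
        = T - (d : ℝ) / v := by
      show t + r * pSum p s.e s.m - pSum q (Function.update s.f s.n d) (s.n + 1) = _
      rw [pSum_update, hTdef]
      unfold Trem
      ring
    refine ⟨?_, le_of_lt hc', ?_, ?_⟩
    · -- P^m ≤ r * Q^(n+2)
      show (p : ℝ) ^ s.m ≤ r * (q : ℝ) ^ (s.n + 1 + 1)
      refine le_trans K1 ?_
      have : (q : ℝ) ^ (s.n + 1) ≤ (q : ℝ) ^ (s.n + 1 + 1) :=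
        pow_le_pow_right₀ (by linarith) (by omega)
      nlinarith
    · -- lower bound on new T
      show -(r / (2 * (p : ℝ) ^ s.m)) ≤ _
      rw [hT']
      by_cases hz : ⌈x⌉ ≤ 0
      · have : d = 0 := by rw [hddef]; omega
        rw [this]
        simpa using T1
      · have hd1 : (d : ℝ) < x + 1 := by
          have h0 : (d : ℤ) = ⌈x⌉ := Int.toNat_of_nonneg (by omega)
          have h2 : ((d : ℤ) : ℝ) < x + 1 := by rw [h0]; exact Int.ceil_lt_add_one x
          exact_mod_cast h2
        have key : -(1 / 2) ≤ T * v - (d : ℝ) := by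
          rw [hxdef] at hd1
          clear_value d x v T
          nlinarith
        have e1 : T - (d : ℝ) / v = (T * v - d) / v := by field_simp
        rw [e1]
        have e2 : (-(1 / 2)) / v ≤ (T * v - d) / v := by gcongr
        refine le_trans ?_ e2
        rw [neg_div, neg_le_neg_iff, div_le_div_iff₀ hv (by positivity)]
        nlinarith
    · -- upper bound on new T
      show _ ≤ 1 / (2 * (q : ℝ) ^ (s.n + 1))
      rw [hT']
      have key : T * v - (d : ℝ) ≤ 1 / 2 := by
        rw [hxdef] at hdx
        clear_value d x v T
        linarith
      have e1 : T - (d : ℝ) / v = (T * v - d) / v := by field_simp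
      rw [e1]
      have e2 : (T * v - d) / v ≤ (1 / 2) / v := by gcongr
      refine le_trans e2 ?_
      rw [div_le_div_iff₀ hv (by positivity)]
      nlinarith



lemma dstep_shape (p q : ℕ) (r t : ℝ) (s : DigState) :
    (∃ d, d ≤ (p - 1) / 2 ∧ dstep p q r t s = ⟨Function.update s.e s.m d, s.f, s.m + 1, s.n⟩
        ∧ (p : ℝ) ^ (s.m + 1) ≤ r * (q : ℝ) ^ (s.n + 1)) ∨
    (∃ d, d ≤ (q - 1) / 2 ∧ dstep p q r t s = ⟨s.e, Function.update s.f s.n d, s.m, s.n + 1⟩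
        ∧ ¬ (p : ℝ) ^ (s.m + 1) ≤ r * (q : ℝ) ^ (s.n + 1)) := by
  by_cases hc : (p : ℝ) ^ (s.m + 1) ≤ r * (q : ℝ) ^ (s.n + 1)
  · exact Or.inl ⟨_, min_le_left _ _, by unfold dstep; rw [if_pos hc], hc⟩
  · exact Or.inr ⟨_, min_le_left _ _, by unfold dstep; rw [if_neg hc], hc⟩

lemma dstates_mn (p q : ℕ) (r t : ℝ) :
    ∀ j, (dstates p q r t j).m + (dstates p q r t j).n = j := by
  intro j
  induction j with
  | zero => rfl
  | succ j ih =>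
    have hs : dstates p q r t (j + 1) = dstep p q r t (dstates p q r t j) := rfl
    rcases dstep_shape p q r t (dstates p q r t j) with ⟨d, _, he, _⟩ | ⟨d, _, he, _⟩ <;>
      · rw [hs, he]; dsimp only; omega

lemma dstates_m_le_succ (p q : ℕ) (r t : ℝ) (j : ℕ) :
    (dstates p q r t j).m ≤ (dstates p q r t (j + 1)).m ∧
    (dstates p q r t j).n ≤ (dstates p q r t (j + 1)).n := by
  have hs : dstates p q r t (j + 1) = dstep p q r t (dstates p q r t j) := rfl
  rcases dstep_shape p q r t (dstates p q r t j) with ⟨d, _, he, _⟩ | ⟨d, _, he, _⟩ <;>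
    · rw [hs, he]; dsimp only; omega

lemma dstates_m_mono (p q : ℕ) (r t : ℝ) : Monotone (fun j => (dstates p q r t j).m) :=
  monotone_nat_of_le_succ fun j => (dstates_m_le_succ p q r t j).1

lemma dstates_n_mono (p q : ℕ) (r t : ℝ) : Monotone (fun j => (dstates p q r t j).n) :=
  monotone_nat_of_le_succ fun j => (dstates_m_le_succ p q r t j).2

lemma dstates_digit_le (p q : ℕ) (r t : ℝ) :
    ∀ j i, (dstates p q r t j).e i ≤ (p - 1) / 2 ∧ (dstates p q r t j).f i ≤ (q - 1) / 2 := by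
  intro j
  induction j with
  | zero => intro i; exact ⟨Nat.zero_le _, Nat.zero_le _⟩
  | succ j ih =>
    intro i
    have hs : dstates p q r t (j + 1) = dstep p q r t (dstates p q r t j) := rfl
    rcases dstep_shape p q r t (dstates p q r t j) with ⟨d, hd, he, _⟩ | ⟨d, hd, he, _⟩ <;>
        rw [hs, he] <;> dsimp only
    · refine ⟨?_, (ih i).2⟩
      by_cases hi : i = (dstates p q r t j).m
      · rw [hi, Function.update_self]; exact hd
      · rw [Function.update_of_ne hi]; exact (ih i).1
    · refine ⟨(ih i).1, ?_⟩
      by_cases hi : i = (dstates p q r t j).n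
      · rw [hi, Function.update_self]; exact hd
      · rw [Function.update_of_ne hi]; exact (ih i).2

lemma dstates_e_stable (p q : ℕ) (r t : ℝ) {j j' : ℕ} (h : j ≤ j') :
    ∀ i < (dstates p q r t j).m, (dstates p q r t j').e i = (dstates p q r t j).e i := by
  induction j' , h using Nat.le_induction with
  | base => intro i _; rfl
  | succ j' hj ih =>
    intro i hi
    have hi' : i < (dstates p q r t j').m := lt_of_lt_of_le hi (dstates_m_mono p q r t hj)
    rw [← ih i hi]
    have hs : dstates p q r t (j' + 1) = dstep p q r t (dstates p q r t j') := rfl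
    rcases dstep_shape p q r t (dstates p q r t j') with ⟨d, _, he, _⟩ | ⟨d, _, he, _⟩ <;>
        rw [hs, he] <;> dsimp only <;>
      first
        | rfl
        | exact Function.update_of_ne (Nat.ne_of_lt hi') _ _

lemma dstates_f_stable (p q : ℕ) (r t : ℝ) {j j' : ℕ} (h : j ≤ j') :
    ∀ i < (dstates p q r t j).n, (dstates p q r t j').f i = (dstates p q r t j).f i := by
  induction j' , h using Nat.le_induction with
  | base => intro i _; rfl
  | succ j' hj ih =>
    intro i hi
    have hi' : i < (dstates p q r t j').n := lt_of_lt_of_le hi (dstates_n_mono p q r t hj)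
    rw [← ih i hi]
    have hs : dstates p q r t (j' + 1) = dstep p q r t (dstates p q r t j') := rfl
    rcases dstep_shape p q r t (dstates p q r t j') with ⟨d, _, he, _⟩ | ⟨d, _, he, _⟩ <;>
        rw [hs, he] <;> dsimp only <;>
      first
        | rfl
        | exact Function.update_of_ne (Nat.ne_of_lt hi') _ _

lemma dstates_m_unbounded (p q : ℕ) (r t : ℝ) (hp3 : 3 ≤ p) (hq3 : 3 ≤ q) (hr0 : 0 < r) :
    ∀ i, ∃ j, i < (dstates p q r t j).m := by
  have hP1 : (1 : ℝ) < (p : ℝ) := by exact_mod_cast (by omega : 1 < p)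
  have hQ1 : (1 : ℝ) < (q : ℝ) := by exact_mod_cast (by omega : 1 < q)
  intro i
  by_contra hcon
  push_neg at hcon
  have hn : ∀ j, j - i ≤ (dstates p q r t j).n := by
    intro j
    have := dstates_mn p q r t j
    have := hcon j
    omega
  obtain ⟨N, hN⟩ : ∃ N, (p : ℝ) ^ (i + 1) / r < (q : ℝ) ^ N := pow_unbounded_of_one_lt _ hQ1
  have hNr : (p : ℝ) ^ (i + 1) < r * (q : ℝ) ^ N := by
    rw [div_lt_iff₀ hr0] at hN
    linarith [hN]
  have hstep : ∀ j, N + i ≤ j → (dstates p q r t (j + 1)).m = (dstates p q r t j).m + 1 := by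
    intro j hj
    have hs : dstates p q r t (j + 1) = dstep p q r t (dstates p q r t j) := rfl
    rcases dstep_shape p q r t (dstates p q r t j) with ⟨d, _, he, _⟩ | ⟨d, _, he, hcond⟩
    · rw [hs, he]
    · exfalso
      apply hcond
      have h1 : (p : ℝ) ^ ((dstates p q r t j).m + 1) ≤ (p : ℝ) ^ (i + 1) :=
        pow_le_pow_right₀ (le_of_lt hP1) (by have := hcon j; omega)
      have h2 : (q : ℝ) ^ N ≤ (q : ℝ) ^ ((dstates p q r t j).n + 1) :=
        pow_le_pow_right₀ (le_of_lt hQ1) (by have := hn j; omega)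
      nlinarith
  have hgrow : ∀ k, (dstates p q r t (N + i)).m + k ≤ (dstates p q r t (N + i + k)).m := by
    intro k
    induction k with
    | zero => simp
    | succ k ih =>
      have h9 := hstep (N + i + k) (by omega)
      have heq : N + i + (k + 1) = N + i + k + 1 := rfl
      rw [heq]
      omega
  have := hgrow (i + 1)
  have := hcon (N + i + (i + 1))
  omega

lemma dstates_n_unbounded (p q : ℕ) (r t : ℝ) (hp3 : 3 ≤ p) (hq3 : 3 ≤ q) (hr0 : 0 < r) :
    ∀ i, ∃ j, i < (dstates p q r t j).n := by
  have hP1 : (1 : ℝ) < (p : ℝ) := by exact_mod_cast (by omega : 1 < p)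
  have hQ1 : (1 : ℝ) < (q : ℝ) := by exact_mod_cast (by omega : 1 < q)
  intro i
  by_contra hcon
  push_neg at hcon
  have hm : ∀ j, j - i ≤ (dstates p q r t j).m := by
    intro j
    have := dstates_mn p q r t j
    have := hcon j
    omega
  obtain ⟨N, hN⟩ : ∃ N, r * (q : ℝ) ^ (i + 1) < (p : ℝ) ^ N := pow_unbounded_of_one_lt _ hP1
  have hstep : ∀ j, N + i ≤ j → (dstates p q r t (j + 1)).n = (dstates p q r t j).n + 1 := by
    intro j hj
    have hs : dstates p q r t (j + 1) = dstep p q r t (dstates p q r t j) := rfl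
    rcases dstep_shape p q r t (dstates p q r t j) with ⟨d, _, he, hcond⟩ | ⟨d, _, he, _⟩
    · exfalso
      have h1 : (p : ℝ) ^ N ≤ (p : ℝ) ^ ((dstates p q r t j).m + 1) :=
        pow_le_pow_right₀ (le_of_lt hP1) (by have := hm j; omega)
      have h2 : (q : ℝ) ^ ((dstates p q r t j).n + 1) ≤ (q : ℝ) ^ (i + 1) :=
        pow_le_pow_right₀ (le_of_lt hQ1) (by have := hcon j; omega)
      have h3 : r * (q : ℝ) ^ ((dstates p q r t j).n + 1) ≤ r * (q : ℝ) ^ (i + 1) := by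
        nlinarith
      linarith [hcond, h1, h2, h3, hN]
    · rw [hs, he]
  have hgrow : ∀ k, (dstates p q r t (N + i)).n + k ≤ (dstates p q r t (N + i + k)).n := by
    intro k
    induction k with
    | zero => simp
    | succ k ih =>
      have h9 := hstep (N + i + k) (by omega)
      have heq : N + i + (k + 1) = N + i + k + 1 := rfl
      rw [heq]
      omega
  have := hgrow (i + 1)
  have := hcon (N + i + (i + 1))
  omega

lemma summable_digits (b : ℕ) (hb : 3 ≤ b) (g : ℕ → ℕ) (C : ℕ) (hg : ∀ i, g i ≤ C) :
    Summable (fun i => (g i : ℝ) / (b : ℝ) ^ (i + 1)) := by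
  have hb1 : (1 : ℝ) < (b : ℝ) := by exact_mod_cast (by omega : 1 < b)
  have hb0 : (0 : ℝ) < (b : ℝ) := by linarith
  have hgeo : Summable (fun i : ℕ => (1 / (b : ℝ)) ^ i) :=
    summable_geometric_of_lt_one (by positivity) (by rw [div_lt_one hb0]; linarith)
  have h2 := hgeo.mul_left ((C : ℝ) / (b : ℝ))
  have h3 : Summable (fun i : ℕ => (C : ℝ) / (b : ℝ) / (b : ℝ) ^ i) :=
    h2.congr (fun i => by ring)
  refine Summable.of_nonneg_of_le (fun i => by positivity) (fun i => ?_) h3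
  rw [div_div, ← pow_succ']
  gcongr
  exact_mod_cast hg i

lemma dInv_all (p q : ℕ) (r t : ℝ) (hp3 : 3 ≤ p) (hq3 : 3 ≤ q) (hpo : Odd p) (hqo : Odd q)
    (hr1 : 3/4 < r) (hr2 : r < 3/2) (ht1 : -(r/2) ≤ t) (ht2 : t ≤ 1/2) :
    ∀ j, DInv p q r t (dstates p q r t j) := by
  have hP3 : (3 : ℝ) ≤ (p : ℝ) := by exact_mod_cast hp3
  have hQ3 : (3 : ℝ) ≤ (q : ℝ) := by exact_mod_cast hq3
  intro j
  induction j with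
  | zero =>
    have hT0 : Trem p q r t (dstates p q r t 0) = t := by
      show t + r * pSum p _ 0 - pSum q _ 0 = t
      simp [pSum]
    refine ⟨?_, ?_, ?_, ?_⟩
    · show (p : ℝ) ^ 0 ≤ r * (q : ℝ) ^ (0 + 1)
      rw [pow_zero, zero_add, pow_one]
      nlinarith
    · show r * (q : ℝ) ^ 0 ≤ (p : ℝ) ^ (0 + 1)
      rw [pow_zero, zero_add, pow_one]
      linarith
    · show -(r / (2 * (p : ℝ) ^ (0:ℕ))) ≤ Trem p q r t (dstates p q r t 0)
      rw [hT0, pow_zero]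
      rw [mul_one]
      linarith
    · show Trem p q r t (dstates p q r t 0) ≤ 1 / (2 * (q : ℝ) ^ (0:ℕ))
      rw [hT0, pow_zero, mul_one]
      linarith
  | succ j ih =>
    exact dInv_step p q r t hp3 hq3 hpo hqo (by linarith) _ ih

set_option maxHeartbeats 1000000 in
lemma exists_digit_seqs (p q : ℕ) (hp3 : 3 ≤ p) (hq3 : 3 ≤ q) (hpo : Odd p) (hqo : Odd q)
    (r t : ℝ) (hr1 : 3/4 < r) (hr2 : r < 3/2) (ht1 : -(r/2) ≤ t) (ht2 : t ≤ 1/2) :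
    ∃ e f : ℕ → ℕ, (∀ i, e i ≤ (p - 1) / 2) ∧ (∀ i, f i ≤ (q - 1) / 2) ∧
      (∑' i : ℕ, (f i : ℝ) / (q : ℝ) ^ (i + 1)) = t + r * ∑' i : ℕ, (e i : ℝ) / (p : ℝ) ^ (i + 1) := by
  have hr0 : (0 : ℝ) < r := by linarith
  have hP1 : (1 : ℝ) < (p : ℝ) := by exact_mod_cast (by omega : 1 < p)
  have hQ1 : (1 : ℝ) < (q : ℝ) := by exact_mod_cast (by omega : 1 < q)
  have hm := dstates_m_unbounded p q r t hp3 hq3 hr0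
  have hn := dstates_n_unbounded p q r t hp3 hq3 hr0
  set E : ℕ → ℕ := fun i => (dstates p q r t (Nat.find (hm i))).e i with hEdef
  set F : ℕ → ℕ := fun i => (dstates p q r t (Nat.find (hn i))).f i with hFdef
  have hEd : ∀ i, E i ≤ (p - 1) / 2 := fun i => (dstates_digit_le p q r t _ i).1
  have hFd : ∀ i, F i ≤ (q - 1) / 2 := fun i => (dstates_digit_le p q r t _ i).2
  have hEeq : ∀ j, ∀ i < (dstates p q r t j).m, (dstates p q r t j).e i = E i := by
    intro j i hi
    have hfind : i < (dstates p q r t (Nat.find (hm i))).m := Nat.find_spec (hm i)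
    rcases le_total j (Nat.find (hm i)) with h | h
    · exact (dstates_e_stable p q r t h i hi).symm
    · exact dstates_e_stable p q r t h i hfind
  have hFeq : ∀ j, ∀ i < (dstates p q r t j).n, (dstates p q r t j).f i = F i := by
    intro j i hi
    have hfind : i < (dstates p q r t (Nat.find (hn i))).n := Nat.find_spec (hn i)
    rcases le_total j (Nat.find (hn i)) with h | h
    · exact (dstates_f_stable p q r t h i hi).symm
    · exact dstates_f_stable p q r t h i hfind
  have hSE : Summable (fun i => (E i : ℝ) / (p : ℝ) ^ (i + 1)) :=
    summable_digits p hp3 E ((p - 1) / 2) hEd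
  have hSF : Summable (fun i => (F i : ℝ) / (q : ℝ) ^ (i + 1)) :=
    summable_digits q hq3 F ((q - 1) / 2) hFd
  set xa : ℝ := ∑' i : ℕ, (E i : ℝ) / (p : ℝ) ^ (i + 1) with hxadef
  set xc : ℝ := ∑' i : ℕ, (F i : ℝ) / (q : ℝ) ^ (i + 1) with hxcdef
  have hA : ∀ j, pSum p (dstates p q r t j).e (dstates p q r t j).m
      = ∑ i ∈ Finset.range ((dstates p q r t j).m), (E i : ℝ) / (p : ℝ) ^ (i + 1) := by
    intro j
    refine Finset.sum_congr rfl fun i hi => ?_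
    rw [hEeq j i (Finset.mem_range.mp hi)]
  have hC : ∀ j, pSum q (dstates p q r t j).f (dstates p q r t j).n
      = ∑ i ∈ Finset.range ((dstates p q r t j).n), (F i : ℝ) / (q : ℝ) ^ (i + 1) := by
    intro j
    refine Finset.sum_congr rfl fun i hi => ?_
    rw [hFeq j i (Finset.mem_range.mp hi)]
  have mtends : Filter.Tendsto (fun j => (dstates p q r t j).m) Filter.atTop Filter.atTop :=
    Monotone.tendsto_atTop_atTop (dstates_m_mono p q r t)
      (fun b => ⟨Nat.find (hm b), (Nat.find_spec (hm b)).le⟩)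
  have ntends : Filter.Tendsto (fun j => (dstates p q r t j).n) Filter.atTop Filter.atTop :=
    Monotone.tendsto_atTop_atTop (dstates_n_mono p q r t)
      (fun b => ⟨Nat.find (hn b), (Nat.find_spec (hn b)).le⟩)
  have hAt : Filter.Tendsto (fun j => pSum p (dstates p q r t j).e (dstates p q r t j).m)
      Filter.atTop (nhds xa) := by
    have h1 := hSE.hasSum.tendsto_sum_nat
    exact (h1.comp mtends).congr (fun j => (hA j).symm)
  have hCt : Filter.Tendsto (fun j => pSum q (dstates p q r t j).f (dstates p q r t j).n)
      Filter.atTop (nhds xc) := by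
    have h1 := hSF.hasSum.tendsto_sum_nat
    exact (h1.comp ntends).congr (fun j => (hC j).symm)
  have hTt : Filter.Tendsto (fun j => Trem p q r t (dstates p q r t j))
      Filter.atTop (nhds (t + r * xa - xc)) := by
    have := ((hAt.const_mul r).const_add t).sub hCt
    exact this
  have hInv := dInv_all p q r t hp3 hq3 hpo hqo hr1 hr2 ht1 ht2
  have hlow : Filter.Tendsto (fun j => -(r / (2 * (p : ℝ) ^ ((dstates p q r t j).m))))
      Filter.atTop (nhds 0) := by
    have hp : Filter.Tendsto (fun j => (p : ℝ) ^ ((dstates p q r t j).m))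
        Filter.atTop Filter.atTop :=
      (tendsto_pow_atTop_atTop_of_one_lt hP1).comp mtends
    have h2 : Filter.Tendsto (fun j => 2 * (p : ℝ) ^ ((dstates p q r t j).m))
        Filter.atTop Filter.atTop := hp.const_mul_atTop two_pos
    have h3 := Filter.Tendsto.div_atTop (tendsto_const_nhds (x := r)) h2
    simpa using h3.neg
  have hup : Filter.Tendsto (fun j => 1 / (2 * (q : ℝ) ^ ((dstates p q r t j).n)))
      Filter.atTop (nhds 0) := by
    have hq : Filter.Tendsto (fun j => (q : ℝ) ^ ((dstates p q r t j).n))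
        Filter.atTop Filter.atTop :=
      (tendsto_pow_atTop_atTop_of_one_lt hQ1).comp ntends
    have h2 : Filter.Tendsto (fun j => 2 * (q : ℝ) ^ ((dstates p q r t j).n))
        Filter.atTop Filter.atTop := hq.const_mul_atTop two_pos
    exact Filter.Tendsto.div_atTop (tendsto_const_nhds (x := (1:ℝ))) h2
  have hT0 : Filter.Tendsto (fun j => Trem p q r t (dstates p q r t j))
      Filter.atTop (nhds 0) :=
    tendsto_of_tendsto_of_tendsto_of_le_of_le hlow hup
      (fun j => (hInv j).2.2.1) (fun j => (hInv j).2.2.2)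
  have hzero : t + r * xa - xc = 0 := tendsto_nhds_unique hTt hT0
  exact ⟨E, F, hEd, hFd, by linarith⟩

lemma tsum_digits_le_half (b : ℕ) (hb : 3 ≤ b) (hbo : Odd b) (g : ℕ → ℕ)
    (hg : ∀ i, g i ≤ (b - 1) / 2) :
    ∑' i : ℕ, (g i : ℝ) / (b : ℝ) ^ (i + 1) ≤ 1/2 := by
  have hb1 : (1 : ℝ) < (b : ℝ) := by exact_mod_cast (by omega : 1 < b)
  have hb0 : (0 : ℝ) < (b : ℝ) := by linarith
  have hbne : (b : ℝ) ≠ 0 := ne_of_gt hb0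
  have hbs : (b : ℝ) - 1 ≠ 0 := by intro h; nlinarith
  have hK : (((b - 1) / 2 : ℕ) : ℝ) = ((b : ℝ) - 1) / 2 := half_cast hbo
  have hgeo : Summable (fun i : ℕ => (1 / (b : ℝ)) ^ i) :=
    summable_geometric_of_lt_one (by positivity) (by rw [div_lt_one hb0]; linarith)
  have h2 := hgeo.mul_left ((((b - 1) / 2 : ℕ) : ℝ) / (b : ℝ))
  have h3 : Summable (fun i : ℕ => (((b - 1) / 2 : ℕ) : ℝ) / (b : ℝ) / (b : ℝ) ^ i) :=
    h2.congr (fun i => by ring)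
  have hle : ∑' i : ℕ, (g i : ℝ) / (b : ℝ) ^ (i + 1)
      ≤ ∑' i : ℕ, (((b - 1) / 2 : ℕ) : ℝ) / (b : ℝ) / (b : ℝ) ^ i := by
    refine Summable.tsum_le_tsum (fun i => ?_) (summable_digits b hb g ((b - 1) / 2) hg) h3
    rw [div_div, ← pow_succ']
    gcongr
    exact_mod_cast hg i
  refine le_trans hle ?_
  have hval : ∑' i : ℕ, (((b - 1) / 2 : ℕ) : ℝ) / (b : ℝ) / (b : ℝ) ^ i
      = (((b - 1) / 2 : ℕ) : ℝ) / (b : ℝ) * (1 - 1 / (b : ℝ))⁻¹ := by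
    rw [← tsum_geometric_of_lt_one (r := 1 / (b : ℝ)) (by positivity)
      (by rw [div_lt_one hb0]; linarith), ← tsum_mul_left]
    exact tsum_congr (fun i => by ring)
  rw [hval, hK]
  have hinv : (1 - 1 / (b : ℝ))⁻¹ = (b : ℝ) / ((b : ℝ) - 1) := by
    rw [show 1 - 1 / (b : ℝ) = ((b : ℝ) - 1) / (b : ℝ) by field_simp, inv_div]
  rw [hinv]
  rw [show ((b : ℝ) - 1) / 2 / (b : ℝ) * ((b : ℝ) / ((b : ℝ) - 1)) = 1/2 by field_simp]

end RatioAux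


/-- For distinct odd primes `p`, `q`, every ratio `r` close enough to `1` is realized as
`y = r · x` with `x ∈ A_p`, `y ∈ A_q`. -/
theorem ratio_realized_in_lowDigitSets (p q : ℕ) (hp : p.Prime) (hq : q.Prime)
    (hpodd : Odd p) (hqodd : Odd q) (hpq : p ≠ q) :
    ∃ ε : ℝ, 0 < ε ∧ ∀ r : ℝ, |r - 1| < ε →
      ∃ x ∈ lowDigitSet p, ∃ y ∈ lowDigitSet q, y = r * x := by
  have hp2 : p % 2 = 1 := Nat.odd_iff.mp hpodd
  have hq2 : q % 2 = 1 := Nat.odd_iff.mp hqodd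
  have hp3 : 3 ≤ p := by have := hp.two_le; omega
  have hq3 : 3 ≤ q := by have := hq.two_le; omega
  have hP3 : (3 : ℝ) ≤ (p : ℝ) := by exact_mod_cast hp3
  have hQ3 : (3 : ℝ) ≤ (q : ℝ) := by exact_mod_cast hq3
  refine ⟨1/4, by norm_num, fun r hr => ?_⟩
  rw [abs_lt] at hr
  obtain ⟨hr1, hr2⟩ := hr
  obtain ⟨e, f, hEd, hFd, hsum⟩ := exists_digit_seqs p q hp3 hq3 hpodd hqodd r (r - 1)
    (by linarith) (by linarith) (by linarith) (by linarith)
  set xa : ℝ := ∑' i : ℕ, (e i : ℝ) / (p : ℝ) ^ (i + 1) with hxadef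
  set xc : ℝ := ∑' i : ℕ, (f i : ℝ) / (q : ℝ) ^ (i + 1) with hxcdef
  have hxa0 : 0 ≤ xa := tsum_nonneg (fun i => by positivity)
  have hxc0 : 0 ≤ xc := tsum_nonneg (fun i => by positivity)
  have hxa2 : xa ≤ 1/2 := tsum_digits_le_half p hp3 hpodd e hEd
  have hxc2 : xc ≤ 1/2 := tsum_digits_le_half q hq3 hqodd f hFd
  refine ⟨1 + xa, ⟨⟨by linarith, by linarith⟩, ?_⟩, 1 + xc, ⟨⟨by linarith, by linarith⟩, ?_⟩, ?_⟩
  · refine ⟨0, fun i => if i = 0 then 1 else 0, e, fun i => ?_, fun i => ?_, ?_⟩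
    · show 2 * (if i = 0 then 1 else 0) ≤ p - 1
      by_cases h : i = 0 <;> simp [h] <;> omega
    · show 2 * e i ≤ p - 1
      have := hEd i
      omega
    · simp [hxadef]
  · refine ⟨0, fun i => if i = 0 then 1 else 0, f, fun i => ?_, fun i => ?_, ?_⟩
    · show 2 * (if i = 0 then 1 else 0) ≤ q - 1
      by_cases h : i = 0 <;> simp [h] <;> omega
    · show 2 * f i ≤ q - 1
      have := hFd i
      omega
    · simp [hxcdef]
  · have : xc = (r - 1) + r * xa := by linarith [hsum]
    rw [this]
    ring
end
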